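/- arXiv:2605.14895 — 8 statements merged into one kernel-verified Lean document; each statement's English description precedes it below -/
import Mathlib

section
/- Let n be a positive integer and let m be a positive integer divisible by 3. Then there exists a generalized bent function f : (ℤ/3ℤ)^n → ℤ/mℤ. -/
/-- The primitive `m`-th root of unity `exp(2πi/m)` in `ℂ`. -/
noncomputable def zetaC (m : ℕ) : ℂ := Complex.exp (2 * Real.pi * Complex.I / m)

/-- `f : G → ℤ/mℤ` is a generalized bent function if for every character `χ` of `G`,
`|∑ x, ζ_m ^ f(x) · χ(x)|² = |G|`. -/
def IsGBF {G : Type*} [AddCommGroup G] [Fintype G] (m : ℕ) (f : G → ZMod m) : Prop :=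
  ∀ χ : AddChar G ℂ,
    ‖∑ x, zetaC m ^ (f x).val * χ x‖ ^ 2 = (Fintype.card G : ℝ)

open Finset in
lemma zetaC_prim (m : ℕ) (hm : m ≠ 0) : IsPrimitiveRoot (zetaC m) m :=
  Complex.isPrimitiveRoot_exp m hm

lemma zetaC_pow_mod (m : ℕ) (hm : m ≠ 0) (a : ℕ) : zetaC m ^ a = zetaC m ^ (a % m) := by
  conv_lhs => rw [← Nat.div_add_mod a m]
  rw [pow_add, pow_mul, (zetaC_prim m hm).pow_eq_one, one_pow, one_mul]

/-- The additive character `t ↦ ζ₃^t` on `ZMod 3`. -/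
noncomputable def e3 (t : ZMod 3) : ℂ := zetaC 3 ^ t.val

lemma e3_zero : e3 0 = 1 := by simp [e3]

lemma e3_add (s t : ZMod 3) : e3 (s + t) = e3 s * e3 t := by
  rw [e3, e3, e3, ZMod.val_add, ← zetaC_pow_mod 3 (by norm_num), pow_add]

lemma e3_sum {ι : Type*} (s : Finset ι) (h : ι → ZMod 3) :
    e3 (∑ i ∈ s, h i) = ∏ i ∈ s, e3 (h i) := by
  classical
  induction s using Finset.induction_on with
  | empty => simp [e3_zero]
  | @insert a s ha ih => rw [Finset.sum_insert ha, Finset.prod_insert ha, e3_add, ih]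

lemma e3_conj (t : ZMod 3) : (starRingEnd ℂ) (e3 t) = e3 (-t) := by
  have h1 : e3 (-t) * e3 t = 1 := by rw [← e3_add, neg_add_cancel, e3_zero]
  have habs : ‖e3 t‖ = 1 := by
    have h3 : e3 t ^ 3 = 1 := by
      rw [e3, ← pow_mul, mul_comm, pow_mul, (zetaC_prim 3 (by norm_num)).pow_eq_one, one_pow]
    have := congrArg (‖·‖) h3
    rw [norm_pow, norm_one] at this
    nlinarith [norm_nonneg (e3 t), sq_nonneg (‖e3 t‖ - 1),
      sq_nonneg (‖e3 t‖ + 1)]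
  have hinv : (e3 t)⁻¹ = (starRingEnd ℂ) (e3 t) := Complex.inv_eq_conj habs
  rw [← hinv]
  exact (eq_inv_of_mul_eq_one_left h1).symm

lemma e3_sum_univ : ∑ t : ZMod 3, e3 t = 0 := by
  have h := (zetaC_prim 3 (by norm_num)).geom_sum_eq_zero (by norm_num)
  rw [Finset.sum_range_succ, Finset.sum_range_succ, Finset.sum_range_one] at h
  have h0 : ∑ t : ZMod 3, e3 t = e3 0 + e3 1 + e3 2 := by
    show ∑ t : Fin 3, e3 t = _
    exact Fin.sum_univ_three (fun t => e3 t)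
  have hv : e3 0 + e3 1 + e3 2 = zetaC 3 ^ 0 + zetaC 3 ^ 1 + zetaC 3 ^ 2 := by
    rw [e3, e3, e3, (by decide : ((0 : ZMod 3)).val = 0), (by decide : ((1 : ZMod 3)).val = 1),
      (by decide : ((2 : ZMod 3)).val = 2)]
  rw [h0, hv, h]

lemma e3_mul_sum (c : ZMod 3) (hc : c ≠ 0) : ∑ t : ZMod 3, e3 (c * t) = 0 := by
  have : ∑ t : ZMod 3, e3 (c * t) = ∑ t : ZMod 3, e3 t :=
    Fintype.sum_bijective (fun t => c * t)
      (mulLeft_bijective₀ c hc) _ _ (fun t => rfl)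
  rw [this, e3_sum_univ]

theorem gbf_exists_of_three_dvd (n m : ℕ) (hn : 0 < n) (hm : 0 < m) (h3 : 3 ∣ m) :
    ∃ f : (Fin n → ZMod 3) → ZMod m, IsGBF m f := by
  classical
  haveI : NeZero m := ⟨hm.ne'⟩
  set G := Fin n → ZMod 3
  -- the quadratic form
  set Q : G → ZMod 3 := fun x => ∑ i, x i * x i with hQ
  -- zetaC m ^ (m/3) = zetaC 3
  have hmC : (m : ℂ) ≠ 0 := Nat.cast_ne_zero.mpr hm.ne'
  have hzeta : zetaC m ^ (m / 3) = zetaC 3 := by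
    rw [zetaC, zetaC, ← Complex.exp_nat_mul]
    congr 1
    have hcast : ((m / 3 : ℕ) : ℂ) = (m : ℂ) / 3 := by
      rw [Nat.cast_div h3 (by norm_num)]; norm_num
    rw [hcast]
    field_simp
    ring
  -- the function
  refine ⟨fun x => ((m / 3) * (Q x).val : ℕ), ?_⟩
  have hg : ∀ x : G, zetaC m ^ ((((m / 3) * (Q x).val : ℕ) : ZMod m)).val = e3 (Q x) := by
    intro x
    rw [ZMod.val_natCast, ← zetaC_pow_mod m hm.ne', pow_mul, hzeta]
    rfl
  intro χ
  -- autocorrelation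
  have hC : ∀ a : G, (∑ y : G, e3 (Q (y + a)) * (starRingEnd ℂ) (e3 (Q y)))
      = if a = 0 then ((3 : ℂ) ^ n) else 0 := by
    intro a
    have key : ∀ y : G, e3 (Q (y + a)) * (starRingEnd ℂ) (e3 (Q y))
        = e3 (Q a) * ∏ i, e3 (2 * a i * y i) := by
      intro y
      rw [e3_conj, ← e3_add]
      have harith : Q (y + a) + -Q y = Q a + ∑ i, 2 * a i * y i := by
        simp only [hQ, Pi.add_apply, ← Finset.sum_add_distrib, ← Finset.sum_neg_distrib]
        apply Finset.sum_congr rfl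
        intro i _
        have hyai : (y + a) i = y i + a i := rfl
        rw [hyai]
        ring
      rw [harith, e3_add]
      congr 1
      exact e3_sum _ _
    rw [Finset.sum_congr rfl (fun y _ => key y), ← Finset.mul_sum]
    have hswap : (∑ y : G, ∏ i, e3 (2 * a i * y i))
        = ∏ i, ∑ t : ZMod 3, e3 (2 * a i * t) := by
      rw [Finset.prod_univ_sum, Fintype.piFinset_univ]
    rw [hswap]
    by_cases ha : a = 0
    · subst ha
      have hz : ∀ (i : Fin n) (t : ZMod 3), (2 : ZMod 3) * (0 : G) i * t = 0 := by
        intro i t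
        show (2 : ZMod 3) * 0 * t = 0
        ring
      have hz2 : (∑ i, (0 : G) i * (0 : G) i) = (0 : ZMod 3) := by
        simp [show ∀ i : Fin n, (0 : G) i = 0 from fun _ => rfl]
      simp only [hz, hz2, e3_zero, one_mul, Finset.sum_const, Finset.card_univ, ZMod.card,
        nsmul_eq_mul, Nat.cast_ofNat, mul_one, Finset.prod_const]
      rw [show Q (0 : G) = 0 from hz2, e3_zero, one_mul]
      simp [Fintype.card_fin]
    · have : ∃ i, a i ≠ 0 := by
        by_contra h
        push_neg at h
        exact ha (funext h)
      obtain ⟨i, hi⟩ := this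
      have h2 : (2 : ZMod 3) * a i ≠ 0 := mul_ne_zero (by decide) hi
      rw [Finset.prod_eq_zero (Finset.mem_univ i) (e3_mul_sum _ h2)]
      simp [ha]
  -- now the main computation
  set S : ℂ := ∑ x : G, e3 (Q x) * χ x with hS
  have hgoal : S * (starRingEnd ℂ) S = (3 : ℂ) ^ n := by
    rw [hS, map_sum]
    simp_rw [map_mul]
    rw [Finset.sum_mul_sum]
    have step1 : ∀ y : G, (∑ x : G, e3 (Q x) * χ x * ((starRingEnd ℂ) (e3 (Q y)) * (starRingEnd ℂ) (χ y)))
        = ∑ a : G, e3 (Q (y + a)) * (starRingEnd ℂ) (e3 (Q y)) * χ a := by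
      intro y
      rw [← Equiv.sum_comp (Equiv.addLeft y)]
      apply Finset.sum_congr rfl
      intro a _
      have hchi : χ (y + a) * (starRingEnd ℂ) (χ y) = χ a := by
        rw [← AddChar.map_neg_eq_conj, ← AddChar.map_add_eq_mul]
        congr 1
        abel
      simp only [Equiv.coe_addLeft]
      calc e3 (Q (y + a)) * χ (y + a) * ((starRingEnd ℂ) (e3 (Q y)) * (starRingEnd ℂ) (χ y))
          = e3 (Q (y + a)) * (starRingEnd ℂ) (e3 (Q y)) * (χ (y + a) * (starRingEnd ℂ) (χ y)) := by ring
        _ = _ := by rw [hchi]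
    rw [Finset.sum_comm]
    rw [Finset.sum_congr rfl (fun y _ => step1 y)]
    rw [Finset.sum_comm]
    have : ∀ a : G, (∑ y : G, e3 (Q (y + a)) * (starRingEnd ℂ) (e3 (Q y)) * χ a)
        = (if a = 0 then (3 : ℂ) ^ n else 0) * χ a := by
      intro a
      rw [← Finset.sum_mul, hC a]
    rw [Finset.sum_congr rfl (fun a _ => this a)]
    simp [Finset.sum_ite_eq', Finset.sum_ite_eq, ite_mul]
    rw [Finset.sum_eq_single (0 : G) (by intro b _ hb; simp [hb]) (by simp)]
    simp
  -- finish
  simp only [hg]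
  rw [← hS, Complex.sq_norm]
  have : ((Complex.normSq S : ℝ) : ℂ) = ((3 : ℝ) ^ n : ℂ) := by
    rw [← Complex.mul_conj, hgoal]
    norm_num
  have h2 : (Complex.normSq S : ℝ) = (3 : ℝ) ^ n := by
    exact_mod_cast this
  rw [h2]
  simp [Fintype.card_fun]
end

section
/- Let p ≥ 5 be a prime and let n and k be positive integers. Then there does not exist a generalized bent function f : (ℤ/3ℤ)^n → ℤ/p^kℤ. -/
lemma zetaC_pow_self (m : ℕ) (hm : m ≠ 0) : zetaC m ^ m = 1 := by
  rw [zetaC, ← Complex.exp_nat_mul]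
  have : (m : ℂ) ≠ 0 := Nat.cast_ne_zero.mpr hm
  rw [mul_div_cancel₀ _ this, Complex.exp_two_pi_mul_I]

lemma zetaC_three_ne_one : zetaC 3 ≠ 1 := by
  rw [zetaC, Ne, Complex.exp_eq_one_iff]
  push_neg
  intro j h
  have hne : 2 * (Real.pi : ℂ) * Complex.I ≠ 0 := by
    have hπ : (Real.pi : ℂ) ≠ 0 := Complex.ofReal_ne_zero.mpr Real.pi_ne_zero
    exact mul_ne_zero (mul_ne_zero two_ne_zero hπ) Complex.I_ne_zero
  have h1 : (2 * (Real.pi:ℂ) * Complex.I) * 1 = (2 * (Real.pi:ℂ) * Complex.I) * ((j:ℂ) * 3) := by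
    field_simp at h
    linear_combination (2 * (Real.pi:ℂ) * Complex.I) * h
  have h2 : (1 : ℂ) = (j:ℂ) * 3 := mul_left_cancel₀ hne h1
  have h3 : (1 : ℤ) = j * 3 := by exact_mod_cast h2
  omega

/-- Abstract key lemma: in a commutative ring `A` where `p` is not a unit, there is no
element `z` of `p`-power order such that a "character-like" combination multiplies with
something to give `3 ^ n`. -/
lemma key_aux (p : ℕ) (hp : Nat.Prime p) (hp5 : 5 ≤ p) (n k : ℕ) (hn : 0 < n)
    {A : Type*} [CommRing A] (hnp : ¬ IsUnit ((p : ℕ) : A))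
    (z : A) (hz : z ^ p ^ k = 1) {ι : Type*} [Fintype ι] (c : ι → A) (a : ι → ℕ)
    (hc : ∑ x, c x = 0) (T : A) (hT : (∑ x, z ^ a x * c x) * T = 3 ^ n) : False := by
  have hN0 : p ^ k ≠ 0 := pow_ne_zero _ hp.pos.ne'
  have hspan : Ideal.span {((p : ℕ) : A)} ≠ ⊤ := by
    rw [Ne, Ideal.span_singleton_eq_top]; exact hnp
  obtain ⟨𝔪, hmax, hle⟩ := Ideal.exists_le_maximal _ hspan
  haveI := hmax
  haveI : 𝔪.IsPrime := hmax.isPrime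
  set q : A →+* A ⧸ 𝔪 := Ideal.Quotient.mk 𝔪 with hqdef
  have hpmem : ((p : ℕ) : A) ∈ 𝔪 := hle (Ideal.subset_span rfl)
  have hp0 : ((p : ℕ) : A ⧸ 𝔪) = 0 := by
    rw [← map_natCast q]
    exact Ideal.Quotient.eq_zero_iff_mem.mpr hpmem
  have hchar : ringChar (A ⧸ 𝔪) = p := by
    have hdvd : ringChar (A ⧸ 𝔪) ∣ p := ringChar.dvd hp0
    rcases hp.eq_one_or_self_of_dvd _ hdvd with h | h
    · exact absurd h CharP.ringChar_ne_one
    · exact h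
  haveI : CharP (A ⧸ 𝔪) p := by
    have := ringChar.charP (A ⧸ 𝔪)
    rwa [hchar] at this
  haveI : Fact p.Prime := ⟨hp⟩
  have hz1 : q z = 1 := by
    have h1 : (q z - 1) ^ p ^ k = 0 := by
      rw [sub_pow_char_pow, ← map_pow, hz, map_one, one_pow, sub_self]
    have h2 := pow_eq_zero_iff hN0 |>.mp h1
    exact sub_eq_zero.mp h2
  have hqS : q (∑ x, z ^ a x * c x) = 0 := by
    rw [map_sum]
    have h1 : ∀ x ∈ Finset.univ, q (z ^ a x * c x) = q (c x) := fun x _ => by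
      rw [map_mul, map_pow, hz1, one_pow, one_mul]
    rw [Finset.sum_congr rfl h1, ← map_sum, hc, map_zero]
  have h3n : ((3 : A ⧸ 𝔪)) ^ n = 0 := by
    have := congrArg q hT
    rw [map_mul, hqS, zero_mul, map_pow, map_ofNat] at this
    exact this.symm
  have h30 : (3 : A ⧸ 𝔪) = 0 := pow_eq_zero_iff hn.ne' |>.mp h3n
  have hpd3 : p ∣ 3 := by
    have h3 : ((3 : ℕ) : A ⧸ 𝔪) = 0 := by exact_mod_cast h30
    exact (CharP.cast_eq_zero_iff (A ⧸ 𝔪) p 3).mp h3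
  have := Nat.le_of_dvd (by norm_num) hpd3
  omega

set_option maxHeartbeats 1000000 in
theorem no_gbf_prime_power_modulus (p : ℕ) (hp : Nat.Prime p) (hp5 : 5 ≤ p)
    (n k : ℕ) (hn : 0 < n) (hk : 0 < k) :
    ¬ ∃ f : (Fin n → ZMod 3) → ZMod (p ^ k), IsGBF (p ^ k) f := by
  rintro ⟨f, hgbf⟩
  have hN0 : p ^ k ≠ 0 := pow_ne_zero _ hp.pos.ne'
  set ζ : ℂ := zetaC (p ^ k) with hζdef
  set ω : ℂ := zetaC 3 with hωdef
  have hζN : ζ ^ (p ^ k) = 1 := zetaC_pow_self _ hN0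
  have hω3 : ω ^ 3 = 1 := zetaC_pow_self 3 (by norm_num)
  have hω1 : ω ≠ 1 := zetaC_three_ne_one
  -- the character
  let i0 : Fin n := ⟨0, hn⟩
  let e : AddChar (ZMod 3) ℂ := AddChar.zmodChar 3 hω3
  let χ : AddChar (Fin n → ZMod 3) ℂ :=
    e.compAddMonoidHom (Pi.evalAddMonoidHom (fun _ => ZMod 3) i0)
  have hχapp : ∀ x : Fin n → ZMod 3, χ x = ω ^ (x i0).val := fun x =>
    AddChar.zmodChar_apply hω3 (x i0)
  have hχne : χ ≠ 1 := by
    rw [AddChar.ne_one_iff]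
    refine ⟨Pi.single i0 1, ?_⟩
    rw [hχapp]
    simpa [ZMod.val_one] using hω1
  have hχsum : ∑ x, χ x = 0 := AddChar.sum_eq_zero_of_ne_one hχne
  -- the exponential sum
  set S : ℂ := ∑ x, ζ ^ (f x).val * χ x with hSdef
  have hcard : (Fintype.card (Fin n → ZMod 3)) = 3 ^ n := by simp
  have hSS : S * (starRingEnd ℂ) S = (3 : ℂ) ^ n := by
    have h1 := hgbf χ
    rw [hcard] at h1
    rw [Complex.mul_conj, ← Complex.sq_norm, hSdef, hζdef, h1]
    push_cast
    ring
  -- the ring of algebraic integers we work in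
  set s : Set ℂ := {ζ, ω, (starRingEnd ℂ) ζ, (starRingEnd ℂ) ω} with hsdef
  have hints : ∀ z ∈ s, IsIntegral ℤ z := by
    intro z hz
    have : z ^ (p ^ k) = 1 ∨ z ^ 3 = 1 := by
      rcases hz with h | h | h | h
      · exact Or.inl (h ▸ hζN)
      · exact Or.inr (h ▸ hω3)
      · refine Or.inl ?_
        rw [h, ← map_pow, hζN, map_one]
      · refine Or.inr ?_
        rw [h, ← map_pow, hω3, map_one]
    rcases this with h | h
    · exact ⟨Polynomial.X ^ (p ^ k) - 1, Polynomial.monic_X_pow_sub_C 1 hN0, by simp [h]⟩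
    · exact ⟨Polynomial.X ^ 3 - 1, Polynomial.monic_X_pow_sub_C 1 (by norm_num), by simp [h]⟩
  set R : Subalgebra ℤ ℂ := Algebra.adjoin ℤ s with hRdef
  have hζR : ζ ∈ R := Algebra.subset_adjoin (by simp [hsdef])
  have hωR : ω ∈ R := Algebra.subset_adjoin (by simp [hsdef])
  have hζcR : (starRingEnd ℂ) ζ ∈ R := Algebra.subset_adjoin (by simp [hsdef])
  have hωcR : (starRingEnd ℂ) ω ∈ R := Algebra.subset_adjoin (by simp [hsdef])
  have hχR : ∀ x, χ x ∈ R := fun x => by rw [hχapp]; exact pow_mem hωR _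
  have hSR : S ∈ R := Subalgebra.sum_mem _ fun x _ => mul_mem (pow_mem hζR _) (hχR x)
  have hScR : (starRingEnd ℂ) S ∈ R := by
    rw [hSdef, map_sum]
    refine Subalgebra.sum_mem _ fun x _ => ?_
    rw [map_mul, map_pow, hχapp, map_pow]
    exact mul_mem (pow_mem hζcR _) (pow_mem hωcR _)
  -- elements of R
  set zR : R := ⟨ζ, hζR⟩ with hzRdef
  set SR : R := ⟨S, hSR⟩ with hSRdef
  set ScR : R := ⟨(starRingEnd ℂ) S, hScR⟩ with hScRdef
  have hmulR : SR * ScR = (3 : R) ^ n := by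
    apply Subtype.ext
    push_cast
    exact hSS
  have hzRN : zR ^ (p ^ k) = 1 := by
    apply Subtype.ext
    push_cast
    exact hζN
  have hSReq : SR = ∑ x, zR ^ (f x).val * (⟨χ x, hχR x⟩ : R) := by
    apply Subtype.ext
    push_cast
    rfl
  have hsumR : (∑ x, (⟨χ x, hχR x⟩ : R)) = 0 := by
    apply Subtype.ext
    push_cast
    exact hχsum
  -- p is not a unit in R
  have hpu : ¬ IsUnit ((p : ℕ) : R) := by
    intro h
    obtain ⟨r, hr⟩ := isUnit_iff_exists_inv.mp h
    have hrint : IsIntegral ℤ (r : ℂ) :=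
      IsIntegral.of_mem_of_fg R (fg_adjoin_of_finite (Set.toFinite s) hints) _ r.2
    have hrval : (r : ℂ) = (((p : ℚ)⁻¹ : ℚ) : ℂ) := by
      have hc : ((p:ℕ) : ℂ) * (r : ℂ) = 1 := by
        have := congrArg (Subtype.val) hr
        push_cast at this ⊢
        exact this
      have hpne : ((p:ℕ) : ℂ) ≠ 0 := Nat.cast_ne_zero.mpr hp.pos.ne'
      field_simp
      push_cast
      field_simp
      linear_combination hc
    rw [hrval] at hrint
    have hint2 : IsIntegral ℤ ((p : ℚ)⁻¹) := by
      have h2 : IsIntegral ℤ (algebraMap ℚ ℂ ((p:ℚ)⁻¹)) := by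
        rw [eq_ratCast]; exact hrint
      exact (isIntegral_algebraMap_iff (algebraMap ℚ ℂ).injective).mp h2
    obtain ⟨y, hy⟩ := IsIntegrallyClosed.isIntegral_iff.mp hint2
    have hpq : ((p:ℚ)) ≠ 0 := Nat.cast_ne_zero.mpr hp.pos.ne'
    have hyp : (y : ℚ) * p = 1 := by
      rw [show ((y:ℤ):ℚ) = (p:ℚ)⁻¹ from hy]
      field_simp
    have hz : y * (p : ℤ) = 1 := by exact_mod_cast hyp
    have hd : (p : ℤ) ∣ 1 := Dvd.intro_left y hz
    have := Int.le_of_dvd one_pos hd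
    omega
  exact key_aux p hp hp5 n k hn hpu zR hzRN _ _ hsumR ScR (by rw [← hSReq]; exact hmulR)
end

section
/- Let m be a positive odd integer not divisible by 3, and let n be 1 or 2. Then there does not exist a generalized bent function f : (ℤ/3ℤ)^n → ℤ/mℤ. -/
open Polynomial IntermediateField Module

lemma zetaC_prim_s7 (M : ℕ) (hM : M ≠ 0) : IsPrimitiveRoot (zetaC M) M := by
  simpa [zetaC] using Complex.isPrimitiveRoot_exp M hM

lemma zetaC_pow_one (M : ℕ) (hM : M ≠ 0) : zetaC M ^ M = 1 := (zetaC_prim_s7 M hM).pow_eq_one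

lemma zetaC_pow_eq (M q m2 : ℕ) (hM : M = q * m2) (hq : q ≠ 0) (hm2 : m2 ≠ 0) :
    zetaC M ^ q = zetaC m2 := by
  rw [zetaC, zetaC, ← Complex.exp_nat_mul]
  congr 1
  have hMc : (M : ℂ) = (q : ℂ) * m2 := by exact_mod_cast congrArg (Nat.cast : ℕ → ℂ) hM
  have hq' : (q : ℂ) ≠ 0 := Nat.cast_ne_zero.2 hq
  have hm2' : (m2 : ℂ) ≠ 0 := Nat.cast_ne_zero.2 hm2
  field_simp [hMc]
  linear_combination -hMc

noncomputable def rterm (M : ℕ) (c : ZMod M) : ℂ := zetaC M ^ c.val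
section PowHelpers
variable {x : ℂ} {N : ℕ}

lemma pow_mod_eq (hx : x ^ N = 1) (k : ℕ) : x ^ (k % N) = x ^ k := by
  conv_rhs => rw [← Nat.div_add_mod k N]
  rw [pow_add, pow_mul, hx, one_pow, one_mul]

lemma pow_val_natCast (hN : N ≠ 0) (hx : x ^ N = 1) (k : ℕ) :
    x ^ ((k : ZMod N)).val = x ^ k := by
  haveI : NeZero N := ⟨hN⟩
  rw [ZMod.val_natCast, pow_mod_eq hx]

lemma pow_val_add (hN : N ≠ 0) (hx : x ^ N = 1) (u v : ZMod N) :
    x ^ (u + v).val = x ^ u.val * x ^ v.val := by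
  haveI : NeZero N := ⟨hN⟩
  rw [← pow_add, ← pow_val_natCast hN hx (u.val + v.val)]
  congr 2
  push_cast [ZMod.natCast_val, ZMod.cast_id]
  rfl

lemma root_ne_zero (hN : N ≠ 0) (hx : x ^ N = 1) : x ≠ 0 := by
  intro h; rw [h, zero_pow hN] at hx; exact zero_ne_one hx

lemma zpow_val_intCast (hN : N ≠ 0) (hx : x ^ N = 1) (s : ℤ) :
    x ^ (((s : ZMod N)).val : ℤ) = x ^ s := by
  haveI : NeZero N := ⟨hN⟩
  have hx0 : x ≠ 0 := root_ne_zero hN hx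
  have hv : (((s : ZMod N)).val : ℤ) = s % N := ZMod.val_intCast s
  rw [hv]
  conv_rhs => rw [← Int.mul_ediv_add_emod s (N : ℤ)]
  rw [zpow_add₀ hx0, zpow_mul, zpow_natCast, hx, one_zpow, one_mul]

lemma zpow_congr_mod (hN : N ≠ 0) (hx : x ^ N = 1) (s t : ℤ) (h : (N:ℤ) ∣ s - t) :
    x ^ s = x ^ t := by
  have hx0 : x ≠ 0 := root_ne_zero hN hx
  obtain ⟨k, hk⟩ := h
  have : s = t + N * k := by linarith
  rw [this, zpow_add₀ hx0, zpow_mul, zpow_natCast, hx, one_zpow, mul_one]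

end PowHelpers

section Fiber
variable {α : Type*} {q : ℕ}

lemma fiber_sum (E : Multiset α) (sl : α → Fin q) (g : α → ℂ) :
    ∑ i : Fin q, ((E.filter (fun c => sl c = i)).map g).sum = (E.map g).sum := by
  induction E using Multiset.induction_on with
  | empty => simp
  | cons a E ih =>
    simp only [Multiset.filter_cons, Multiset.map_add, Multiset.sum_add, Multiset.map_cons,
      Multiset.sum_cons, Finset.sum_add_distrib, ih]
    congr 1
    rw [Finset.sum_eq_single (sl a)]
    · simp
    · intro b _ hb; rw [if_neg (fun h => hb h.symm)]; simp
    · intro h; exact absurd (Finset.mem_univ _) h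

lemma fiber_card (E : Multiset α) (sl : α → Fin q) :
    ∑ i : Fin q, ((E.filter (fun c => sl c = i))).card = E.card := by
  induction E using Multiset.induction_on with
  | empty => simp
  | cons a E ih =>
    simp only [Multiset.filter_cons, Multiset.card_add, Multiset.card_cons,
      Finset.sum_add_distrib, ih]
    rw [Finset.sum_eq_single (sl a)]
    · simp [add_comm]
    · intro b _ hb; rw [if_neg (fun h => hb h.symm)]; simp
    · intro h; exact absurd (Finset.mem_univ _) h

end Fiber
lemma int_of_pow_eq_one (F : Type*) [Field F] [Algebra F ℂ] (x : ℂ) (N : ℕ) (hN : N ≠ 0)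
    (h : x ^ N = 1) : IsIntegral F x := by
  refine ⟨X ^ N - 1, monic_X_pow_sub_C 1 hN, ?_⟩
  simp [eval₂_sub, eval₂_pow, h]

lemma finrank_adjoin_zeta (N : ℕ) (hN : N ≠ 0) :
    finrank ℚ ℚ⟮zetaC N⟯ = Nat.totient N := by
  have hint : IsIntegral ℚ (zetaC N) :=
    int_of_pow_eq_one ℚ _ N hN ((zetaC_prim_s7 N hN).pow_eq_one)
  rw [adjoin.finrank hint, ← cyclotomic_eq_minpoly_rat (zetaC_prim_s7 N hN) (Nat.pos_of_ne_zero hN),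
    natDegree_cyclotomic]

lemma tower_main (M q m2 : ℕ) (hM : M = q * m2) (hq : q ≠ 0) (hm2 : m2 ≠ 0) (θ : ℂ)
    (hθZ : θ ∈ ℚ⟮zetaC M⟯) (hηZ : zetaC m2 ∈ ℚ⟮zetaC M⟯)
    (hζmem : zetaC M ∈ (ℚ⟮zetaC m2⟯⟮θ⟯ : IntermediateField ℚ⟮zetaC m2⟯ ℂ))
    (hθN : ∃ N : ℕ, N ≠ 0 ∧ θ ^ N = 1) :
    Nat.totient m2 * (minpoly ℚ⟮zetaC m2⟯ θ).natDegree = Nat.totient M := by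
  have hM0 : M ≠ 0 := by simp [hM, hq, hm2]
  set K : IntermediateField ℚ ℂ := ℚ⟮zetaC m2⟯ with hK
  obtain ⟨N, hN0, hθpow⟩ := hθN
  have hintθ : IsIntegral K θ := int_of_pow_eq_one K θ N hN0 hθpow
  have h3 : IntermediateField.restrictScalars ℚ (K⟮θ⟯) = ℚ⟮zetaC M⟯ := by
    erw [restrictScalars_adjoin]
    apply le_antisymm
    · rw [adjoin_le_iff]
      rintro x (hx | hx)
      · have : K ≤ ℚ⟮zetaC M⟯ := by
          rw [hK, adjoin_simple_le_iff]; exact hηZ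
        exact this hx
      · rw [Set.mem_singleton_iff] at hx; subst hx; exact hθZ
    · rw [adjoin_simple_le_iff]
      have : zetaC M ∈ IntermediateField.restrictScalars ℚ (K⟮θ⟯) := (mem_restrictScalars ℚ).2 hζmem
      erw [restrictScalars_adjoin] at this; exact this
  have h4 : finrank ℚ K * finrank K (K⟮θ⟯) = finrank ℚ ℚ⟮zetaC M⟯ := by
    rw [← h3]
    haveI : FiniteDimensional K (K⟮θ⟯) := adjoin.finiteDimensional hintθ
    exact Module.finrank_mul_finrank ℚ K (K⟮θ⟯)
  rw [finrank_adjoin_zeta M hM0] at h4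
  rw [finrank_adjoin_zeta m2 hm2, adjoin.finrank hintθ] at h4
  exact h4
lemma coeffs_zero (K : IntermediateField ℚ ℂ) (θ : ℂ) (hint : IsIntegral K θ)
    (D : ℕ) (hD : D ≤ (minpoly K θ).natDegree) (g : ℕ → K)
    (h : ∑ i ∈ Finset.range D, (algebraMap K ℂ (g i)) * θ ^ i = 0) : ∀ i < D, g i = 0 := by
  by_contra hcon
  push_neg at hcon
  obtain ⟨i0, hi0D, hi0⟩ := hcon
  set p : Polynomial K := ∑ i ∈ Finset.range D, C (g i) * X ^ i with hp
  have hpne : p ≠ 0 := by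
    intro h0
    apply hi0
    have := congrArg (fun r => coeff r i0) h0
    simp only [hp, finset_sum_coeff, coeff_C_mul, coeff_X_pow, coeff_zero] at this
    rwa [Finset.sum_eq_single i0 (by intro b _ hb; simp [Ne.symm hb])
      (by intro hb; exact absurd (Finset.mem_range.2 hi0D) hb), if_pos rfl, mul_one] at this
  have hpev : aeval θ p = 0 := by
    rw [hp]
    simp only [map_sum, map_mul, aeval_C, aeval_X_pow]
    exact h
  have hdeg := minpoly.degree_le_of_ne_zero K θ hpne hpev
  have h1 : p.natDegree < D := by
    have : p.natDegree ≤ D - 1 := by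
      apply natDegree_sum_le_of_forall_le
      intro i hi
      calc (C (g i) * X ^ i).natDegree ≤ i := natDegree_C_mul_X_pow_le _ _
        _ ≤ D - 1 := Nat.le_sub_one_of_lt (Finset.mem_range.1 hi)
    have hD0 : 0 < D := Nat.pos_of_ne_zero (by rintro rfl; exact absurd hi0D (Nat.not_lt_zero _))
    omega
  have h2 : (minpoly K θ).natDegree ≤ p.natDegree := natDegree_le_natDegree hdeg
  omega
lemma decomp (M q m2 : ℕ) (hM : M = q * m2) (hq : q.Prime) (hm2 : m2 ≠ 0)
    (E : Multiset (ZMod M)) (s : ℚ) (hsum : (E.map (rterm M)).sum = (s : ℂ)) :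
    ∃ F : Fin q → Multiset (ZMod m2),
      (∑ i, (F i).card) = E.card ∧
      ∃ β : ℂ, (∀ i : Fin q, (i : ℕ) ≠ 0 → ((F i).map (rterm m2)).sum = β) ∧
        ((F (⟨0, hq.pos⟩ : Fin q)).map (rterm m2)).sum = (s : ℂ) + β := by
  have hq0 : q ≠ 0 := hq.pos.ne'
  have hM0 : M ≠ 0 := by simp [hM, hq0, hm2]
  haveI : NeZero M := ⟨hM0⟩
  haveI : NeZero m2 := ⟨hm2⟩
  haveI : Fact q.Prime := ⟨hq⟩
  haveI : NeZero q := ⟨hq0⟩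
  set ζ := zetaC M with hζdef
  have hζ1 : ζ ^ M = 1 := zetaC_pow_one M hM0
  set η := zetaC m2 with hηdef
  have hη : ζ ^ q = η := zetaC_pow_eq M q m2 hM hq0 hm2
  have hη1 : η ^ m2 = 1 := zetaC_pow_one m2 hm2
  set K : IntermediateField ℚ ℂ := ℚ⟮η⟯ with hKdef
  have hηK : η ∈ K := mem_adjoin_simple_self ℚ η
  -- the element η inside K
  set gen : K := ⟨η, hηK⟩ with hgendef
  have hgen : algebraMap K ℂ gen = η := rfl
  have hηZ : η ∈ ℚ⟮ζ⟯ := by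
    rw [← hη]; exact pow_mem (mem_adjoin_simple_self ℚ ζ) q
  -- generic machinery, parameterized by the root ζθ used for slots
  -- we handle the two cases separately
  by_cases hdvd : q ∣ m2
  · -- case A : q ∣ m2, slots relative to ζ itself
    set slot : ZMod M → Fin q := fun c => ⟨c.val % q, Nat.mod_lt _ hq.pos⟩ with hslot
    set e2 : ZMod M → ZMod m2 := fun c => ((c.val / q : ℕ) : ZMod m2) with he2
    have hterm : ∀ c : ZMod M, rterm M c = ζ ^ ((slot c : Fin q) : ℕ) * rterm m2 (e2 c) := by
      intro c
      have h1 : rterm m2 (e2 c) = ζ ^ (q * (c.val / q)) := by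
        rw [rterm, he2]
        simp only
        rw [pow_val_natCast hm2 hη1, ← hη, ← pow_mul]
      rw [h1, rterm, hslot]
      simp only
      rw [← pow_add]
      congr 1
      exact (Nat.mod_add_div c.val q).symm
    set F : Fin q → Multiset (ZMod m2) := fun i => (E.filter (fun c => slot c = i)).map e2
      with hF
    have hcard : (∑ i, (F i).card) = E.card := by
      simp only [hF, Multiset.card_map]
      exact fiber_card E slot
    set val : Fin q → ℂ := fun i => ((F i).map (rterm m2)).sum with hval
    have hkey : ∑ i : Fin q, ζ ^ (i : ℕ) * val i = (s : ℂ) := by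
      rw [← hsum, ← fiber_sum E slot (rterm M)]
      apply Finset.sum_congr rfl
      intro i _
      rw [hval]
      simp only [hF, Multiset.map_map]
      rw [← Multiset.sum_map_mul_left]
      apply congrArg
      apply Multiset.map_congr rfl
      intro c hc
      have hcslot : slot c = i := (Multiset.mem_filter.1 hc).2
      simp only [Function.comp_apply]
      rw [hterm c, hcslot]
    -- coefficients in K
    set valK : Fin q → K := fun i => ((F i).map (fun d => gen ^ d.val)).sum with hvalK
    have hvalmap : ∀ i, algebraMap K ℂ (valK i) = val i := by
      intro i
      rw [hvalK, hval]
      simp only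
      rw [map_multiset_sum, Multiset.map_map]
      apply congrArg
      apply Multiset.map_congr rfl
      intro d _
      simp only [Function.comp_apply, map_pow, hgen]
      rfl
    -- tower degree
    have htot : Nat.totient m2 * (minpoly K ζ).natDegree = Nat.totient M := by
      apply tower_main M q m2 hM hq0 hm2 ζ (mem_adjoin_simple_self ℚ ζ) hηZ
        (mem_adjoin_simple_self K ζ) ⟨M, hM0, hζ1⟩
    have htotM : Nat.totient M = q * Nat.totient m2 := by
      rw [hM]; exact Nat.totient_mul_of_prime_of_dvd hq hdvd
    have hdegq : q ≤ (minpoly K ζ).natDegree := by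
      have htp : 0 < Nat.totient m2 := Nat.totient_pos.2 (Nat.pos_of_ne_zero hm2)
      nlinarith [htot, htotM]
    -- apply coeffs_zero
    set gfun : ℕ → K := fun j =>
      (if h : j < q then valK ⟨j, h⟩ else 0) - (if j = 0 then (s : K) else 0) with hgfun
    have hzero : ∀ j < q, gfun j = 0 := by
      apply coeffs_zero K ζ (int_of_pow_eq_one K ζ M hM0 hζ1) q hdegq
      have expand : ∑ j ∈ Finset.range q, (algebraMap K ℂ (gfun j)) * ζ ^ j
          = (∑ i : Fin q, ζ ^ (i : ℕ) * val i) - (s : ℂ) := by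
        rw [← Fin.sum_univ_eq_sum_range (fun j => (algebraMap K ℂ (gfun j)) * ζ ^ j) q]
        have hsplit : (∑ i : Fin q, ζ ^ (i : ℕ) * val i) - (s : ℂ)
            = ∑ i : Fin q, (ζ ^ (i : ℕ) * val i - (if (i : ℕ) = 0 then (s : ℂ) else 0)) := by
          rw [Finset.sum_sub_distrib]
          congr 1
          rw [Finset.sum_eq_single (⟨0, hq.pos⟩ : Fin q)]
          · simp
          · intro b _ hb
            exact if_neg (fun h => hb (Fin.ext h))
          · intro h; exact absurd (Finset.mem_univ _) h
        rw [hsplit]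
        apply Finset.sum_congr rfl
        intro i _
        rw [hgfun]
        simp only [Fin.is_lt, dif_pos, Fin.eta, map_sub]
        rw [hvalmap]
        by_cases h0 : (i : ℕ) = 0
        · rw [if_pos h0, if_pos h0, map_ratCast, h0]
          simp only [pow_zero, mul_one]
          ring
        · rw [if_neg h0, if_neg h0, map_zero]
          ring
      rw [expand, hkey, sub_self]
    refine ⟨F, hcard, 0, ?_, ?_⟩
    · intro i hi
      have h := hzero (i : ℕ) i.is_lt
      rw [hgfun] at h
      simp only [Fin.is_lt, dif_pos, Fin.eta] at h
      rw [if_neg hi, sub_zero] at h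
      show val i = 0
      rw [← hvalmap, h, map_zero]
    · have h := hzero 0 hq.pos
      rw [hgfun] at h
      simp only [hq.pos, dif_pos, if_pos rfl] at h
      have hv : valK ⟨0, hq.pos⟩ = (s : K) := by rwa [sub_eq_zero] at h
      show val ⟨0, hq.pos⟩ = (s : ℂ) + 0
      rw [← hvalmap, hv, map_ratCast, add_zero]
  · -- case B : coprime
    have hcop : Nat.Coprime q m2 := (Nat.Prime.coprime_iff_not_dvd hq).2 hdvd
    have hζ0 : ζ ≠ 0 := root_ne_zero hM0 hζ1
    set ωq := zetaC q with hωdef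
    have hω : ζ ^ m2 = ωq := zetaC_pow_eq M m2 q (by rw [hM, mul_comm]) hm2 hq0
    have hω1 : ωq ^ q = 1 := zetaC_pow_one q hq0
    set Ab : ℤ := Nat.gcdA q m2 with hAdef
    set Bb : ℤ := Nat.gcdB q m2 with hBdef
    have hbez : (q : ℤ) * Ab + (m2 : ℤ) * Bb = 1 := by
      have h := Nat.gcd_eq_gcd_ab q m2
      rw [Nat.Coprime.gcd_eq_one hcop] at h
      rw [hAdef, hBdef]
      exact_mod_cast h.symm
    set slot : ZMod M → Fin q := fun c => ⟨((Bb : ZMod q) * (c.val : ZMod q)).val, ZMod.val_lt _⟩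
      with hslot
    set e2 : ZMod M → ZMod m2 := fun c => (Ab : ZMod m2) * (c.val : ZMod m2) with he2
    have hterm : ∀ c : ZMod M, rterm M c = ωq ^ ((slot c : Fin q) : ℕ) * rterm m2 (e2 c) := by
      intro c
      have h1 : (q : ℤ) ∣ ((((Bb : ZMod q) * (c.val : ZMod q)).val : ℤ) - Bb * c.val) := by
        apply (ZMod.intCast_zmod_eq_zero_iff_dvd _ q).1
        rw [Int.cast_sub, Int.cast_natCast, ZMod.natCast_val, ZMod.cast_id, Int.cast_mul,
          Int.cast_natCast, sub_self]
      have h2 : (m2 : ℤ) ∣ ((((Ab : ZMod m2) * (c.val : ZMod m2)).val : ℤ) - Ab * c.val) := by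
        apply (ZMod.intCast_zmod_eq_zero_iff_dvd _ m2).1
        rw [Int.cast_sub, Int.cast_natCast, ZMod.natCast_val, ZMod.cast_id, Int.cast_mul,
          Int.cast_natCast, sub_self]
      obtain ⟨k1, hk1⟩ := h1
      obtain ⟨k2, hk2⟩ := h2
      set sv : ℕ := ((Bb : ZMod q) * (c.val : ZMod q)).val
      set tv : ℕ := ((Ab : ZMod m2) * (c.val : ZMod m2)).val
      have hdvdM : (M : ℤ) ∣ ((m2 * sv + q * tv : ℤ) - c.val) := by
        refine ⟨k1 + k2, ?_⟩
        have hMZ : (M : ℤ) = (q : ℤ) * m2 := by exact_mod_cast congrArg (Nat.cast : ℕ → ℤ) hM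
        rw [hMZ]
        linear_combination (m2 : ℤ) * hk1 + (q : ℤ) * hk2 + (c.val : ℤ) * hbez
      have hL : rterm M c = ζ ^ ((c.val : ℕ) : ℤ) := by rw [rterm, zpow_natCast]
      have hR : ωq ^ sv * rterm m2 (e2 c) = ζ ^ ((m2 * sv + q * tv : ℕ) : ℤ) := by
        rw [rterm]
        have htv : (e2 c).val = tv := rfl
        rw [htv, ← hω, ← hηdef, ← hη, ← pow_mul, ← pow_mul, ← pow_add, zpow_natCast]
      rw [hL, hR]
      apply zpow_congr_mod hM0 hζ1
      push_cast
      push_cast at hdvdM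
      exact dvd_sub_comm.mp hdvdM
    set F : Fin q → Multiset (ZMod m2) := fun i => (E.filter (fun c => slot c = i)).map e2
      with hF
    have hcard : (∑ i, (F i).card) = E.card := by
      simp only [hF, Multiset.card_map]
      exact fiber_card E slot
    set val : Fin q → ℂ := fun i => ((F i).map (rterm m2)).sum with hval
    have hkey : ∑ i : Fin q, ωq ^ (i : ℕ) * val i = (s : ℂ) := by
      rw [← hsum, ← fiber_sum E slot (rterm M)]
      apply Finset.sum_congr rfl
      intro i _
      rw [hval]
      simp only [hF, Multiset.map_map]
      rw [← Multiset.sum_map_mul_left]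
      apply congrArg
      apply Multiset.map_congr rfl
      intro c hc
      have hcslot : slot c = i := (Multiset.mem_filter.1 hc).2
      simp only [Function.comp_apply]
      rw [hterm c, hcslot]
    set valK : Fin q → K := fun i => ((F i).map (fun d => gen ^ d.val)).sum with hvalK
    have hvalmap : ∀ i, algebraMap K ℂ (valK i) = val i := by
      intro i
      rw [hvalK, hval]
      simp only
      rw [map_multiset_sum, Multiset.map_map]
      apply congrArg
      apply Multiset.map_congr rfl
      intro d _
      simp only [Function.comp_apply, map_pow, hgen]
      rfl
    -- tower degree for ωq
    have hθZ : ωq ∈ ℚ⟮ζ⟯ := by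
      rw [← hω]; exact pow_mem (mem_adjoin_simple_self ℚ ζ) m2
    have hζmem : ζ ∈ (K⟮ωq⟯ : IntermediateField K ℂ) := by
      have hωmem : ωq ∈ (K⟮ωq⟯ : IntermediateField K ℂ) := mem_adjoin_simple_self K ωq
      have hηmem : η ∈ (K⟮ωq⟯ : IntermediateField K ℂ) := by
        have h := (K⟮ωq⟯ : IntermediateField K ℂ).algebraMap_mem gen
        rwa [hgen] at h
      have hz : ζ = η ^ Ab * ωq ^ Bb := by
        have h1 : ζ ^ ((q : ℤ) * Ab + (m2 : ℤ) * Bb) = ζ := by rw [hbez, zpow_one]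
        rw [← h1, zpow_add₀ hζ0, zpow_mul, zpow_mul]
        norm_num
        rw [hη, hω]
      rw [hz]
      exact mul_mem (zpow_mem hηmem Ab) (zpow_mem hωmem Bb)
    have htot : Nat.totient m2 * (minpoly K ωq).natDegree = Nat.totient M :=
      tower_main M q m2 hM hq0 hm2 ωq hθZ hηZ hζmem ⟨q, hq0, hω1⟩
    have htotM : Nat.totient M = (q - 1) * Nat.totient m2 := by
      rw [hM, Nat.totient_mul hcop, Nat.totient_prime hq]
    have hdeg : q - 1 ≤ (minpoly K ωq).natDegree := by
      have htp : 0 < Nat.totient m2 := Nat.totient_pos.2 (Nat.pos_of_ne_zero hm2)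
      nlinarith [htot, htotM]
    -- geometric relation
    obtain ⟨Q, hQ⟩ : ∃ Q, q = Q + 1 := ⟨q - 1, (Nat.succ_pred_eq_of_pos hq.pos).symm⟩
    have hQ1 : q - 1 = Q := by omega
    have hgeom : ∑ j ∈ Finset.range q, ωq ^ j = 0 := by
      have hne1 : ωq ≠ 1 := (zetaC_prim_s7 q hq0).ne_one hq.one_lt
      have h := geom_sum_mul ωq q
      rw [hω1, sub_self] at h
      exact (mul_eq_zero.1 h).resolve_right (sub_ne_zero.2 hne1)
    -- c-values
    set cval : ℕ → K := fun j =>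
      (if h : j < q then valK ⟨j, h⟩ else 0) - (if j = 0 then (s : K) else 0) with hcval
    have hcsum : ∑ j ∈ Finset.range q, (algebraMap K ℂ (cval j)) * ωq ^ j = 0 := by
      have expand : ∑ j ∈ Finset.range q, (algebraMap K ℂ (cval j)) * ωq ^ j
          = (∑ i : Fin q, ωq ^ (i : ℕ) * val i) - (s : ℂ) := by
        rw [← Fin.sum_univ_eq_sum_range (fun j => (algebraMap K ℂ (cval j)) * ωq ^ j) q]
        have hsplit : (∑ i : Fin q, ωq ^ (i : ℕ) * val i) - (s : ℂ)
            = ∑ i : Fin q, (ωq ^ (i : ℕ) * val i - (if (i : ℕ) = 0 then (s : ℂ) else 0)) := by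
          rw [Finset.sum_sub_distrib]
          congr 1
          rw [Finset.sum_eq_single (⟨0, hq.pos⟩ : Fin q)]
          · simp
          · intro b _ hb
            exact if_neg (fun h => hb (Fin.ext h))
          · intro h; exact absurd (Finset.mem_univ _) h
        rw [hsplit]
        apply Finset.sum_congr rfl
        intro i _
        rw [hcval]
        simp only [Fin.is_lt, dif_pos, Fin.eta, map_sub]
        rw [hvalmap]
        by_cases h0 : (i : ℕ) = 0
        · rw [if_pos h0, if_pos h0, map_ratCast, h0]
          simp only [pow_zero, mul_one]
          ring
        · rw [if_neg h0, if_neg h0, map_zero]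
          ring
      rw [expand, hkey, sub_self]
    -- reduce to Q coefficients
    set gfun : ℕ → K := fun j => cval j - cval Q with hgfun
    have hgsum : ∑ j ∈ Finset.range Q, (algebraMap K ℂ (gfun j)) * ωq ^ j = 0 := by
      have h := hcsum
      rw [hQ, Finset.sum_range_succ] at h
      have h2 := hgeom
      rw [hQ, Finset.sum_range_succ] at h2
      have e1 : ∑ j ∈ Finset.range Q, (algebraMap K ℂ (gfun j)) * ωq ^ j
          = (∑ j ∈ Finset.range Q, (algebraMap K ℂ (cval j)) * ωq ^ j)
            - (algebraMap K ℂ (cval Q)) * ∑ j ∈ Finset.range Q, ωq ^ j := by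
        rw [Finset.mul_sum, ← Finset.sum_sub_distrib]
        apply Finset.sum_congr rfl
        intro j _
        rw [hgfun]
        simp only [map_sub]
        ring
      rw [e1]
      linear_combination h - (algebraMap K ℂ (cval Q)) * h2
    have hdegQ : Q ≤ (minpoly K ωq).natDegree := by rw [← hQ1]; exact hdeg
    have hzero : ∀ j < Q, gfun j = 0 :=
      coeffs_zero K ωq (int_of_pow_eq_one K ωq q hq0 hω1) Q hdegQ gfun hgsum
    -- conclusions
    have hq2 : 2 ≤ q := hq.two_le
    have hlast : Q < q := by omega
    have hlastne : Q ≠ 0 := by omega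
    have hQpos : 0 < Q := by omega
    have hcval_last : cval Q = valK ⟨Q, hlast⟩ := by
      rw [hcval]
      simp only [hlast, dif_pos, if_neg hlastne, sub_zero]
    refine ⟨F, hcard, algebraMap K ℂ (valK ⟨Q, hlast⟩), ?_, ?_⟩
    · intro i hi
      show val i = _
      rw [← hvalmap]
      by_cases hiq : (i : ℕ) = Q
      · congr 2
        exact Fin.ext hiq
      · have hiQ : (i : ℕ) < Q := by have := i.is_lt; omega
        have h := hzero (i : ℕ) hiQ
        rw [hgfun] at h
        simp only at h
        rw [hcval_last, sub_eq_zero, hcval] at h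
        simp only [Fin.is_lt, dif_pos, Fin.eta, if_neg hi, sub_zero] at h
        rw [h]
    · show val ⟨0, hq.pos⟩ = _
      have h := hzero 0 hQpos
      rw [hgfun] at h
      simp only at h
      rw [hcval_last, sub_eq_zero, hcval] at h
      simp only [hq.pos, dif_pos, if_pos rfl] at h
      have hv : valK ⟨0, hq.pos⟩ = (s : K) + valK ⟨Q, hlast⟩ := by
        rw [sub_eq_iff_eq_add] at h
        rw [h]; simp; ring
      rw [← hvalmap, hv, map_add, map_ratCast]
section Elem

lemma pow_eq_one_real {a : ℝ} {N : ℕ} (hN : N ≠ 0) (ha : 0 ≤ a) (h : a ^ N = 1) : a = 1 := by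
  rcases (pow_eq_one_iff_cases.1 h) with h1 | h1 | h1
  · omega
  · exact h1
  · exfalso; nlinarith [h1.1]

lemma normSq_one_of_pow {x : ℂ} {N : ℕ} (hN : N ≠ 0) (hx : x ^ N = 1) :
    x * (starRingEnd ℂ) x = 1 := by
  have h1 : Complex.normSq x ^ N = 1 := by
    rw [← map_pow, hx, map_one]
  have h2 : Complex.normSq x = 1 := pow_eq_one_real hN (Complex.normSq_nonneg x) h1
  rw [Complex.mul_conj, h2, Complex.ofReal_one]

lemma core_contra {x : ℂ} {N : ℕ} (hN : Odd N) (hx : x ^ N = 1)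
    (hsum : x + (starRingEnd ℂ) x = 1) : False := by
  have hN0 : N ≠ 0 := by rintro rfl; simp at hN
  have hc : x * (starRingEnd ℂ) x = 1 := normSq_one_of_pow hN0 hx
  -- conj x = 1 - x, so x * (1 - x) = 1, x^2 = x - 1, x^3 = -1
  have hconj : (starRingEnd ℂ) x = 1 - x := by linear_combination hsum
  rw [hconj] at hc
  have hx3 : x ^ 3 = -1 := by linear_combination (-(x+1)) * hc
  have h1 : x ^ (3 * N) = 1 := by rw [mul_comm, pow_mul, hx, one_pow]
  have h2 : x ^ (3 * N) = -1 := by rw [pow_mul, hx3, hN.neg_one_pow]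
  rw [h1] at h2
  exact one_ne_zero (by linear_combination h2 / 2 : (1 : ℂ) = 0)

lemma no_sum_two_eq_one {N : ℕ} (hN : Odd N) {x y : ℂ} (hx : x ^ N = 1) (hy : y ^ N = 1) :
    x + y ≠ 1 := by
  intro hxy
  have hN0 : N ≠ 0 := by rintro rfl; simp at hN
  have hyc : y * (starRingEnd ℂ) y = 1 := normSq_one_of_pow hN0 hy
  have hxc : x * (starRingEnd ℂ) x = 1 := normSq_one_of_pow hN0 hx
  have hy' : y = 1 - x := by linear_combination hxy
  have hconjy : (starRingEnd ℂ) y = 1 - (starRingEnd ℂ) x := by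
    rw [hy']; simp
  apply core_contra hN hx
  rw [hconjy, hy'] at hyc
  linear_combination hxc - hyc

lemma no_diff_one {N : ℕ} (hN : Odd N) {x y : ℂ} (hx : x ^ N = 1) (hy : y ^ N = 1) :
    x - y ≠ 1 := by
  intro hxy
  have hN0 : N ≠ 0 := by rintro rfl; simp at hN
  have hyc : y * (starRingEnd ℂ) y = 1 := normSq_one_of_pow hN0 hy
  have hxc : x * (starRingEnd ℂ) x = 1 := normSq_one_of_pow hN0 hx
  have hy' : y = x - 1 := by linear_combination -hxy
  have hconjy : (starRingEnd ℂ) y = (starRingEnd ℂ) x - 1 := by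
    rw [hy']; simp
  apply core_contra hN hx
  rw [hconjy, hy'] at hyc
  linear_combination hxc - hyc

lemma no_neg_one {N : ℕ} (hN : Odd N) {x : ℂ} (hx : x ^ N = 1) : x ≠ -1 := by
  intro h
  rw [h, hN.neg_one_pow] at hx
  exact one_ne_zero (by linear_combination -hx / 2 : (1 : ℂ) = 0)

lemma rterm_pow (m2 : ℕ) (hm2 : m2 ≠ 0) (c : ZMod m2) : rterm m2 c ^ m2 = 1 := by
  rw [rterm, ← pow_mul, mul_comm, pow_mul, zetaC_pow_one m2 hm2, one_pow]

end Elem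
def goodV (M : ℕ) : Prop := ∀ E : Multiset (ZMod M), Multiset.card E ≤ 9 →
  (E.map (rterm M)).sum = 0 →
  Multiset.card E = 0 ∨ Multiset.card E = 5 ∨ Multiset.card E = 7

def goodW (M : ℕ) : Prop := ∀ E : Multiset (ZMod M), 2 ≤ Multiset.card E →
  Multiset.card E ≤ 5 → (E.map (rterm M)).sum ≠ 1

theorem VW (M : ℕ) (hodd : Odd M) (h3 : ¬ 3 ∣ M) : goodV M ∧ goodW M := by
  induction M using Nat.strong_induction_on with
  | _ M ih =>
  have hM0 : M ≠ 0 := by rintro rfl; exact (Nat.not_odd_iff_even.mpr Even.zero) hodd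
  by_cases hM1 : M = 1
  · subst hM1
    have hterm1 : ∀ c : ZMod 1, rterm 1 c = 1 := by
      intro c
      rw [rterm, Subsingleton.elim c 0]
      rw [ZMod.val_zero, pow_zero]
    constructor
    · intro E hc hsum
      left
      rw [Multiset.map_congr rfl (fun c _ => hterm1 c), Multiset.map_const',
        Multiset.sum_replicate, nsmul_eq_mul, mul_one] at hsum
      exact_mod_cast hsum
    · intro E h2 _ hsum
      rw [Multiset.map_congr rfl (fun c _ => hterm1 c), Multiset.map_const',
        Multiset.sum_replicate, nsmul_eq_mul, mul_one] at hsum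
      have : Multiset.card E = 1 := by exact_mod_cast hsum
      omega
  -- now M ≥ 2 : decompose
  set q := M.minFac with hqdef
  have hqp : q.Prime := Nat.minFac_prime hM1
  have hqdvd : q ∣ M := Nat.minFac_dvd M
  set m2 := M / q with hm2def
  have hM : M = q * m2 := (Nat.mul_div_cancel' hqdvd).symm
  have hm2 : m2 ≠ 0 := by
    intro h; rw [h, mul_zero] at hM; exact hM0 hM
  have hm2dvd : m2 ∣ M := ⟨q, by rw [hM]; ring⟩
  have hm2odd : Odd m2 := by
    rcases Nat.even_or_odd m2 with he | ho
    · exfalso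
      obtain ⟨k, hk⟩ := he
      exact (Nat.not_odd_iff_even.mpr ⟨q * k, by rw [hM, hk]; ring⟩) hodd
    · exact ho
  have h3m2 : ¬ 3 ∣ m2 := fun hd => h3 (hd.trans hm2dvd)
  have hq2 : q ≠ 2 := by
    intro h
    exact (Nat.not_odd_iff_even.mpr (by obtain ⟨k, hk⟩ := (h ▸ hqdvd); exact ⟨k, by omega⟩)) hodd
  have hq3 : q ≠ 3 := fun h => h3 (h ▸ hqdvd)
  have hq5 : 5 ≤ q := by
    have h2 := hqp.two_le
    have h4 : q ≠ 4 := by intro h; rw [h] at hqp; norm_num at hqp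
    omega
  have hm2lt : m2 < M := Nat.div_lt_self (Nat.pos_of_ne_zero hM0) hqp.one_lt
  clear_value q m2
  clear hqdef hm2def hqdvd
  obtain ⟨ihV, ihW⟩ := ih m2 hm2lt hm2odd h3m2
  have hη1 : zetaC m2 ^ m2 = 1 := zetaC_pow_one m2 hm2
  have hterm_ne : ∀ d : ZMod m2, rterm m2 d ≠ 0 :=
    fun d => pow_ne_zero _ (root_ne_zero hm2 hη1)
  have hterm_pow : ∀ d : ZMod m2, rterm m2 d ^ m2 = 1 := rterm_pow m2 hm2
  constructor
  · -- goodV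
    intro E h9 hsum
    obtain ⟨F, hcard, β, hβ, h0⟩ := decomp M q m2 hM hqp hm2 E 0 (by rw [hsum]; norm_num)
    rw [Rat.cast_zero, zero_add] at h0
    have hPsum : ∑ i, Multiset.card (F i) = Multiset.card E := hcard
    have hsumall : ∀ i : Fin q, ((F i).map (rterm m2)).sum = β := by
      intro i
      by_cases h : (i : ℕ) = 0
      · have hieq : i = ⟨0, hqp.pos⟩ := Fin.ext h
        rw [hieq]; exact h0
      · exact hβ i h
    have hsingle : ∀ i, Multiset.card (F i) ≤ Multiset.card E := by
      intro i
      rw [← hPsum]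
      exact Finset.single_le_sum (f := fun j => Multiset.card (F j)) (fun j _ => Nat.zero_le _) (Finset.mem_univ i)
    by_cases hβ0 : β = 0
    · -- all slots vanish
      have hPi : ∀ i, Multiset.card (F i) = 0 ∨ Multiset.card (F i) = 5 ∨ Multiset.card (F i) = 7 := by
        intro i
        exact ihV (F i) (le_trans (hsingle i) h9) (by rw [hsumall i, hβ0])
      by_cases hex : ∃ i, Multiset.card (F i) ≠ 0
      · obtain ⟨i1, hi1⟩ := hex
        by_cases hex2 : ∃ j, j ≠ i1 ∧ Multiset.card (F j) ≠ 0
        · obtain ⟨j1, hj1ne, hj1⟩ := hex2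
          exfalso
          have h5i : 5 ≤ Multiset.card (F i1) := by rcases hPi i1 with h|h|h <;> omega
          have h5j : 5 ≤ Multiset.card (F j1) := by rcases hPi j1 with h|h|h <;> omega
          have hle : Multiset.card (F j1) + Multiset.card (F i1) ≤ Multiset.card E := by
            rw [← hPsum,
              show Multiset.card (F j1) + Multiset.card (F i1)
                = ∑ k ∈ ({j1, i1} : Finset (Fin q)), Multiset.card (F k) from
                (Finset.sum_pair (f := fun k => Multiset.card (F k)) hj1ne).symm]
            exact Finset.sum_le_sum_of_subset (Finset.subset_univ _)
          omega
        · push_neg at hex2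
          have hcE : Multiset.card E = Multiset.card (F i1) := by
            rw [← hPsum]
            exact Finset.sum_eq_single i1 (fun j _ hj => hex2 j hj)
              (fun h => absurd (Finset.mem_univ _) h)
          rcases hPi i1 with h|h|h <;> omega
      · push_neg at hex
        left
        rw [← hPsum]
        exact Finset.sum_eq_zero (fun i _ => hex i)
    · -- β ≠ 0 : all slots nonempty
      have h1le : ∀ i : Fin q, 1 ≤ Multiset.card (F i) := by
        intro i
        rcases Nat.eq_zero_or_pos (Multiset.card (F i)) with h|h
        · exfalso
          have hs := hsumall i
          rw [Multiset.card_eq_zero.mp h] at hs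
          simp at hs
          exact hβ0 hs.symm
        · exact h
      have hqle : q ≤ Multiset.card E := by
        rw [← hPsum]
        calc q = ∑ _i : Fin q, 1 := by simp
        _ ≤ ∑ i, Multiset.card (F i) := Finset.sum_le_sum (fun i _ => h1le i)
      have hq9 : q ≤ 9 := le_trans hqle h9
      have hsing : ∃ i, Multiset.card (F i) = 1 := by
        by_contra hc
        push_neg at hc
        have h2le : ∀ i : Fin q, 2 ≤ Multiset.card (F i) := fun i => by
          have := h1le i; have := hc i; omega
        have hge : 2 * q ≤ Multiset.card E := by
          rw [← hPsum]
          calc 2 * q = ∑ _i : Fin q, 2 := by simp [mul_comm]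
          _ ≤ ∑ i, Multiset.card (F i) := Finset.sum_le_sum (fun i _ => h2le i)
        omega
      obtain ⟨is, his⟩ := hsing
      obtain ⟨d0, hd0⟩ := Multiset.card_eq_one.mp his
      have hβval : β = rterm m2 d0 := by
        have hs := hsumall is
        rw [hd0] at hs
        simpa using hs.symm
      have hall1 : ∀ i, Multiset.card (F i) = 1 := by
        intro i
        by_contra hne
        have h2i : 2 ≤ Multiset.card (F i) := by have := h1le i; omega
        have hsplit : Multiset.card (F i) + ∑ j ∈ Finset.univ.erase i, Multiset.card (F j) = Multiset.card E := by
          rw [Finset.add_sum_erase _ (fun j => Multiset.card (F j)) (Finset.mem_univ i), hPsum]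
        have hcard_erase : (Finset.univ.erase i).card = q - 1 := by
          rw [Finset.card_erase_of_mem (Finset.mem_univ i), Finset.card_univ, Fintype.card_fin]
        have herase : (q - 1) * 1 ≤ ∑ j ∈ Finset.univ.erase i, Multiset.card (F j) := by
          have h' := Finset.card_nsmul_le_sum (Finset.univ.erase i) (fun j => Multiset.card (F j)) 1 (fun j _ => h1le j)
          rw [hcard_erase, smul_eq_mul] at h'
          exact h'
        have hPile : Multiset.card (F i) ≤ 5 := by omega
        set E' : Multiset (ZMod m2) := (F i).map (fun d => d - d0) with hE'
        have hcardE' : Multiset.card E' = Multiset.card (F i) := by rw [hE', Multiset.card_map]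
        have hsumE' : ((E'.map (rterm m2)).sum) * rterm m2 d0 = β := by
          rw [hE', Multiset.map_map, ← hsumall i, ← Multiset.sum_map_mul_right]
          apply congrArg
          apply Multiset.map_congr rfl
          intro d _
          simp only [Function.comp_apply]
          have hpa := pow_val_add hm2 hη1 (d - d0) d0
          rw [rterm, rterm, rterm, ← hpa, sub_add_cancel]
        have hsumE1 : (E'.map (rterm m2)).sum = 1 := by
          have : ((E'.map (rterm m2)).sum) * rterm m2 d0 = 1 * rterm m2 d0 := by
            rw [hsumE', hβval, one_mul]
          exact mul_right_cancel₀ (hterm_ne d0) this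
        exact ihW E' (by rw [hcardE']; omega) (by rw [hcardE']; omega) hsumE1
      have hcardq : Multiset.card E = q := by
        rw [← hPsum]
        simp [hall1]
      rw [hcardq]
      have hq57 : q = 5 ∨ q = 7 := by
        by_contra hcon
        push_neg at hcon
        have h6 : q ≠ 6 := by intro h; rw [h] at hqp; norm_num at hqp
        have h8 : q ≠ 8 := by intro h; rw [h] at hqp; norm_num at hqp
        have h9' : q ≠ 9 := by intro h; rw [h] at hqp; norm_num at hqp
        omega
      omega
  · -- goodW
    intro E h2 h5 hsum
    obtain ⟨F, hcard, β, hβ, h0⟩ := decomp M q m2 hM hqp hm2 E 1 (by rw [hsum]; norm_num)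
    rw [Rat.cast_one] at h0
    have hPsum : ∑ i, Multiset.card (F i) = Multiset.card E := hcard
    have hsingle : ∀ i, Multiset.card (F i) ≤ Multiset.card E := by
      intro i
      rw [← hPsum]
      exact Finset.single_le_sum (f := fun j => Multiset.card (F j)) (fun j _ => Nat.zero_le _) (Finset.mem_univ i)
    set i0 : Fin q := ⟨0, hqp.pos⟩ with hi0
    by_cases hβ0 : β = 0
    · -- all nonzero slots vanish
      have hPi : ∀ i : Fin q, (i : ℕ) ≠ 0 → Multiset.card (F i) = 0 ∨ Multiset.card (F i) = 5 ∨ Multiset.card (F i) = 7 := by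
        intro i hi
        exact ihV (F i) (by have := hsingle i; omega) (by rw [hβ i hi, hβ0])
      by_cases hex : ∃ i : Fin q, (i : ℕ) ≠ 0 ∧ Multiset.card (F i) ≠ 0
      · obtain ⟨i1, hi1ne, hi1⟩ := hex
        have h5i : 5 ≤ Multiset.card (F i1) := by rcases hPi i1 hi1ne with h|h|h <;> omega
        have hi1i0 : i0 ≠ i1 := by
          intro h
          rw [← h] at hi1ne
          exact hi1ne rfl
        have hle : Multiset.card (F i0) + Multiset.card (F i1) ≤ Multiset.card E := by
          rw [← hPsum,
            show Multiset.card (F i0) + Multiset.card (F i1)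
              = ∑ k ∈ ({i0, i1} : Finset (Fin q)), Multiset.card (F k) from
              (Finset.sum_pair (f := fun k => Multiset.card (F k)) hi1i0).symm]
          exact Finset.sum_le_sum_of_subset (Finset.subset_univ _)
        have hP00 : Multiset.card (F i0) = 0 := by omega
        have hF0 : F i0 = 0 := Multiset.card_eq_zero.mp hP00
        rw [hF0] at h0
        simp at h0
        rw [hβ0] at h0
        simp at h0
        -- h0 : 0 = 1 contradiction
      · push_neg at hex
        have hcE : Multiset.card E = Multiset.card (F i0) := by
          rw [← hPsum]
          refine Finset.sum_eq_single i0 (fun j _ hj => hex j ?_) 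
            (fun h => absurd (Finset.mem_univ _) h)
          intro hj0
          exact hj (Fin.ext hj0)
        have hs0 : ((F i0).map (rterm m2)).sum = 1 := by rw [h0, hβ0, add_zero]
        exact ihW (F i0) (by show 2 ≤ Multiset.card (F i0); omega) (by show Multiset.card (F i0) ≤ 5; omega) hs0
    · -- β ≠ 0
      have h1le : ∀ i : Fin q, (i : ℕ) ≠ 0 → 1 ≤ Multiset.card (F i) := by
        intro i hi
        rcases Nat.eq_zero_or_pos (Multiset.card (F i)) with h|h
        · exfalso
          have hs := hβ i hi
          rw [Multiset.card_eq_zero.mp h] at hs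
          simp at hs
          exact hβ0 hs.symm
        · exact h
      have hcard_erase : (Finset.univ.erase i0).card = q - 1 := by
        rw [Finset.card_erase_of_mem (Finset.mem_univ i0), Finset.card_univ, Fintype.card_fin]
      have hmem_erase : ∀ j ∈ Finset.univ.erase i0, (j : ℕ) ≠ 0 := by
        intro j hj
        intro hj0
        exact (Finset.mem_erase.mp hj).1 (Fin.ext hj0)
      have hsplit : Multiset.card (F i0) + ∑ j ∈ Finset.univ.erase i0, Multiset.card (F j) = Multiset.card E := by
        rw [Finset.add_sum_erase _ (fun j => Multiset.card (F j)) (Finset.mem_univ i0), hPsum]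
      have herase1 : (q - 1) * 1 ≤ ∑ j ∈ Finset.univ.erase i0, Multiset.card (F j) := by
        have h' := Finset.card_nsmul_le_sum (Finset.univ.erase i0) (fun j => Multiset.card (F j)) 1
          (fun j hj => h1le j (hmem_erase j hj))
        rw [hcard_erase, smul_eq_mul] at h'
        exact h'
      have hqeq5 : q = 5 := by
        have h4 : q ≠ 6 := by intro h; rw [h] at hqp; norm_num at hqp
        omega
      -- find singleton slot among nonzero
      have hsing : ∃ i : Fin q, (i : ℕ) ≠ 0 ∧ Multiset.card (F i) = 1 := by
        by_contra hc
        push_neg at hc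
        have h2le : ∀ j ∈ Finset.univ.erase i0, 2 ≤ Multiset.card (F j) := by
          intro j hj
          have := h1le j (hmem_erase j hj)
          have := hc j (hmem_erase j hj)
          omega
        have h' := Finset.card_nsmul_le_sum (Finset.univ.erase i0) (fun j => Multiset.card (F j)) 2 h2le
        rw [hcard_erase, smul_eq_mul] at h'
        omega
      obtain ⟨is, hisne, his⟩ := hsing
      obtain ⟨d, hd⟩ := Multiset.card_eq_one.mp his
      have hβval : β = rterm m2 d := by
        have hs := hβ is hisne
        rw [hd] at hs
        simpa using hs.symm
      by_cases hc0 : Multiset.card (F i0) = 0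
      · -- β = -1
        have hF0 : F i0 = 0 := Multiset.card_eq_zero.mp hc0
        rw [hF0] at h0
        simp at h0
        -- h0 : 0 = 1 + β
        have hβneg : rterm m2 d = -1 := by
          rw [← hβval]
          linear_combination -h0
        exact no_neg_one hm2odd (hterm_pow d) hβneg
      · -- all slots card 1, total = 5
        have hc01 : 1 ≤ Multiset.card (F i0) := Nat.pos_of_ne_zero hc0
        have hP01 : Multiset.card (F i0) = 1 := by omega
        obtain ⟨d0, hd0⟩ := Multiset.card_eq_one.mp hP01
        have hs0 : rterm m2 d0 = 1 + β := by
          have := h0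
          rw [hd0] at this
          simpa using this
        have : rterm m2 d0 - rterm m2 d = 1 := by
          rw [hs0, hβval]; ring
        exact no_diff_one hm2odd (hterm_pow d0) (hterm_pow d) this
lemma conj_pow_val {x : ℂ} {N : ℕ} (hN : N ≠ 0) (hx : x ^ N = 1) (u : ZMod N) :
    (starRingEnd ℂ) (x ^ u.val) = x ^ (-u).val := by
  have hz : x ^ u.val ≠ 0 := pow_ne_zero _ (root_ne_zero hN hx)
  have hxu : (x ^ u.val) ^ N = 1 := by
    rw [← pow_mul, mul_comm, pow_mul, hx, one_pow]
  have h1 : (x ^ u.val) * (starRingEnd ℂ) (x ^ u.val) = 1 := normSq_one_of_pow hN hxu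
  have h2 : (x ^ u.val) * (x ^ (-u).val) = 1 := by
    rw [← pow_val_add hN hx u (-u), add_neg_cancel, ZMod.val_zero, pow_zero]
  exact mul_left_cancel₀ hz (h1.trans h2.symm)

theorem no_gbf_n_one_or_two_odd_modulus (m : ℕ) (hm : 0 < m) (hodd : Odd m)
    (h3 : ¬ (3 ∣ m)) (n : ℕ) (hn : n = 1 ∨ n = 2) :
    ¬ ∃ f : (Fin n → ZMod 3) → ZMod m, IsGBF m f := by
  rintro ⟨f, hf⟩
  have hm0 : m ≠ 0 := hm.ne'
  have h30 : (3 : ℕ) ≠ 0 := by norm_num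
  have hω1 : zetaC 3 ^ 3 = 1 := zetaC_pow_one 3 h30
  have hωprim : IsPrimitiveRoot (zetaC 3) 3 := zetaC_prim_s7 3 h30
  have hζ1 : zetaC m ^ m = 1 := zetaC_pow_one m hm0
  have hn0 : n ≠ 0 := by rcases hn with rfl | rfl <;> norm_num
  set dot : (Fin n → ZMod 3) → (Fin n → ZMod 3) → ZMod 3 := fun w x => ∑ j, w j * x j with hdot
  have hdot_addr : ∀ w a b : Fin n → ZMod 3, dot w (a + b) = dot w a + dot w b := by
    intro w a b
    simp [hdot, mul_add, Finset.sum_add_distrib]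
  have hdot_addl : ∀ w v x : Fin n → ZMod 3, dot (w + v) x = dot w x + dot v x := by
    intro w v x
    simp [hdot, add_mul, Finset.sum_add_distrib]
  have hdot_negr : ∀ w x : Fin n → ZMod 3, dot w (-x) = - dot w x := by
    intro w x
    simp [hdot, mul_neg, Finset.sum_neg_distrib]
  have hdot_zeror : ∀ w : Fin n → ZMod 3, dot w 0 = 0 := by
    intro w
    simp [hdot]
  set χ : (Fin n → ZMod 3) → AddChar (Fin n → ZMod 3) ℂ := fun w =>
    { toFun := fun x => zetaC 3 ^ (dot w x).val
      map_zero_eq_one' := by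
        show zetaC 3 ^ (dot w 0).val = 1
        rw [hdot_zeror w, ZMod.val_zero, pow_zero]
      map_add_eq_mul' := by
        intro a b
        show zetaC 3 ^ (dot w (a + b)).val
          = zetaC 3 ^ (dot w a).val * zetaC 3 ^ (dot w b).val
        rw [hdot_addr w a b, pow_val_add h30 hω1] } with hχ
  have hχ_apply : ∀ w x : Fin n → ZMod 3, χ w x = zetaC 3 ^ (dot w x).val := fun w x => rfl
  -- orthogonality
  have orth : ∀ z : Fin n → ZMod 3, z ≠ 0 → ∑ w, χ w z = 0 := by
    intro z hz
    obtain ⟨j0, hj0⟩ : ∃ j0, z j0 ≠ 0 := by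
      by_contra hc
      push_neg at hc
      exact hz (funext hc)
    set δ : Fin n → ZMod 3 := Pi.single j0 1 with hδ
    have hdotδ : ∀ w : Fin n → ZMod 3, dot (w + δ) z = dot w z + z j0 := by
      intro w
      rw [hdot_addl]
      congr 1
      rw [hdot]
      simp only
      rw [Finset.sum_eq_single j0]
      · rw [hδ, Pi.single_eq_same, one_mul]
      · intro b _ hb
        rw [hδ, Pi.single_eq_of_ne hb, zero_mul]
      · intro h; exact absurd (Finset.mem_univ _) h
    have hshift : ∑ w, χ w z = (∑ w, χ w z) * zetaC 3 ^ (z j0).val := by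
      conv_lhs => rw [← Equiv.sum_comp (Equiv.addRight δ) (fun w => χ w z)]
      rw [Finset.sum_mul]
      apply Finset.sum_congr rfl
      intro w _
      rw [hχ_apply, hχ_apply]
      simp only [Equiv.coe_addRight]
      rw [hdotδ w, pow_val_add h30 hω1]
    have hne : zetaC 3 ^ (z j0).val ≠ 1 := by
      have hvlt : (z j0).val < 3 := ZMod.val_lt _
      have hvne : (z j0).val ≠ 0 := by
        intro h
        exact hj0 (by rwa [← ZMod.val_eq_zero])
      exact hωprim.pow_ne_one_of_pos_of_lt hvne hvlt
    have := sub_eq_zero.mpr hshift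
    rw [← mul_one_sub] at this  -- careful direction
    rcases mul_eq_zero.mp this with h | h
    · exact h
    · exfalso
      apply hne
      have : (1 : ℂ) - zetaC 3 ^ (z j0).val = 0 := h
      linear_combination -this
  -- setup sums
  set t : (Fin n → ZMod 3) → ℂ := fun x => zetaC m ^ (f x).val with ht
  set u : (Fin n → ZMod 3) → ℂ := fun y => zetaC m ^ (-(f y)).val with hu
  set S : (Fin n → ZMod 3) → ℂ := fun w => ∑ x, t x * χ w x with hS
  have hτexists : ∃ τ : Fin n → ZMod 3, τ ≠ 0 := by
    refine ⟨fun _ => 1, ?_⟩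
    intro h
    have h1 := congrFun h ⟨0, Nat.pos_of_ne_zero hn0⟩
    exact one_ne_zero h1
  obtain ⟨τ, hτ⟩ := hτexists
  have hconjχ : ∀ w x : Fin n → ZMod 3, (starRingEnd ℂ) (χ w x) = χ w (-x) := by
    intro w x
    rw [hχ_apply, hχ_apply, conj_pow_val h30 hω1, hdot_negr]
  have hconjS : ∀ w : Fin n → ZMod 3, (starRingEnd ℂ) (S w) = ∑ y, u y * χ w (-y) := by
    intro w
    rw [hS]
    simp only
    rw [map_sum]
    apply Finset.sum_congr rfl
    intro y _
    rw [map_mul, hconjχ, ht, hu]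
    simp only
    rw [conj_pow_val hm0 hζ1]
  have hSS : ∀ w : Fin n → ZMod 3, S w * (starRingEnd ℂ) (S w) = (Fintype.card (Fin n → ZMod 3) : ℂ) := by
    intro w
    have hSw : S w = ∑ x, zetaC m ^ (f x).val * χ w x := rfl
    rw [Complex.mul_conj, ← Complex.sq_norm, hSw, hf (χ w)]
    norm_cast
  -- equation (1)
  have h1 : ∑ w, (S w * (starRingEnd ℂ) (S w)) * χ w τ = 0 := by
    calc ∑ w, (S w * (starRingEnd ℂ) (S w)) * χ w τ
        = ∑ w, (Fintype.card (Fin n → ZMod 3) : ℂ) * χ w τ :=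
          Finset.sum_congr rfl (fun w _ => by rw [hSS w])
      _ = (Fintype.card (Fin n → ZMod 3) : ℂ) * ∑ w, χ w τ := by rw [Finset.mul_sum]
      _ = 0 := by rw [orth τ hτ, mul_zero]
  -- equation (2)
  have h2 : ∑ w, (S w * (starRingEnd ℂ) (S w)) * χ w τ
      = (Fintype.card (Fin n → ZMod 3) : ℂ) * ∑ x, t x * u (x + τ) := by
    have hterm : ∀ w : Fin n → ZMod 3, (S w * (starRingEnd ℂ) (S w)) * χ w τ
        = ∑ x, ∑ y, (t x * u y) * χ w (x - y + τ) := by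
      intro w
      rw [hconjS, hS]
      simp only
      rw [Finset.sum_mul_sum, Finset.sum_mul]
      apply Finset.sum_congr rfl
      intro x _
      rw [Finset.sum_mul]
      apply Finset.sum_congr rfl
      intro y _
      have hmul : χ w x * χ w (-y) * χ w τ = χ w (x - y + τ) := by
        rw [← AddChar.map_add_eq_mul, ← AddChar.map_add_eq_mul, sub_eq_add_neg]
      calc t x * χ w x * (u y * χ w (-y)) * χ w τ
          = (t x * u y) * (χ w x * χ w (-y) * χ w τ) := by ring
        _ = (t x * u y) * χ w (x - y + τ) := by rw [hmul]
    have hswap : ∀ x, ∑ w, ∑ y, (t x * u y) * χ w (x - y + τ)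
        = ∑ y, (t x * u y) * ∑ w, χ w (x - y + τ) := by
      intro x
      rw [Finset.sum_comm]
      apply Finset.sum_congr rfl
      intro y _
      rw [Finset.mul_sum]
    have hinner : ∀ x, ∑ y, (t x * u y) * ∑ w, χ w (x - y + τ)
        = (Fintype.card (Fin n → ZMod 3) : ℂ) * (t x * u (x + τ)) := by
      intro x
      rw [Finset.sum_eq_single (x + τ)]
      · have hz : x - (x + τ) + τ = 0 := by ring
        rw [hz]
        have hcard : ∑ w, χ w (0 : Fin n → ZMod 3) = (Fintype.card (Fin n → ZMod 3) : ℂ) := by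
          rw [Finset.sum_congr rfl (fun w _ => AddChar.map_zero_eq_one (χ w))]
          simp
        rw [hcard]
        ring
      · intro y _ hy
        have hz : x - y + τ ≠ 0 := by
          intro h
          apply hy
          have : y = x + τ := by linear_combination -h
          rw [this]
        rw [orth _ hz, mul_zero]
      · intro h; exact absurd (Finset.mem_univ _) h
    calc ∑ w, (S w * (starRingEnd ℂ) (S w)) * χ w τ
        = ∑ w, ∑ x, ∑ y, (t x * u y) * χ w (x - y + τ) :=
          Finset.sum_congr rfl (fun w _ => hterm w)
      _ = ∑ x, ∑ w, ∑ y, (t x * u y) * χ w (x - y + τ) := Finset.sum_comm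
      _ = ∑ x, ∑ y, (t x * u y) * ∑ w, χ w (x - y + τ) :=
          Finset.sum_congr rfl (fun x _ => hswap x)
      _ = ∑ x, (Fintype.card (Fin n → ZMod 3) : ℂ) * (t x * u (x + τ)) :=
          Finset.sum_congr rfl (fun x _ => hinner x)
      _ = (Fintype.card (Fin n → ZMod 3) : ℂ) * ∑ x, t x * u (x + τ) := by
          rw [Finset.mul_sum]
  -- combine
  have hcardne : (Fintype.card (Fin n → ZMod 3) : ℂ) ≠ 0 := by
    simp [Fintype.card_ne_zero]
  have hzero : ∑ x, t x * u (x + τ) = 0 := by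
    have := h1.symm.trans h2
    exact (mul_eq_zero.mp this.symm).resolve_left hcardne
  have hzero2 : ∑ x, rterm m (f x - f (x + τ)) = 0 := by
    rw [← hzero]
    apply Finset.sum_congr rfl
    intro x _
    rw [rterm, ht, hu]
    simp only
    rw [← pow_val_add hm0 hζ1, sub_eq_add_neg]
  -- multiset
  set E : Multiset (ZMod m) := Multiset.map (fun x => f x - f (x + τ)) Finset.univ.val with hE
  have hEcard : Multiset.card E = Fintype.card (Fin n → ZMod 3) := by
    rw [hE, Multiset.card_map]
    rfl
  have hEsum : (E.map (rterm m)).sum = 0 := by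
    rw [hE, Multiset.map_map, ← hzero2]
    rfl
  have hGcard : Fintype.card (Fin n → ZMod 3) = 3 ^ n := by
    rw [Fintype.card_fun]
    simp
  obtain ⟨hV, _⟩ := VW m hodd h3
  have h9 : Multiset.card E ≤ 9 := by
    rw [hEcard, hGcard]
    rcases hn with rfl | rfl <;> norm_num
  have := hV E h9 hEsum
  rw [hEcard, hGcard] at this
  rcases hn with rfl | rfl <;> simp at this
end

section
/- Let m = 5m′ where m′ is a positive integer with 5 ∤ m′ and 11 ∣ m′, and let f : (ℤ/3ℤ)³ → ℤ/mℤ be a generalized bent function. Suppose x ∈ (ℤ/3ℤ)³, x ≠ 0, is such that there exist α, β, γ ∈ ℤ/mℤ with M_x(f) = D₅·α + D₁₁·β + D₁₁·γ (as multisets). Then β ≡ 0 (mod 5) and γ ≡ 0 (mod 5) under the reduction map ℤ/mℤ → ℤ/5ℤ; equivalently, the mod-5 counts satisfy N_x(0) = 23 and N_x(c) = 1 for every nonzero c ∈ ℤ/5ℤ. -/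
/-- Autocorrelation multiset of `f` at `x`: `{f(x+y) − f(y) : y ∈ G}` with multiplicity. -/
def autoM {G : Type*} [AddCommGroup G] [Fintype G] {m : ℕ} (f : G → ZMod m) (x : G) :
    Multiset (ZMod m) :=
  Finset.univ.val.map fun y => f (x + y) - f y

/-- The multiset `D_p·h = {h + j·(m/p) : j = 0, …, p−1}` in `ℤ/mℤ`. -/
def Dcoset (m p : ℕ) (h : ZMod m) : Multiset (ZMod m) :=
  (Multiset.range p).map fun j => h + ((j * (m / p) : ℕ) : ZMod m)


/-- `N_x(c)`: the number of `y ∈ G` with `f(x+y) − f(y) ≡ c (mod 5)`. -/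
def Ncount {G : Type*} [AddCommGroup G] [Fintype G] {m : ℕ}
    (f : G → ZMod m) (x : G) (c : ZMod 5) : ℕ :=
  (Finset.univ.filter fun y => (ZMod.cast (f (x + y) - f y) : ZMod 5) = c).card



section AuxGBF

lemma auxGBF_countA : ∀ (t w d : ZMod 5), w ≠ 0 →
    Multiset.card (Multiset.filter (fun j : ℕ => t + (j : ZMod 5) * w = d)
      (Multiset.range 5)) = 1 := by
  decide

lemma auxGBF_sum5 (g : ZMod 5 → ℕ) : (∑ e, g e) = g 0 + g 1 + g 2 + g 3 + g 4 := by
  show (∑ e : Fin 5, g e) = _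
  exact Fin.sum_univ_five g

lemma auxGBF_key (p : ZMod 5 → ZMod 5 → ℕ) (u v : ZMod 5)
    (h1 : ∀ d, p d 0 + p d 1 + p d 2 + p d 3 + p d 4
        = 1 + (if u = d then 11 else 0) + (if v = d then 11 else 0))
    (h2 : ∀ e, p 0 e + p 1 e + p 2 e + p 3 e + p 4 e
        = 1 + (if u = e then 11 else 0) + (if v = e then 11 else 0))
    (h3 : ∀ d e r : ZMod 5, d + e + r = 0 → p d e = p e r) :
    u = 0 ∧ v = 0 := by
  have a0 := h1 0
  have b0 := h2 0
  have a1 := h1 1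
  have b1 := h2 1
  have a2 := h1 2
  have b2 := h2 2
  have a3 := h1 3
  have b3 := h2 3
  have a4 := h1 4
  have b4 := h2 4
  have c00 := h3 0 0 0 (by decide)
  have c01 := h3 0 1 4 (by decide)
  have c02 := h3 0 2 3 (by decide)
  have c03 := h3 0 3 2 (by decide)
  have c04 := h3 0 4 1 (by decide)
  have c10 := h3 1 0 4 (by decide)
  have c11 := h3 1 1 3 (by decide)
  have c12 := h3 1 2 2 (by decide)
  have c13 := h3 1 3 1 (by decide)
  have c14 := h3 1 4 0 (by decide)
  have c20 := h3 2 0 3 (by decide)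
  have c21 := h3 2 1 2 (by decide)
  have c22 := h3 2 2 1 (by decide)
  have c23 := h3 2 3 0 (by decide)
  have c24 := h3 2 4 4 (by decide)
  have c30 := h3 3 0 2 (by decide)
  have c31 := h3 3 1 1 (by decide)
  have c32 := h3 3 2 0 (by decide)
  have c33 := h3 3 3 4 (by decide)
  have c34 := h3 3 4 3 (by decide)
  have c40 := h3 4 0 1 (by decide)
  have c41 := h3 4 1 0 (by decide)
  have c42 := h3 4 2 4 (by decide)
  have c43 := h3 4 3 3 (by decide)
  have c44 := h3 4 4 2 (by decide)
  have hu := (show ∀ w : ZMod 5, w = 0 ∨ w = 1 ∨ w = 2 ∨ w = 3 ∨ w = 4 by decide) u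
  have hv := (show ∀ w : ZMod 5, w = 0 ∨ w = 1 ∨ w = 2 ∨ w = 3 ∨ w = 4 by decide) v
  rcases hu with hu|hu|hu|hu|hu <;> rcases hv with hv|hv|hv|hv|hv <;> subst hu <;> subst hv <;>
    simp (config := { decide := true }) only [if_true, if_false] at a0 a1 a2 a3 a4 b0 b1 b2 b3 b4 <;>
    first | exact ⟨rfl, rfl⟩ | (exfalso; omega)

end AuxGBF

theorem autocorrelation_D5_D11_form_reduction (m' : ℕ) (hm' : 0 < m')
    (h5 : ¬ (5 ∣ m')) (h11 : 11 ∣ m')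
    (f : (Fin 3 → ZMod 3) → ZMod (5 * m')) (hf : IsGBF (5 * m') f)
    (x : Fin 3 → ZMod 3) (hx : x ≠ 0) (a b c : ZMod (5 * m'))
    (hform : autoM f x =
      Dcoset (5 * m') 5 a + Dcoset (5 * m') 11 b + Dcoset (5 * m') 11 c) :
    (ZMod.cast b : ZMod 5) = 0 ∧ (ZMod.cast c : ZMod 5) = 0 ∧
    Ncount f x 0 = 23 ∧ ∀ d : ZMod 5, d ≠ 0 → Ncount f x d = 1 := by
  have hdvd : (5:ℕ) ∣ 5 * m' := ⟨m', rfl⟩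
  set π : ZMod (5*m') →+* ZMod 5 := ZMod.castHom hdvd (ZMod 5) with hπ
  set δ : (Fin 3 → ZMod 3) → ZMod 5 := fun y => π (f (x+y) - f y) with hδ
  have hw : ((m' : ℕ) : ZMod 5) ≠ 0 := by
    simpa [ZMod.natCast_eq_zero_iff] using h5
  -- counts of the three D-blocks mod 5
  have hD5 : ∀ d, Multiset.countP (fun z => π z = d) (Dcoset (5*m') 5 a) = 1 := by
    intro d
    rw [Dcoset, Multiset.countP_map]
    rw [show (5*m')/5 = m' from Nat.mul_div_cancel_left m' (by norm_num)]
    simp only [map_add, map_natCast]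
    simp only [Nat.cast_mul]
    exact auxGBF_countA (π a) _ d hw
  have hzero : (((5*m')/11 : ℕ) : ZMod 5) = 0 := by
    obtain ⟨k, hk⟩ := h11
    subst hk
    rw [show (5*(11*k))/11 = 5 * k from by omega]
    rw [Nat.cast_mul, ZMod.natCast_self, zero_mul]
  have hD11 : ∀ (w : ZMod (5*m')) (d : ZMod 5),
      Multiset.countP (fun z => π z = d) (Dcoset (5*m') 11 w)
      = if π w = d then 11 else 0 := by
    intro w d
    rw [Dcoset, Multiset.countP_map]
    have hpred : ∀ j ∈ Multiset.range 11,
        (π (w + ((j * ((5*m')/11) : ℕ) : ZMod (5*m'))) = d) ↔ (π w = d) := by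
      intro j _
      rw [map_add, map_natCast, Nat.cast_mul, hzero, mul_zero, add_zero]
    rw [Multiset.filter_congr hpred]
    by_cases hbd : π w = d
    · rw [if_pos hbd, Multiset.filter_eq_self.mpr (fun j _ => hbd), Multiset.card_range]
    · rw [if_neg hbd, Multiset.filter_eq_nil.mpr (fun j _ => hbd), Multiset.card_zero]
  -- the counts N(d)
  have hNd : ∀ d : ZMod 5, (Finset.univ.filter fun y => δ y = d).card
      = 1 + (if π b = d then 11 else 0) + (if π c = d then 11 else 0) := by
    intro d
    have e1 : (Finset.univ.filter fun y => δ y = d).card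
        = Multiset.countP (fun z => π z = d) (autoM f x) := by
      rw [autoM, Multiset.countP_map, hδ]
      rfl
    rw [e1, hform, Multiset.countP_add, Multiset.countP_add, hD5 d, hD11 b d, hD11 c d]
  -- basic structure of x-translates
  have hx3 : x + x + x = 0 := by
    funext i
    show x i + x i + x i = 0
    have h3xi : x i + x i + x i = 3 * x i := by ring
    rw [h3xi, show (3 : ZMod 3) = 0 from by decide, zero_mul]
  have hxy : ∀ y, x + (x + (x + y)) = y := by
    intro y
    rw [show x + (x + (x + y)) = (x + x + x) + y from by abel, hx3, zero_add]
  have htri : ∀ y, δ y + δ (x+y) + δ (x+(x+y)) = 0 := by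
    intro y
    show π _ + π _ + π _ = 0
    rw [← map_add, ← map_add, hxy y]
    rw [show f (x+y) - f y + (f (x+(x+y)) - f (x+y)) + (f y - f (x+(x+y))) = 0 from by ring,
      map_zero]
  -- the pair-count matrix
  set p : ZMod 5 → ZMod 5 → ℕ := fun d e =>
    (Finset.univ.filter fun y => δ y = d ∧ δ (x+y) = e).card with hp
  have h3 : ∀ d e r : ZMod 5, d + e + r = 0 → p d e = p e r := by
    intro d e r h
    apply Finset.card_bij' (fun y _ => x + y) (fun y _ => x + (x + y))
    · intro y hy
      simp only [Finset.mem_filter, Finset.mem_univ, true_and] at hy ⊢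
      refine ⟨hy.2, ?_⟩
      have h2 := htri y
      rw [hy.1, hy.2] at h2
      exact add_left_cancel (h2.trans h.symm)
    · intro y hy
      simp only [Finset.mem_filter, Finset.mem_univ, true_and] at hy ⊢
      constructor
      · have h2 := htri y
        rw [hy.1, hy.2] at h2
        have h4 : e + r + δ (x+(x+y)) = e + r + d := by
          rw [h2, show e + r + d = d + e + r from by ring, h]
        exact add_left_cancel h4
      · rw [hxy y]
        exact hy.1
    · intro y _; exact hxy y
    · intro y _; exact hxy y
  have hshift : ∀ (q : ZMod 5 → Prop) [DecidablePred q],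
      (Finset.univ.filter fun y => q (δ (x+y))).card
        = (Finset.univ.filter fun y => q (δ y)).card := by
    intro q _
    apply Finset.card_bij' (fun y _ => x + y) (fun y _ => x + (x + y))
    · intro y hy
      simp only [Finset.mem_filter, Finset.mem_univ, true_and] at hy ⊢
      exact hy
    · intro y hy
      simp only [Finset.mem_filter, Finset.mem_univ, true_and] at hy ⊢
      rw [hxy y]; exact hy
    · intro y _; exact hxy y
    · intro y _; exact hxy y
  have hrow : ∀ d, (Finset.univ.filter fun y => δ y = d).card = ∑ e, p d e := by
    intro d
    rw [Finset.card_eq_sum_card_fiberwise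
      (f := fun y => δ (x+y)) (t := Finset.univ) (fun y _ => Finset.mem_univ _)]
    apply Finset.sum_congr rfl
    intro e _
    rw [Finset.filter_filter]
  have hcol : ∀ e, (Finset.univ.filter fun y => δ y = e).card = ∑ d, p d e := by
    intro e
    rw [← hshift (fun w => w = e)]
    rw [Finset.card_eq_sum_card_fiberwise
      (f := fun y => δ y) (t := Finset.univ) (fun y _ => Finset.mem_univ _)]
    apply Finset.sum_congr rfl
    intro d _
    rw [Finset.filter_filter]
    congr 1
    exact Finset.filter_congr (fun y _ => and_comm)
  -- apply the key combinatorial lemma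
  have hkey : π b = 0 ∧ π c = 0 := by
    apply auxGBF_key p (π b) (π c) ?_ ?_ h3
    · intro d
      rw [← auxGBF_sum5 (fun e => p d e), ← hrow d, hNd d]
    · intro e
      rw [← auxGBF_sum5 (fun d => p d e), ← hcol e, hNd e]
  obtain ⟨hb, hc⟩ := hkey
  -- Ncount in terms of the filter cards
  have hNc : ∀ d, Ncount f x d = (Finset.univ.filter fun y => δ y = d).card := by
    intro d
    rw [Ncount, hδ]
    simp only [hπ, ZMod.castHom_apply]
  have hb' : (ZMod.cast b : ZMod 5) = 0 := by rwa [hπ, ZMod.castHom_apply] at hb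
  have hc' : (ZMod.cast c : ZMod 5) = 0 := by rwa [hπ, ZMod.castHom_apply] at hc
  refine ⟨hb', hc', ?_, ?_⟩
  · rw [hNc 0, hNd 0, hb, hc, if_pos rfl]
  · intro d hd
    rw [hNc d, hNd d, hb, hc, if_neg (fun h => hd h.symm)]
end

section
/- Let m = 5m′ where m′ is a positive integer with 5 ∤ m′, and let f : (ℤ/3ℤ)³ → ℤ/mℤ be a generalized bent function. Suppose x ∈ (ℤ/3ℤ)³, x ≠ 0, is such that the mod-5 counts satisfy N_x(0) = 23 and N_x(c) = 1 for every nonzero c ∈ ℤ/5ℤ, and let H be a subgroup of (ℤ/3ℤ)³ of order 9 with x ∉ H. Then there exists e ∈ H with e ≠ 0 such that at least one of the two integer-valued functions on ℤ/5ℤ, c ↦ N_e(c) − N_{e+2x}(c) and c ↦ N_{e+x}(c) − N_{e+2x}(c), is not identically zero, and every value taken by these two functions lies in {−1, 0, 1}. -/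
/- ===== auxiliary material ===== -/

abbrev GG := Fin 3 → ZMod 3

lemma GG.char3 : (3 : GG) = 0 := by decide

def Fm (m' : ℕ) (f : GG → ZMod (5 * m')) : GG → ZMod 5 :=
  fun y => ZMod.castHom (dvd_mul_right 5 m') (ZMod 5) (f y)

def vv (m' : ℕ) (f : GG → ZMod (5 * m')) (u : GG) (y : GG) : ZMod 5 :=
  Fm m' f (u + y) - Fm m' f y

lemma castSub5 (m' : ℕ) (f : GG → ZMod (5*m')) (u y : GG) :
    (ZMod.cast (f (u + y) - f y) : ZMod 5) = vv m' f u y := by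
  unfold vv Fm
  rw [show ((ZMod.cast (f (u+y) - f y)) : ZMod 5)
        = ZMod.castHom (dvd_mul_right 5 m') (ZMod 5) (f (u+y) - f y)
      from (ZMod.castHom_apply _).symm, map_sub]

lemma Ncount_eq (m' : ℕ) (f : GG → ZMod (5 * m')) (u : GG) (c : ZMod 5) :
    (Ncount f u c : ℤ) = ∑ y : GG, (if vv m' f u y = c then (1:ℤ) else 0) := by
  unfold Ncount
  rw [Finset.card_filter, Nat.cast_sum]
  refine Finset.sum_congr rfl fun y _ => ?_
  rw [castSub5 m' f u y]
  split_ifs <;> simp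

lemma N_ex (m' : ℕ) (f : GG → ZMod (5 * m')) (e x : GG) (c : ZMod 5) :
    (Ncount f (e + x) c : ℤ) =
      ∑ z : GG, (if vv m' f e z + vv m' f x (x + x + z) = c then (1:ℤ) else 0) := by
  rw [Ncount_eq m' f (e + x) c]
  refine Fintype.sum_equiv (Equiv.addLeft x) _ _ fun y => ?_
  simp only [vv, Equiv.coe_addLeft]
  have h1 : x + x + (x + y) = y := by linear_combination x * GG.char3
  have h2 : e + (x + y) = e + x + y := (add_assoc e x y).symm
  simp only [h1, h2]
  have h3 : Fm m' f (e + x + y) - Fm m' f (x + y) + (Fm m' f (x + y) - Fm m' f y)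
      = Fm m' f (e + x + y) - Fm m' f y := by ring
  simp only [h3]
  exact if_congr Iff.rfl rfl rfl

lemma N_e2x (m' : ℕ) (f : GG → ZMod (5 * m')) (e x : GG) (c : ZMod 5) :
    (Ncount f (e + x + x) c : ℤ) =
      ∑ z : GG, (if vv m' f e z - vv m' f x z = c then (1:ℤ) else 0) := by
  rw [Ncount_eq m' f (e + x + x) c]
  refine Fintype.sum_equiv (Equiv.addLeft (x + x)) _ _ fun y => ?_
  simp only [vv, Equiv.coe_addLeft]
  have h1 : x + (x + x + y) = y := by linear_combination x * GG.char3
  have h2 : e + (x + x + y) = e + x + x + y := by abel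
  simp only [h1, h2]
  have h3 : Fm m' f (e + x + x + y) - Fm m' f (x + x + y) - (Fm m' f y - Fm m' f (x + x + y))
      = Fm m' f (e + x + x + y) - Fm m' f y := by ring
  simp only [h3]
  exact if_congr Iff.rfl rfl rfl

def Dex (wa wax c1 c : ZMod 5) : ℤ :=
  ((if wa = c then (1:ℤ) else 0) - (if wa - c1 = c then 1 else 0)) +
  ((if wax = c then (1:ℤ) else 0) - (if wax + c1 = c then 1 else 0))

def Dex' (wa wa2 c1 c : ZMod 5) : ℤ :=
  ((if wa = c then (1:ℤ) else 0) - (if wa - c1 = c then 1 else 0)) +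
  ((if wa2 - c1 = c then (1:ℤ) else 0) - (if wa2 = c then 1 else 0))

lemma key0 : ∀ A c1 c2 : ZMod 5, (c1 = 1 ∨ c1 = 4) → (c2 = 2 ∨ c2 = 3) →
    ((∃ c, Dex A (A + c2 - c1) c1 c ≠ 0) ∨ (∃ c, Dex' A A c1 c ≠ 0)) ∧
    ∀ c, (Dex A (A + c2 - c1) c1 c = -1 ∨ Dex A (A + c2 - c1) c1 c = 0 ∨ Dex A (A + c2 - c1) c1 c = 1) ∧
         (Dex' A A c1 c = -1 ∨ Dex' A A c1 c = 0 ∨ Dex' A A c1 c = 1) := by decide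

lemma key1 : ∀ A c1 c2 : ZMod 5, (c1 = 1 ∨ c1 = 4) → (c2 = 2 ∨ c2 = 3) →
    ((∃ c, Dex (A + c2) (A - c1) c1 c ≠ 0) ∨ (∃ c, Dex' (A + c2) A c1 c ≠ 0)) ∧
    ∀ c, (Dex (A + c2) (A - c1) c1 c = -1 ∨ Dex (A + c2) (A - c1) c1 c = 0 ∨ Dex (A + c2) (A - c1) c1 c = 1) ∧
         (Dex' (A + c2) A c1 c = -1 ∨ Dex' (A + c2) A c1 c = 0 ∨ Dex' (A + c2) A c1 c = 1) := by decide

lemma key2 : ∀ A c1 c2 : ZMod 5, (c1 = 1 ∨ c1 = 4) → (c2 = 2 ∨ c2 = 3) →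
    ((∃ c, Dex A (A - c1) c1 c ≠ 0) ∨ (∃ c, Dex' A (A + c2) c1 c ≠ 0)) ∧
    ∀ c, (Dex A (A - c1) c1 c = -1 ∨ Dex A (A - c1) c1 c = 0 ∨ Dex A (A - c1) c1 c = 1) ∧
         (Dex' A (A + c2) c1 c = -1 ∨ Dex' A (A + c2) c1 c = 0 ∨ Dex' A (A + c2) c1 c = 1) := by decide

lemma orbit15 (s t : ZMod 5) (hs : s ≠ 1) (ht : t ≠ 1) (hst : s ≠ t) (h : 1 + s + t = 0) :
    (s = 0 ∧ t = 4) ∨ (s = 4 ∧ t = 0) := by revert s t; decide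

lemma orbit25 (s t : ZMod 5) (hs : s ≠ 2) (ht : t ≠ 2) (hst : s ≠ t) (h : 2 + s + t = 0) :
    (s = 0 ∧ t = 3) ∨ (s = 3 ∧ t = 0) := by revert s t; decide

lemma sq15 (s : ZMod 5) (h : 1 + s + s = 0) : s = 2 := by revert s; decide
lemma sq25 (s : ZMod 5) (h : 2 + s + s = 0) : s = 4 := by revert s; decide

lemma val4 (c c1 c2 : ZMod 5) (hc : c ≠ 0) (h1 : c1 = 1 ∨ c1 = 4) (h2 : c2 = 2 ∨ c2 = 3) :
    c = c1 ∨ c = -c1 ∨ c = c2 ∨ c = -c2 := by revert c c1 c2; decide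

lemma zfacts (c1 c2 : ZMod 5) (h1 : c1 = 1 ∨ c1 = 4) (h2 : c2 = 2 ∨ c2 = 3) :
    c1 ≠ 0 ∧ c2 ≠ 0 ∧ c1 ≠ c2 ∧ c1 ≠ -c2 ∧ (-c1) ≠ c2 ∧ (-c1) ≠ -c2 ∧ c2 ≠ -c2 ∧ c1 ≠ -c1 ∧
      (-c1) ≠ 0 ∧ (-c2) ≠ 0 := by revert c1 c2; decide

lemma deltas (m' : ℕ) (f : GG → ZMod (5 * m')) (x a b e : GG) (c1 c2 wa wax wa2 : ZMod 5)
    (hc1 : c1 = 1 ∨ c1 = 4) (hc2 : c2 = 2 ∨ c2 = 3)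
    (hva : vv m' f x a = c1) (hvax : vv m' f x (x + a) = -c1)
    (hvb : vv m' f x b = c2) (hvbx : vv m' f x (x + b) = -c2)
    (hv0 : ∀ z : GG, z ≠ a → z ≠ x + a → z ≠ b → z ≠ x + b → vv m' f x z = 0)
    (hwa : vv m' f e a = wa) (hwax : vv m' f e (x + a) = wax)
    (hwa2 : vv m' f e (x + x + a) = wa2)
    (hwb : Fm m' f (e + x + b) = Fm m' f (e + b))
    (hwb2 : Fm m' f (e + x + x + b) = Fm m' f (e + x + b)) :
    (∀ c : ZMod 5, (Ncount f e c : ℤ) - (Ncount f (e + x + x) c : ℤ) = Dex wa wax c1 c) ∧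
    (∀ c : ZMod 5, (Ncount f (e + x) c : ℤ) - (Ncount f (e + x + x) c : ℤ) = Dex' wa wa2 c1 c) := by
  obtain ⟨hz1, hz2, hz3, hz4, hz5, hz6, hz7, hz8, hz9, hz10⟩ := zfacts c1 c2 hc1 hc2
  have hco : ∀ y : GG, vv m' f x y + vv m' f x (x + y) + vv m' f x (x + x + y) = 0 := by
    intro y
    simp only [vv]
    have h1 : x + (x + y) = x + x + y := (add_assoc x x y).symm
    have h2 : x + (x + x + y) = y := by linear_combination x * GG.char3
    rw [h1, h2]; ring
  have hva2 : vv m' f x (x + x + a) = 0 := by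
    have := hco a; rw [hva, hvax] at this; linear_combination this
  have hvb2 : vv m' f x (x + x + b) = 0 := by
    have := hco b; rw [hvb, hvbx] at this; linear_combination this
  have hvne : ∀ (z z' : GG) (u u' : ZMod 5), vv m' f x z = u → vv m' f x z' = u' → u ≠ u' →
      z ≠ z' := fun z z' u u' h h' hne he => hne (by rw [← h, ← h', he])
  have d1 : a ≠ x + a := hvne _ _ _ _ hva hvax hz8
  have d2 : a ≠ x + x + a := hvne _ _ _ _ hva hva2 hz1
  have d3 : a ≠ b := hvne _ _ _ _ hva hvb hz3
  have d4 : a ≠ x + b := hvne _ _ _ _ hva hvbx hz4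
  have d5 : a ≠ x + x + b := hvne _ _ _ _ hva hvb2 hz1
  have d6 : x + a ≠ x + x + a := hvne _ _ _ _ hvax hva2 hz9
  have d7 : x + a ≠ b := hvne _ _ _ _ hvax hvb hz5
  have d8 : x + a ≠ x + b := hvne _ _ _ _ hvax hvbx hz6
  have d9 : x + a ≠ x + x + b := hvne _ _ _ _ hvax hvb2 hz9
  have d10 : x + x + a ≠ b := (hvne _ _ _ _ hvb hva2 hz2).symm
  have d11 : x + x + a ≠ x + b := (hvne _ _ _ _ hvbx hva2 hz10).symm
  have d12 : x + x + a ≠ x + x + b := fun h => d3 (by linear_combination h)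
  have d13 : b ≠ x + b := hvne _ _ _ _ hvb hvbx hz7
  have d14 : b ≠ x + x + b := hvne _ _ _ _ hvb hvb2 hz2
  have d15 : x + b ≠ x + x + b := hvne _ _ _ _ hvbx hvb2 hz10
  simp only [vv] at hva hvax hvb hvbx hva2 hvb2 hwa hwax hwa2
  simp only [← add_assoc] at hva hvax hvb hvbx hva2 hvb2 hwa hwax hwa2
  have hFbx : Fm m' f (x + b) = Fm m' f b + c2 := by linear_combination hvb
  have hFb2 : Fm m' f (x + x + b) = Fm m' f b := by linear_combination hvbx + hvb
  have hFax : Fm m' f (x + a) = Fm m' f a + c1 := by linear_combination hva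
  have hFa2 : Fm m' f (x + x + a) = Fm m' f a := by linear_combination hvax + hva
  constructor
  · intro c
    rw [Ncount_eq m' f e c, N_e2x m' f e x c, ← Finset.sum_sub_distrib]
    rw [← Finset.sum_subset (Finset.subset_univ ({a, x + a, b, x + b} : Finset GG))
      (fun z _ hz => by
        simp only [Finset.mem_insert, Finset.mem_singleton] at hz
        push_neg at hz
        rw [hv0 z hz.1 hz.2.1 hz.2.2.1 hz.2.2.2]
        simp)]
    rw [Finset.sum_insert (by simp [Finset.mem_insert, d1, d3, d4]),
        Finset.sum_insert (by simp [Finset.mem_insert, d7, d8]),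
        Finset.sum_insert (by simp [Finset.mem_singleton, d13]),
        Finset.sum_singleton]
    simp only [vv, ← add_assoc]
    simp only [hwa, hwax, hwb]
    simp only [hva, hvax, hvb, hvbx, hFax, hFa2, hFbx, hFb2]
    simp only [Dex]
    ring_nf
    by_cases hh : Fm m' f (e + b) - Fm m' f b = c <;> simp [hh]
  · intro c
    rw [N_ex m' f e x c, N_e2x m' f e x c, ← Finset.sum_sub_distrib]
    rw [← Finset.sum_subset
        (Finset.subset_univ ({a, x + a, x + x + a, b, x + b, x + x + b} : Finset GG))
      (fun z _ hz => by
        simp only [Finset.mem_insert, Finset.mem_singleton] at hz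
        push_neg at hz
        obtain ⟨e1, e2, e3, e4, e5, e6⟩ := hz
        have hvz : vv m' f x z = 0 := hv0 z e1 e2 e4 e5
        have hvz2 : vv m' f x (x + x + z) = 0 := by
          apply hv0
          · intro h; exact e2 (by linear_combination h - x * GG.char3)
          · intro h; exact e3 (by linear_combination h - x * GG.char3)
          · intro h; exact e5 (by linear_combination h - x * GG.char3)
          · intro h; exact e6 (by linear_combination h - x * GG.char3)
        rw [hvz, hvz2]
        simp)]
    rw [Finset.sum_insert (by simp [Finset.mem_insert, d1, d2, d3, d4, d5]),
        Finset.sum_insert (by simp [Finset.mem_insert, d6, d7, d8, d9]),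
        Finset.sum_insert (by simp [Finset.mem_insert, d10, d11, d12]),
        Finset.sum_insert (by simp [Finset.mem_insert, d13, d14]),
        Finset.sum_insert (by simp [Finset.mem_singleton, d15]),
        Finset.sum_singleton]
    simp only [vv, ← add_assoc]
    have harg1 : x + x + x + a = a := by linear_combination x * GG.char3
    have harg2 : x + x + x + x + a = x + a := by linear_combination x * GG.char3
    have harg3 : x + x + x + b = b := by linear_combination x * GG.char3
    have harg4 : x + x + x + x + b = x + b := by linear_combination x * GG.char3
    have harg5 : x + x + x + x + x + a = x + x + a := by linear_combination x * GG.char3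
    have harg6 : x + x + x + x + x + b = x + x + b := by linear_combination x * GG.char3
    simp only [harg5, harg6, harg1, harg2, harg3, harg4]
    simp only [hwa, hwax, hwa2, hwb2, hwb]
    simp only [hva, hvax, hvb, hvbx, hva2, hvb2, hFax, hFa2, hFbx, hFb2]
    simp only [Dex']
    ring_nf

lemma exists_rep (H : AddSubgroup GG) (hH : Nat.card H = 9) (x : GG) (hxH : x ∉ H) (d : GG) :
    d ∈ H ∨ x + d ∈ H ∨ x + x + d ∈ H := by
  classical
  by_contra hc
  push_neg at hc
  obtain ⟨h0, h1, h2⟩ := hc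
  have hQcard : Nat.card (GG ⧸ H) = 3 := by
    have hG : Nat.card GG = 27 := by
      rw [Nat.card_eq_fintype_card]
      rw [show Fintype.card GG = 27 from by decide]
    have := AddSubgroup.card_eq_card_quotient_mul_card_addSubgroup H
    rw [hG, hH] at this
    omega
  letI : Fintype (GG ⧸ H) := Fintype.ofFinite _
  have hQcard' : Fintype.card (GG ⧸ H) = 3 := by
    rw [← Nat.card_eq_fintype_card, hQcard]
  have k0 : ((d : GG) : GG ⧸ H) ≠ 0 := fun h => h0 ((QuotientAddGroup.eq_zero_iff d).mp h)
  have k1 : ((x + d : GG) : GG ⧸ H) ≠ 0 := fun h => h1 ((QuotientAddGroup.eq_zero_iff _).mp h)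
  have k2 : ((x + x + d : GG) : GG ⧸ H) ≠ 0 := fun h => h2 ((QuotientAddGroup.eq_zero_iff _).mp h)
  have kx : ((x : GG) : GG ⧸ H) ≠ 0 := fun h => hxH ((QuotientAddGroup.eq_zero_iff _).mp h)
  have kxx : ((x + x : GG) : GG ⧸ H) ≠ 0 := by
    intro h
    have hmem : x + x ∈ H := (QuotientAddGroup.eq_zero_iff _).mp h
    have : x ∈ H := by
      have hx4 : (x + x) + (x + x) = x := by linear_combination x * GG.char3
      have := AddSubgroup.add_mem H hmem hmem
      rwa [hx4] at this
    exact hxH this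
  have kd1 : ((d : GG) : GG ⧸ H) ≠ ((x + d : GG) : GG ⧸ H) := by
    rw [QuotientAddGroup.mk_add]
    intro h; exact kx (right_eq_add.mp h)
  have kd2 : ((d : GG) : GG ⧸ H) ≠ ((x + x + d : GG) : GG ⧸ H) := by
    rw [QuotientAddGroup.mk_add]
    intro h; exact kxx (right_eq_add.mp h)
  have kd12 : ((x + d : GG) : GG ⧸ H) ≠ ((x + x + d : GG) : GG ⧸ H) := by
    rw [show x + x + d = x + (x + d) from add_assoc x x d, QuotientAddGroup.mk_add]
    intro h; exact kx (right_eq_add.mp h)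
  have hcard4 : ({(0 : GG ⧸ H), ((d : GG) : GG ⧸ H), ((x + d : GG) : GG ⧸ H),
      ((x + x + d : GG) : GG ⧸ H)} : Finset (GG ⧸ H)).card = 4 := by
    rw [Finset.card_insert_of_notMem (by
          simp only [Finset.mem_insert, Finset.mem_singleton]
          push_neg
          exact ⟨Ne.symm k0, Ne.symm k1, Ne.symm k2⟩),
        Finset.card_insert_of_notMem (by
          simp only [Finset.mem_insert, Finset.mem_singleton]
          push_neg
          exact ⟨kd1, kd2⟩),
        Finset.card_insert_of_notMem (by simp only [Finset.mem_singleton]; exact kd12),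
        Finset.card_singleton]
  have hle := Finset.card_le_univ ({(0 : GG ⧸ H), ((d : GG) : GG ⧸ H), ((x + d : GG) : GG ⧸ H),
      ((x + x + d : GG) : GG ⧸ H)} : Finset (GG ⧸ H))
  rw [hcard4] at hle
  have hle2 : (Finset.univ : Finset (GG ⧸ H)).card = 3 := by rw [Finset.card_univ, hQcard']
  omega

theorem count_differences_small (m' : ℕ) (hm' : 0 < m') (h5 : ¬ (5 ∣ m'))
    (f : (Fin 3 → ZMod 3) → ZMod (5 * m')) (hf : IsGBF (5 * m') f)
    (x : Fin 3 → ZMod 3) (hx : x ≠ 0)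
    (h0 : Ncount f x 0 = 23) (h1 : ∀ c : ZMod 5, c ≠ 0 → Ncount f x c = 1)
    (H : AddSubgroup (Fin 3 → ZMod 3)) (hH : Nat.card H = 9) (hxH : x ∉ H) :
    ∃ e ∈ H, e ≠ 0 ∧
      ((∃ c : ZMod 5, (Ncount f e c : ℤ) - (Ncount f (e + x + x) c : ℤ) ≠ 0) ∨
       (∃ c : ZMod 5, (Ncount f (e + x) c : ℤ) - (Ncount f (e + x + x) c : ℤ) ≠ 0)) ∧
      ∀ c : ZMod 5,
        ((Ncount f e c : ℤ) - (Ncount f (e + x + x) c : ℤ)) ∈ ({-1, 0, 1} : Set ℤ) ∧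
        ((Ncount f (e + x) c : ℤ) - (Ncount f (e + x + x) c : ℤ)) ∈ ({-1, 0, 1} : Set ℤ) := by
  classical
  -- counting in terms of vv
  have hNv : ∀ c : ZMod 5, (Finset.univ.filter fun y => vv m' f x y = c).card = Ncount f x c := by
    intro c
    unfold Ncount
    apply congrArg
    apply Finset.filter_congr
    intro y _
    rw [castSub5 m' f x y]
  have hexu : ∀ c : ZMod 5, c ≠ 0 →
      ∃ z : GG, vv m' f x z = c ∧ ∀ z', vv m' f x z' = c → z' = z := by
    intro c hc
    have h := h1 c hc
    rw [← hNv c] at h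
    obtain ⟨z, hz⟩ := Finset.card_eq_one.mp h
    refine ⟨z, ?_, ?_⟩
    · have : z ∈ Finset.univ.filter fun y => vv m' f x y = c := by
        rw [hz]; exact Finset.mem_singleton_self z
      exact (Finset.mem_filter.mp this).2
    · intro z' hz'
      have : z' ∈ Finset.univ.filter fun y => vv m' f x y = c :=
        Finset.mem_filter.mpr ⟨Finset.mem_univ _, hz'⟩
      rw [hz] at this
      exact Finset.mem_singleton.mp this
  have hco : ∀ y : GG, vv m' f x y + vv m' f x (x + y) + vv m' f x (x + x + y) = 0 := by
    intro y
    simp only [vv]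
    have ha1 : x + (x + y) = x + x + y := (add_assoc x x y).symm
    have ha2 : x + (x + x + y) = y := by linear_combination x * GG.char3
    rw [ha1, ha2]; ring
  -- construct a, c1
  obtain ⟨a1, hva1, hu1⟩ := hexu 1 (by decide)
  have hs1 : vv m' f x (x + a1) ≠ 1 := by
    intro h
    exact hx (by linear_combination hu1 (x + a1) h)
  have ht1 : vv m' f x (x + x + a1) ≠ 1 := by
    intro h
    exact hx (by linear_combination 2 * hu1 (x + x + a1) h - x * GG.char3)
  have hst1 : vv m' f x (x + a1) ≠ vv m' f x (x + x + a1) := by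
    intro h
    have hsum := hco a1
    rw [hva1, ← h] at hsum
    have h2 : vv m' f x (x + a1) = 2 := sq15 _ hsum
    obtain ⟨z2, hz2, hu2⟩ := hexu 2 (by decide)
    have e1 := hu2 _ h2
    have e2 := hu2 _ (by rw [← h]; exact h2)
    exact hx (by linear_combination e2 - e1)
  obtain ⟨a, c1, hc1, hva, hvax⟩ :
      ∃ a c1, (c1 = 1 ∨ c1 = 4) ∧ vv m' f x a = c1 ∧ vv m' f x (x + a) = -c1 := by
    rcases orbit15 _ _ hs1 ht1 hst1 (by have := hco a1; rw [hva1] at this; linear_combination this)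
      with ⟨hs0, ht4⟩ | ⟨hs4, ht0⟩
    · refine ⟨x + x + a1, 4, Or.inr rfl, ht4, ?_⟩
      rw [show x + (x + x + a1) = a1 from by linear_combination x * GG.char3, hva1]
      decide
    · refine ⟨a1, 1, Or.inl rfl, hva1, ?_⟩
      rw [hs4]; decide
  -- construct b, c2
  obtain ⟨b1, hvb1, hu2⟩ := hexu 2 (by decide)
  have hs2 : vv m' f x (x + b1) ≠ 2 := by
    intro h
    exact hx (by linear_combination hu2 (x + b1) h)
  have ht2 : vv m' f x (x + x + b1) ≠ 2 := by
    intro h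
    exact hx (by linear_combination 2 * hu2 (x + x + b1) h - x * GG.char3)
  have hst2 : vv m' f x (x + b1) ≠ vv m' f x (x + x + b1) := by
    intro h
    have hsum := hco b1
    rw [hvb1, ← h] at hsum
    have h2 : vv m' f x (x + b1) = 4 := sq25 _ hsum
    obtain ⟨z4, hz4, hu4⟩ := hexu 4 (by decide)
    have e1 := hu4 _ h2
    have e2 := hu4 _ (by rw [← h]; exact h2)
    exact hx (by linear_combination e2 - e1)
  obtain ⟨b, c2, hc2, hvb, hvbx⟩ :
      ∃ b c2, (c2 = 2 ∨ c2 = 3) ∧ vv m' f x b = c2 ∧ vv m' f x (x + b) = -c2 := by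
    rcases orbit25 _ _ hs2 ht2 hst2 (by have := hco b1; rw [hvb1] at this; linear_combination this)
      with ⟨hs0, ht3⟩ | ⟨hs3, ht0⟩
    · refine ⟨x + x + b1, 3, Or.inr rfl, ht3, ?_⟩
      rw [show x + (x + x + b1) = b1 from by linear_combination x * GG.char3, hvb1]
      decide
    · refine ⟨b1, 2, Or.inl rfl, hvb1, ?_⟩
      rw [hs3]; decide
  obtain ⟨hz1, hz2, hz3, hz4, hz5, hz6, hz7, hz8, hz9, hz10⟩ := zfacts c1 c2 hc1 hc2
  have hva2 : vv m' f x (x + x + a) = 0 := by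
    have := hco a; rw [hva, hvax] at this; linear_combination this
  -- support lemma
  have hv0 : ∀ z : GG, z ≠ a → z ≠ x + a → z ≠ b → z ≠ x + b → vv m' f x z = 0 := by
    intro z n1 n2 n3 n4
    by_contra hne
    rcases val4 _ c1 c2 hne hc1 hc2 with h | h | h | h
    · obtain ⟨z0, hz0, hu0⟩ := hexu c1 hz1
      exact n1 ((hu0 z h).trans (hu0 a hva).symm)
    · obtain ⟨z0, hz0, hu0⟩ := hexu (-c1) hz9
      exact n2 ((hu0 z h).trans (hu0 (x + a) hvax).symm)
    · obtain ⟨z0, hz0, hu0⟩ := hexu c2 hz2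
      exact n3 ((hu0 z h).trans (hu0 b hvb).symm)
    · obtain ⟨z0, hz0, hu0⟩ := hexu (-c2) hz10
      exact n4 ((hu0 z h).trans (hu0 (x + b) hvbx).symm)
  -- b not in the x-orbit of a
  have hvne : ∀ (z z' : GG) (u u' : ZMod 5), vv m' f x z = u → vv m' f x z' = u' → u ≠ u' →
      z ≠ z' := fun z z' u u' h h' hne he => hne (by rw [← h, ← h', he])
  have nba : b ≠ a := hvne _ _ _ _ hvb hva (Ne.symm hz3)
  have nbxa : b ≠ x + a := hvne _ _ _ _ hvb hvax (Ne.symm hz5)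
  have nbxxa : b ≠ x + x + a := hvne _ _ _ _ hvb hva2 hz2
  -- F-values
  have hva' := hva; have hvax' := hvax; have hvb' := hvb; have hvbx' := hvbx
  simp only [vv] at hva' hvax' hvb' hvbx'
  simp only [← add_assoc] at hva' hvax' hvb' hvbx'
  have hFax : Fm m' f (x + a) = Fm m' f a + c1 := by linear_combination hva'
  have hFa2 : Fm m' f (x + x + a) = Fm m' f a := by linear_combination hvax' + hva'
  have hFbx : Fm m' f (x + b) = Fm m' f b + c2 := by linear_combination hvb'
  have hFb2 : Fm m' f (x + x + b) = Fm m' f b := by linear_combination hvbx' + hvb'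
  -- good orbit P = b + b + a + a
  have vP0 : vv m' f x (b + b + a + a) = 0 :=
    hv0 _ (fun h => nba (by linear_combination 2 * h - (b + a) * GG.char3))
      (fun h => nbxxa (by linear_combination 2 * h - (b + a) * GG.char3))
      (fun h => nba (by linear_combination h - a * GG.char3))
      (fun h => nbxa (by linear_combination h - a * GG.char3))
  have vP1 : vv m' f x (x + (b + b + a + a)) = 0 :=
    hv0 _ (fun h => nbxa (by linear_combination 2 * h - (b + x + a) * GG.char3))
      (fun h => nba (by linear_combination 2 * h - (b + a) * GG.char3))
      (fun h => nbxxa (by linear_combination h - (x + a) * GG.char3))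
      (fun h => nba (by linear_combination h - a * GG.char3))
  have vP2 : vv m' f x (x + x + (b + b + a + a)) = 0 :=
    hv0 _ (fun h => nbxxa (by linear_combination 2 * h - (b + x + x + a) * GG.char3))
      (fun h => nbxa (by linear_combination 2 * h - (b + x + a) * GG.char3))
      (fun h => nbxa (by linear_combination h - (x + a) * GG.char3))
      (fun h => nbxxa (by linear_combination h - (x + a) * GG.char3))
  simp only [vv] at vP0 vP1 vP2
  have hFP1 : Fm m' f (x + (b + b + a + a)) = Fm m' f (b + b + a + a) := by
    linear_combination vP0
  have hFP2 : Fm m' f (x + x + (b + b + a + a)) = Fm m' f (x + (b + b + a + a)) := by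
    rw [show x + (x + (b + b + a + a)) = x + x + (b + b + a + a) from by ring] at vP1
    linear_combination vP1
  have hFP3 : Fm m' f (b + b + a + a) = Fm m' f (x + x + (b + b + a + a)) := by
    rw [show x + (x + x + (b + b + a + a)) = b + b + a + a from by
        linear_combination x * GG.char3] at vP2
    linear_combination vP2
  -- glue for the conclusion
  have assemble : ∀ e : GG, e ∈ H → e ≠ 0 → ∀ wa wax wa2 : ZMod 5,
      (∀ c : ZMod 5, (Ncount f e c : ℤ) - (Ncount f (e + x + x) c : ℤ) = Dex wa wax c1 c) →
      (∀ c : ZMod 5, (Ncount f (e + x) c : ℤ) - (Ncount f (e + x + x) c : ℤ) = Dex' wa wa2 c1 c) →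
      ((∃ c, Dex wa wax c1 c ≠ 0) ∨ (∃ c, Dex' wa wa2 c1 c ≠ 0)) →
      (∀ c, (Dex wa wax c1 c = -1 ∨ Dex wa wax c1 c = 0 ∨ Dex wa wax c1 c = 1) ∧
            (Dex' wa wa2 c1 c = -1 ∨ Dex' wa wa2 c1 c = 0 ∨ Dex' wa wa2 c1 c = 1)) →
      ∃ e ∈ H, e ≠ 0 ∧
        ((∃ c : ZMod 5, (Ncount f e c : ℤ) - (Ncount f (e + x + x) c : ℤ) ≠ 0) ∨
         (∃ c : ZMod 5, (Ncount f (e + x) c : ℤ) - (Ncount f (e + x + x) c : ℤ) ≠ 0)) ∧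
        ∀ c : ZMod 5,
          ((Ncount f e c : ℤ) - (Ncount f (e + x + x) c : ℤ)) ∈ ({-1, 0, 1} : Set ℤ) ∧
          ((Ncount f (e + x) c : ℤ) - (Ncount f (e + x + x) c : ℤ)) ∈ ({-1, 0, 1} : Set ℤ) := by
    intro e heH hene wa wax wa2 hd1 hd2 hex hbound
    refine ⟨e, heH, hene, ?_, ?_⟩
    · rcases hex with ⟨c0, hc0⟩ | ⟨c0, hc0⟩
      · exact Or.inl ⟨c0, by rw [hd1 c0]; exact hc0⟩
      · exact Or.inr ⟨c0, by rw [hd2 c0]; exact hc0⟩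
    · intro c
      obtain ⟨hb1, hb2⟩ := hbound c
      constructor
      · simp only [Set.mem_insert_iff, Set.mem_singleton_iff]
        rw [hd1 c]; exact hb1
      · simp only [Set.mem_insert_iff, Set.mem_singleton_iff]
        rw [hd2 c]; exact hb2
  -- find e in H
  rcases exists_rep H hH x hxH (b + a + a) with hmem | hmem | hmem
  · -- k = 0 : e = b + a + a
    have hene : b + a + a ≠ 0 := fun h => nba (by linear_combination h - a * GG.char3)
    obtain ⟨hd1, hd2⟩ := deltas m' f x a b (b + a + a) c1 c2
      (Fm m' f b - Fm m' f a) (Fm m' f b - Fm m' f a + c2 - c1) (Fm m' f b - Fm m' f a)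
      hc1 hc2 hva hvax hvb hvbx hv0
      (by simp only [vv]
          rw [show b + a + a + a = b from by linear_combination a * GG.char3])
      (by simp only [vv]
          rw [show b + a + a + (x + a) = x + b from by linear_combination a * GG.char3,
            hFbx, hFax]
          ring)
      (by simp only [vv]
          rw [show b + a + a + (x + x + a) = x + x + b from by linear_combination a * GG.char3,
            hFb2, hFa2])
      (by rw [show b + a + a + x + b = x + (b + b + a + a) from by ring,
            show b + a + a + b = b + b + a + a from by ring]
          exact hFP1)
      (by rw [show b + a + a + x + x + b = x + x + (b + b + a + a) from by ring,
            show b + a + a + x + b = x + (b + b + a + a) from by ring]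
          exact hFP2)
    exact assemble _ hmem hene _ _ _ hd1 hd2
      (key0 (Fm m' f b - Fm m' f a) c1 c2 hc1 hc2).1 (key0 (Fm m' f b - Fm m' f a) c1 c2 hc1 hc2).2
  · -- k = 1 : e = x + (b + a + a)
    have hene : x + (b + a + a) ≠ 0 := fun h =>
      nbxxa (by linear_combination h - (x + a) * GG.char3)
    obtain ⟨hd1, hd2⟩ := deltas m' f x a b (x + (b + a + a)) c1 c2
      (Fm m' f b - Fm m' f a + c2) (Fm m' f b - Fm m' f a - c1) (Fm m' f b - Fm m' f a)
      hc1 hc2 hva hvax hvb hvbx hv0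
      (by simp only [vv]
          rw [show x + (b + a + a) + a = x + b from by linear_combination a * GG.char3, hFbx]
          ring)
      (by simp only [vv]
          rw [show x + (b + a + a) + (x + a) = x + x + b from by linear_combination a * GG.char3,
            hFb2, hFax]
          ring)
      (by simp only [vv]
          rw [show x + (b + a + a) + (x + x + a) = b from by
              linear_combination (x + a) * GG.char3, hFa2])
      (by rw [show x + (b + a + a) + x + b = x + x + (b + b + a + a) from by ring,
            show x + (b + a + a) + b = x + (b + b + a + a) from by ring]
          exact hFP2)
      (by rw [show x + (b + a + a) + x + x + b = b + b + a + a from by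
              linear_combination x * GG.char3,
            show x + (b + a + a) + x + b = x + x + (b + b + a + a) from by ring]
          exact hFP3)
    exact assemble _ hmem hene _ _ _ hd1 hd2
      (key1 (Fm m' f b - Fm m' f a) c1 c2 hc1 hc2).1 (key1 (Fm m' f b - Fm m' f a) c1 c2 hc1 hc2).2
  · -- k = 2 : e = x + x + (b + a + a)
    have hene : x + x + (b + a + a) ≠ 0 := fun h =>
      nbxa (by linear_combination h - (x + a) * GG.char3)
    obtain ⟨hd1, hd2⟩ := deltas m' f x a b (x + x + (b + a + a)) c1 c2
      (Fm m' f b - Fm m' f a) (Fm m' f b - Fm m' f a - c1) (Fm m' f b - Fm m' f a + c2)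
      hc1 hc2 hva hvax hvb hvbx hv0
      (by simp only [vv]
          rw [show x + x + (b + a + a) + a = x + x + b from by linear_combination a * GG.char3,
            hFb2])
      (by simp only [vv]
          rw [show x + x + (b + a + a) + (x + a) = b from by
              linear_combination (x + a) * GG.char3, hFax]
          ring)
      (by simp only [vv]
          rw [show x + x + (b + a + a) + (x + x + a) = x + b from by
              linear_combination (x + a) * GG.char3, hFbx, hFa2]
          ring)
      (by rw [show x + x + (b + a + a) + x + b = b + b + a + a from by
              linear_combination x * GG.char3,
            show x + x + (b + a + a) + b = x + x + (b + b + a + a) from by ring]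
          exact hFP3)
      (by rw [show x + x + (b + a + a) + x + x + b = x + (b + b + a + a) from by
              linear_combination x * GG.char3,
            show x + x + (b + a + a) + x + b = b + b + a + a from by
              linear_combination x * GG.char3]
          exact hFP1)
    exact assemble _ hmem hene _ _ _ hd1 hd2
      (key2 (Fm m' f b - Fm m' f a) c1 c2 hc1 hc2).1 (key2 (Fm m' f b - Fm m' f a) c1 c2 hc1 hc2).2
end

section
/- For all positive integers n and k, there does not exist a generalized bent function f : (ℤ/3ℤ)^n → ℤ/2^kℤ. -/
lemma zetaC_double_sq (m : ℕ) (hm : m ≠ 0) : zetaC (2 * m) ^ 2 = zetaC m := by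
  rw [zetaC, zetaC, ← Complex.exp_nat_mul]
  congr 1
  have hm' : (m : ℂ) ≠ 0 := Nat.cast_ne_zero.mpr hm
  push_cast
  field_simp

lemma zetaC_double_pow (m : ℕ) (hm : m ≠ 0) : zetaC (2 * m) ^ m = -1 := by
  rw [zetaC, ← Complex.exp_nat_mul]
  have hm' : (m : ℂ) ≠ 0 := Nat.cast_ne_zero.mpr hm
  have harg : (m : ℂ) * (2 * Real.pi * Complex.I / ((2 * m : ℕ) : ℂ)) =
      Real.pi * Complex.I := by
    push_cast
    field_simp
  rw [harg]
  exact Complex.exp_pi_mul_I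

lemma zetaC_ne_one {m : ℕ} (hm : 2 ≤ m) : zetaC m ≠ 1 := by
  intro h
  rw [zetaC, Complex.exp_eq_one_iff] at h
  obtain ⟨j, hj⟩ := h
  have hne : (2 * Real.pi * Complex.I) ≠ 0 := by
    simp [Real.pi_ne_zero, Complex.I_ne_zero]
  have hm' : (m : ℂ) ≠ 0 := Nat.cast_ne_zero.mpr (by omega)
  rw [div_eq_iff hm'] at hj
  have h1 : (2 * (Real.pi:ℂ) * Complex.I) * 1 = (2 * (Real.pi:ℂ) * Complex.I) * ((j:ℂ) * m) := by
    linear_combination hj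
  have h2 : (1 : ℂ) = (j:ℂ) * (m:ℂ) := mul_left_cancel₀ hne h1
  have h3 : (1 : ℤ) = j * (m:ℤ) := by exact_mod_cast h2
  have h4 : (m:ℤ) ∣ 1 := ⟨j, by linarith⟩
  have h5 := Int.le_of_dvd one_pos h4
  omega

lemma isIntegral_of_pow_eq_one {z : ℂ} {r : ℕ} (hr : r ≠ 0) (h : z ^ r = 1) :
    IsIntegral ℤ z := by
  refine ⟨Polynomial.X ^ r - Polynomial.C 1, Polynomial.monic_X_pow_sub_C 1 hr, ?_⟩
  simp [h]

lemma not_isIntegral_half : ¬ IsIntegral ℤ ((2 : ℂ)⁻¹) := by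
  intro h
  have h2 : ((2 : ℂ)⁻¹) = algebraMap ℚ ℂ ((2 : ℚ)⁻¹) := by
    push_cast
    norm_num
  rw [h2, isIntegral_algebraMap_iff (algebraMap ℚ ℂ).injective] at h
  obtain ⟨y, hy⟩ := IsIntegrallyClosed.isIntegral_iff.mp h
  rw [algebraMap_int_eq] at hy
  have hy' : (y : ℚ) = 2⁻¹ := hy
  have h1 : (2 : ℚ) * (y : ℚ) = 1 := by rw [hy']; norm_num
  have h2 : (2 : ℤ) * y = 1 := by exact_mod_cast h1
  omega

/-- Key lemma: `(1 - ζ_{2^k})⁻¹` is not an algebraic integer. -/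
lemma key_not_integral : ∀ k : ℕ, 0 < k → ¬ IsIntegral ℤ ((1 - zetaC (2 ^ k))⁻¹) := by
  intro k
  induction k with
  | zero => omega
  | succ k ih =>
    intro _ hw
    rcases Nat.eq_zero_or_pos k with rfl | hk'
    · -- base case : zetaC 2 = -1
      have h2 : zetaC 2 = -1 := by
        have := zetaC_double_pow 1 one_ne_zero
        simpa using this
      rw [pow_one, h2] at hw
      rw [show ((1:ℂ) - -1)⁻¹ = (2:ℂ)⁻¹ by norm_num] at hw
      exact not_isIntegral_half hw
    · -- inductive step
      set ζ := zetaC (2 ^ (k + 1)) with hζdef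
      have h2k1 : (2 : ℕ) ^ (k + 1) = 2 * 2 ^ k := by ring
      have hone : ζ ^ (2 ^ (k + 1)) = 1 := zetaC_pow_self _ (by positivity)
      have hneg : ζ ^ (2 ^ k) = -1 := by
        rw [hζdef, h2k1]; exact zetaC_double_pow _ (by positivity)
      have hsq : ζ ^ 2 = zetaC (2 ^ k) := by
        rw [hζdef, h2k1]; exact zetaC_double_sq _ (by positivity)
      have hζ1 : ζ ≠ 1 := zetaC_ne_one (by
        calc (2:ℕ) = 2 ^ 1 := (pow_one 2).symm
        _ ≤ 2 ^ (k+1) := Nat.pow_le_pow_right (by norm_num) (by omega))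
      have hζm1 : ζ ≠ -1 := by
        intro h
        have : zetaC (2 ^ k) = 1 := by rw [← hsq, h]; ring
        exact zetaC_ne_one (by
          calc (2:ℕ) = 2 ^ 1 := (pow_one 2).symm
          _ ≤ 2 ^ k := Nat.pow_le_pow_right (by norm_num) (by omega)) this
      have h1mζ : (1 : ℂ) - ζ ≠ 0 := fun h => hζ1 (by linear_combination -h)
      have h1pζ : (1 : ℂ) + ζ ≠ 0 := fun h => hζm1 (by linear_combination h)
      set j := 2 ^ k + 1 with hjdef
      have hζj : ζ ^ j = -ζ := by
        rw [hjdef, pow_succ, hneg]; ring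
      have hjj : j * j = 2 ^ (k + 1) * (2 ^ (k - 1) + 1) + 1 := by
        rw [hjdef]
        have : k - 1 + 1 = k := by omega
        have h2 : 2 ^ (k+1) * 2 ^ (k-1) = 2 ^ k * 2 ^ k := by
          rw [← pow_add, ← pow_add]; congr 1; omega
        nlinarith [h2]
      have hζjj : (ζ ^ j) ^ j = ζ := by
        rw [← pow_mul, hjj, pow_add, pow_mul, hone, one_pow, one_mul, pow_one]
      set e := ∑ i ∈ Finset.range j, (ζ ^ j) ^ i with hedef
      have hgeom : e * (ζ ^ j - 1) = (ζ ^ j) ^ j - 1 := geom_sum_mul (ζ ^ j) j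
      have he : e * (1 + ζ) = 1 - ζ := by
        rw [hζjj] at hgeom
        rw [hζj] at hgeom
        linear_combination -hgeom
      have heint : IsIntegral ℤ e := by
        apply IsIntegral.sum
        intro i _
        exact ((isIntegral_of_pow_eq_one (r := 2 ^ (k+1)) (by positivity) hone).pow j).pow i
      -- (1 - ζ^2)⁻¹ = e * ((1-ζ)⁻¹)^2
      have hinv : (1 - zetaC (2 ^ k))⁻¹ = e * ((1 - ζ)⁻¹) ^ 2 := by
        rw [← hsq]
        apply inv_eq_of_mul_eq_one_right
        have h1 : (1 - ζ ^ 2) = (1 - ζ) * (1 + ζ) := by ring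
        rw [h1]
        calc (1 - ζ) * (1 + ζ) * (e * ((1 - ζ)⁻¹) ^ 2)
            = (e * (1 + ζ)) * (1 - ζ) * ((1 - ζ)⁻¹) ^ 2 := by ring
          _ = (1 - ζ) * (1 - ζ) * ((1 - ζ)⁻¹) ^ 2 := by rw [he]
          _ = ((1 - ζ) * (1 - ζ)⁻¹) ^ 2 := by ring
          _ = 1 := by rw [mul_inv_cancel₀ h1mζ]; norm_num
      exact ih hk' (hinv ▸ heint.mul (hw.pow 2))

lemma one_sub_mul_prod (x : ℂ) : ∀ r : ℕ,
    (1 - x) * ∏ i ∈ Finset.range r, (1 + x ^ (2 ^ i)) = 1 - x ^ (2 ^ r)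
  | 0 => by simp
  | r + 1 => by
    rw [Finset.prod_range_succ, ← mul_assoc, one_sub_mul_prod x r, pow_succ, pow_mul]
    ring

lemma isIntegral_natCast_C (c : ℕ) : IsIntegral ℤ ((c : ℂ)) := by
  have := isIntegral_algebraMap (R := ℤ) (A := ℂ) (x := (c : ℤ))
  rw [algebraMap_int_eq] at this
  simpa using this

theorem no_gbf_two_pow (n k : ℕ) (hn : 0 < n) (hk : 0 < k) :
    ¬ ∃ f : (Fin n → ZMod 3) → ZMod (2 ^ k), IsGBF (2 ^ k) f := by
  rintro ⟨f, hf⟩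
  have hm0 : (2 : ℕ) ^ k ≠ 0 := by positivity
  have hζm : zetaC (2 ^ k) ^ (2 ^ k) = 1 := zetaC_pow_self _ hm0
  have hζint : IsIntegral ℤ (zetaC (2 ^ k)) := isIntegral_of_pow_eq_one hm0 hζm
  -- a nontrivial additive character of (ZMod 3)^n
  have hζ3 : zetaC 3 ^ 3 = 1 := zetaC_pow_self 3 (by norm_num)
  set ψ : AddChar (ZMod 3) ℂ := AddChar.zmodChar 3 hζ3 with hψ
  set χ : AddChar (Fin n → ZMod 3) ℂ :=
    ψ.compAddMonoidHom (Pi.evalAddMonoidHom (fun _ => ZMod 3) (⟨0, hn⟩ : Fin n)) with hχ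
  have hχval : χ (fun _ => 1) = zetaC 3 := by
    rw [hχ]
    show ψ ((fun _ => (1 : ZMod 3)) (⟨0, hn⟩ : Fin n)) = zetaC 3
    rw [hψ, AddChar.zmodChar_apply]
    norm_num [ZMod.val_one]
  have hχne : χ ≠ 0 := by
    intro h
    rw [h] at hχval
    exact zetaC_ne_one (m := 3) (by norm_num) (by simpa using hχval.symm)
  have hsum : ∑ x, χ x = 0 := AddChar.sum_eq_zero_iff_ne_zero.mpr hχne
  have hχint : ∀ x, IsIntegral ℤ (χ x) := by
    intro x
    refine isIntegral_of_pow_eq_one (r := 3) (by norm_num) ?_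
    rw [← AddChar.map_nsmul_eq_pow]
    have h30 : (3 : ℕ) • x = 0 := by
      funext i
      exact (by decide : ∀ a : ZMod 3, (3 : ℕ) • a = 0) (x i)
    rw [h30, AddChar.map_zero_eq_one]
  -- the character sum S and its absolute value
  have hcard : Fintype.card (Fin n → ZMod 3) = 3 ^ n := by
    simp [Fintype.card_fun]
  have hS := hf χ
  set S := ∑ x, zetaC (2 ^ k) ^ (f x).val * χ x with hSdef
  have hnormSq : Complex.normSq S = ((3 : ℝ)) ^ n := by
    rw [← Complex.sq_norm, hS, hcard]
    push_cast
    ring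
  have hSS : S * (starRingEnd ℂ) S = (3 : ℂ) ^ n := by
    rw [Complex.mul_conj, hnormSq]
    norm_cast
  -- S = (ζ - 1) * T
  set T := ∑ x, (∑ i ∈ Finset.range (f x).val, zetaC (2 ^ k) ^ i) * χ x with hTdef
  have hT : S = (zetaC (2 ^ k) - 1) * T := by
    have hterm : ∀ x : Fin n → ZMod 3,
        zetaC (2 ^ k) ^ (f x).val * χ x
          = (zetaC (2 ^ k) - 1) *
              ((∑ i ∈ Finset.range (f x).val, zetaC (2 ^ k) ^ i) * χ x) + χ x := by
      intro x
      have hg := geom_sum_mul (zetaC (2 ^ k)) (f x).val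
      linear_combination (-(χ x)) * hg
    calc S = ∑ x, ((zetaC (2 ^ k) - 1) *
              ((∑ i ∈ Finset.range (f x).val, zetaC (2 ^ k) ^ i) * χ x) + χ x) := by
            rw [hSdef]; exact Finset.sum_congr rfl fun x _ => hterm x
      _ = (zetaC (2 ^ k) - 1) * T := by
            rw [Finset.sum_add_distrib, hsum, add_zero, hTdef, Finset.mul_sum]
  -- integrality facts
  have hTint : IsIntegral ℤ T := by
    rw [hTdef]
    apply IsIntegral.sum
    intro x _
    exact (IsIntegral.sum _ fun i _ => hζint.pow i).mul (hχint x)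
  have hSint : IsIntegral ℤ S := by
    rw [hSdef]
    apply IsIntegral.sum
    intro x _
    exact (hζint.pow _).mul (hχint x)
  have hconjint : IsIntegral ℤ ((starRingEnd ℂ) S) := by
    have := hSint.map ((starRingEnd ℂ).toIntAlgHom)
    simpa [RingHom.toIntAlgHom_apply] using this
  have htint : IsIntegral ℤ (-(T * (starRingEnd ℂ) S)) := (hTint.mul hconjint).neg
  have h3n : (3 : ℂ) ^ n = (1 - zetaC (2 ^ k)) * (-(T * (starRingEnd ℂ) S)) := by
    linear_combination -hSS + ((starRingEnd ℂ) S) * hT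
  -- 2 = (1 - ζ) * B
  set B := ∏ i ∈ Finset.range (k - 1), (1 + zetaC (2 ^ k) ^ (2 ^ i)) with hBdef
  have hBint : IsIntegral ℤ B := by
    rw [hBdef]
    apply IsIntegral.prod
    intro i _
    exact isIntegral_one.add (hζint.pow _)
  have hζhalf : zetaC (2 ^ k) ^ (2 ^ (k - 1)) = -1 := by
    have hmm : (2 : ℕ) ^ k = 2 * 2 ^ (k - 1) := by
      conv_lhs => rw [show k = (k - 1) + 1 from by omega, pow_succ]
      exact Nat.mul_comm _ _
    rw [hmm]
    exact zetaC_double_pow _ (by positivity)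
  have hB2 : (1 - zetaC (2 ^ k)) * B = 2 := by
    rw [hBdef, one_sub_mul_prod (zetaC (2 ^ k)) (k - 1), hζhalf]
    norm_num
  -- 3 ^ n is odd
  obtain ⟨c, hc⟩ : Odd (3 ^ n) := Odd.pow (by decide)
  have hc' : ((3 : ℂ)) ^ n = 2 * (c : ℂ) + 1 := by exact_mod_cast hc
  have hwinv : (1 - zetaC (2 ^ k))⁻¹ = -(T * (starRingEnd ℂ) S) - (c : ℂ) * B := by
    apply inv_eq_of_mul_eq_one_right
    linear_combination -h3n - (c : ℂ) * hB2 + hc'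
  have hwint : IsIntegral ℤ ((1 - zetaC (2 ^ k))⁻¹) := by
    rw [hwinv]
    exact htint.sub ((isIntegral_natCast_C c).mul hBint)
  exact key_not_integral k hk hwint
end

section
/- Let n be a positive integer and let m′ be a positive odd integer not divisible by 3. If there exists a generalized bent function f : (ℤ/3ℤ)^n → ℤ/2m′ℤ, then m′ > 1 and, writing p₁ for the smallest prime divisor of m′, one has 3^n ≥ p₁ + 2. -/
open Finset Polynomial

private lemma abs_zetaC {k : ℕ} : ‖zetaC k‖ = 1 := by
  unfold zetaC
  rw [show (2 * (Real.pi : ℂ) * Complex.I / (k : ℂ))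
      = ((2 * Real.pi / k : ℝ) : ℂ) * Complex.I by push_cast; ring]
  exact Complex.norm_exp_ofReal_mul_I _

private lemma pow_mod_eq' {ξ : ℂ} {m : ℕ} (h : ξ ^ m = 1) (a : ℕ) :
    ξ ^ a = ξ ^ (a % m) := by
  conv_lhs => rw [← Nat.div_add_mod a m]
  rw [pow_add, pow_mul, h, one_pow, one_mul]

private lemma pow_congr' {ξ : ℂ} {m : ℕ} (h : ξ ^ m = 1) {a b : ℕ}
    (hab : a ≡ b [MOD m]) : ξ ^ a = ξ ^ b := by
  rw [pow_mod_eq' h a, pow_mod_eq' h b]; exact congrArg _ hab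

private lemma rel_pow {m : ℕ} (hm : 0 < m) {ξ : ℂ} (hξ : IsPrimitiveRoot ξ m)
    {c : ℕ → ℤ} (hrel : ∑ r ∈ Finset.range m, (c r : ℂ) * ξ ^ r = 0)
    {s : ℕ} (hs : s.Coprime m) :
    ∑ r ∈ Finset.range m, (c r : ℂ) * (ξ ^ s) ^ r = 0 := by
  set P : Polynomial ℚ := ∑ r ∈ Finset.range m, C (c r : ℚ) * X ^ r with hP
  have hev : ∀ z : ℂ, (aeval z) P = ∑ r ∈ Finset.range m, (c r : ℂ) * z ^ r := by
    intro z
    rw [hP, map_sum]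
    exact Finset.sum_congr rfl fun r _ => by simp
  have h1 : (aeval ξ) P = 0 := by rw [hev]; exact hrel
  have hdvd : minpoly ℚ ξ ∣ P := minpoly.dvd ℚ ξ h1
  have hprim' : IsPrimitiveRoot (ξ ^ s) m := hξ.pow_of_coprime s hs
  have e1 : Polynomial.cyclotomic m ℚ = minpoly ℚ ξ := Polynomial.cyclotomic_eq_minpoly_rat hξ hm
  have e2 : Polynomial.cyclotomic m ℚ = minpoly ℚ (ξ ^ s) :=
    Polynomial.cyclotomic_eq_minpoly_rat hprim' hm
  obtain ⟨Q, hQ⟩ := hdvd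
  have h2 : (aeval (ξ ^ s)) P = 0 := by
    rw [hQ, map_mul, ← e1, e2, minpoly.aeval, zero_mul]
  rw [hev] at h2; exact h2

private lemma geom_aux {w : ℂ} {p : ℕ} (hw : IsPrimitiveRoot w p) (a : ℕ) :
    ∑ k ∈ Finset.range p, (w ^ a) ^ k = if p ∣ a then (p : ℂ) else 0 := by
  by_cases h : p ∣ a
  · rw [if_pos h]
    have : w ^ a = 1 := (hw.pow_eq_one_iff_dvd a).2 h
    simp [this]
  · rw [if_neg h]
    have hne : w ^ a ≠ 1 := fun hh => h ((hw.pow_eq_one_iff_dvd a).1 hh)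
    rw [geom_sum_eq hne]
    have : (w ^ a) ^ p = 1 := by rw [← pow_mul, mul_comm, pow_mul, hw.pow_eq_one, one_pow]
    rw [this]; simp

private lemma coprime_of_modeq_one {a b n : ℕ} (h : a * b ≡ 1 [MOD n]) : b.Coprime n := by
  rcases Nat.eq_zero_or_pos n with rfl | hn
  · simp [Nat.ModEq] at h
    simp [Nat.coprime_zero_right, h.2]
  rw [Nat.coprime_iff_gcd_eq_one]
  by_contra hg
  set d := Nat.gcd b n with hd
  have hdb : d ∣ b := Nat.gcd_dvd_left b n
  have hdn : d ∣ n := Nat.gcd_dvd_right b n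
  have h1 : (n : ℤ) ∣ (1 : ℤ) - (a * b : ℕ) := (Nat.modEq_iff_dvd).1 h
  have h2 : (d : ℤ) ∣ (1 : ℤ) - (a * b : ℕ) := dvd_trans (Int.natCast_dvd_natCast.2 hdn) h1
  have h3 : (d : ℤ) ∣ ((a * b : ℕ) : ℤ) := Int.natCast_dvd_natCast.2 (hdb.mul_left a)
  have h4 : (d : ℤ) ∣ 1 := by
    have := dvd_add h2 h3
    simpa using this
  have h5 : d = 1 := by
    rcases Int.isUnit_iff.mp (isUnit_of_dvd_one h4) with h | h <;> omega
  exact hg h5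

private lemma sum_crt {M : Type*} [AddCommMonoid M] {p q : ℕ} (hp : 0 < p) (hq : 0 < q)
    (ρ : ℕ → ℕ → ℕ)
    (hρlt : ∀ u v, u < p → v < q → ρ u v < p * q)
    (hmodp : ∀ u v, u < p → v < q → ρ u v % p = u)
    (hmodq : ∀ u v, u < p → v < q → ρ u v % q = v)
    (huniq : ∀ r, r < p * q → ρ (r % p) (r % q) = r)
    (F : ℕ → M) :
    ∑ r ∈ Finset.range (p * q), F r = ∑ u ∈ Finset.range p, ∑ v ∈ Finset.range q, F (ρ u v) := by
  rw [← Finset.sum_product']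
  apply Finset.sum_bij' (i := fun r _ => ((r % p, r % q) : ℕ × ℕ))
    (j := fun uv _ => ρ uv.1 uv.2)
  · intro r hr
    simp only [Finset.mem_product, Finset.mem_range] at *
    exact ⟨Nat.mod_lt _ hp, Nat.mod_lt _ hq⟩
  · intro uv huv
    simp only [Finset.mem_product, Finset.mem_range] at *
    exact hρlt _ _ huv.1 huv.2
  · intro r hr
    exact huniq r (Finset.mem_range.1 hr)
  · intro uv huv
    simp only [Finset.mem_product, Finset.mem_range] at huv
    exact Prod.ext (hmodp _ _ huv.1 huv.2) (hmodq _ _ huv.1 huv.2)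
  · intro r hr
    rw [huniq r (Finset.mem_range.1 hr)]

private lemma vanishing (L : ℤ) :
    ∀ m : ℕ, 0 < m → ∀ ξ : ℂ, IsPrimitiveRoot ξ m → ∀ c : ℕ → ℤ,
      (∑ r ∈ Finset.range m, (c r : ℂ) * ξ ^ r) = 0 →
      (∑ r ∈ Finset.range m, |c r|) ≤ L →
      (∀ p : ℕ, p.Prime → p ∣ m → L < p) →
      ∀ r, r < m → c r = 0 := by
  intro m
  induction m using Nat.strong_induction_on with
  | _ m IH =>
  intro hm ξ hξ c hrel hl1 hprimes r hrm
  rcases eq_or_lt_of_le (show 1 ≤ m from hm) with hm1 | hm2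
  · -- m = 1
    have hm1 : m = 1 := hm1.symm
    subst hm1
    interval_cases r
    have : ((c 0 : ℂ)) = 0 := by simpa using hrel
    exact_mod_cast this
  · -- 1 < m
    set p := m.minFac with hpdef
    have hp : p.Prime := Nat.minFac_prime (by omega)
    have hppos := hp.pos
    have hpm : p ∣ m := Nat.minFac_dvd m
    set q := m / p with hqdef
    have hmeq : m = p * q := (Nat.mul_div_cancel' hpm).symm
    have hq : 0 < q := by
      rcases Nat.eq_zero_or_pos q with h | h
      · rw [h, mul_zero] at hmeq; omega
      · exact h
    have hqlt : q < m := by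
      have := hp.two_le
      calc q = m / p := rfl
        _ < m := Nat.div_lt_self hm (by omega)
    have hLp : L < p := hprimes p hp hpm
    have hL0 : (0 : ℤ) ≤ L :=
      le_trans (Finset.sum_nonneg fun r _ => abs_nonneg _) hl1
    have hξm : ξ ^ m = 1 := hξ.pow_eq_one
    have hθ : IsPrimitiveRoot (ξ ^ p) q := hξ.pow hm hmeq
    have hw : IsPrimitiveRoot (ξ ^ q) p := hξ.pow hm (by rw [hmeq, mul_comm])
    have hprimes' : ∀ p' : ℕ, p'.Prime → p' ∣ q → L < p' := fun p' h1 h2 =>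
      hprimes p' h1 (h2.trans (Nat.div_dvd_of_dvd hpm))
    set θ := ξ ^ p with hθdef
    set w := ξ ^ q with hwdef
    by_cases hpq : p ∣ q
    · -- Case A : p ∣ q
      have hall : ∀ k : ℕ, (1 + k * q).Coprime m := by
        intro k
        rw [Nat.coprime_iff_gcd_eq_one]
        by_contra hg
        set g := Nat.gcd (1 + k * q) m with hgdef
        have hgpos : 0 < g := Nat.gcd_pos_of_pos_right _ hm
        set t := g.minFac with ht
        have htp : t.Prime := Nat.minFac_prime hg
        have ht1 : t ∣ 1 + k * q := (Nat.minFac_dvd g).trans (Nat.gcd_dvd_left _ _)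
        have ht2 : t ∣ m := (Nat.minFac_dvd g).trans (Nat.gcd_dvd_right _ _)
        have htq : t ∣ q := by
          rcases (Nat.Prime.dvd_mul htp).1 (hmeq ▸ ht2) with h | h
          · exact ((Nat.prime_dvd_prime_iff_eq htp hp).1 h) ▸ hpq
          · exact h
        have : t ∣ 1 := by
          have h' : t ∣ k * q + 1 := by rwa [add_comm] at ht1
          exact (Nat.dvd_add_right (htq.mul_left k)).1 h'
        exact Nat.Prime.one_lt htp |>.ne' (Nat.dvd_one.1 this)
      have key : ∀ r₀, r₀ < p → ∑ j ∈ Finset.range q, (c (r₀ + p * j) : ℂ) * θ ^ j = 0 := by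
        intro r₀ hr₀
        -- the double sum is zero
        have h0 : ∑ r ∈ Finset.range m, ∑ k ∈ Finset.range p,
            w ^ (k * (p - r₀)) * ((c r : ℂ) * (ξ ^ (1 + k * q)) ^ r) = 0 := by
          rw [Finset.sum_comm]
          apply Finset.sum_eq_zero
          intro k _
          rw [← Finset.mul_sum, rel_pow hm hξ hrel (hall k), mul_zero]
        have h1 : ∀ r : ℕ, ∑ k ∈ Finset.range p,
            w ^ (k * (p - r₀)) * ((c r : ℂ) * (ξ ^ (1 + k * q)) ^ r)
            = (c r : ℂ) * ξ ^ r * (if p ∣ (p - r₀ + r) then (p : ℂ) else 0) := by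
          intro r
          rw [← geom_aux hw (p - r₀ + r), Finset.mul_sum]
          apply Finset.sum_congr rfl
          intro k _
          have e1 : w ^ (k * (p - r₀)) = ξ ^ (q * (k * (p - r₀))) := by
            rw [hwdef, ← pow_mul]
          have e2 : (ξ ^ (1 + k * q)) ^ r = ξ ^ ((1 + k * q) * r) := by rw [← pow_mul]
          have e3 : (w ^ (p - r₀ + r)) ^ k = ξ ^ (q * ((p - r₀ + r) * k)) := by
            rw [hwdef, ← pow_mul, ← pow_mul]
          rw [e1, e2, e3]
          have hexp : q * (k * (p - r₀)) + (1 + k * q) * r = r + q * ((p - r₀ + r) * k) := by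
            ring
          calc ξ ^ (q * (k * (p - r₀))) * ((c r : ℂ) * ξ ^ ((1 + k * q) * r))
              = (c r : ℂ) * ξ ^ (q * (k * (p - r₀)) + (1 + k * q) * r) := by
                rw [pow_add]; ring
            _ = (c r : ℂ) * ξ ^ r * ξ ^ (q * ((p - r₀ + r) * k)) := by
                rw [hexp, pow_add]; ring
        rw [Finset.sum_congr rfl (fun r _ => h1 r)] at h0
        -- extract the filtered sum
        have h2 : (p : ℂ) * ∑ r ∈ (Finset.range m).filter (fun r => p ∣ (p - r₀ + r)),
            (c r : ℂ) * ξ ^ r = 0 := by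
          calc (p : ℂ) * ∑ r ∈ (Finset.range m).filter (fun r => p ∣ (p - r₀ + r)),
              (c r : ℂ) * ξ ^ r
              = ∑ r ∈ Finset.range m,
                  (c r : ℂ) * ξ ^ r * (if p ∣ (p - r₀ + r) then (p : ℂ) else 0) := by
                rw [Finset.mul_sum, Finset.sum_filter]
                apply Finset.sum_congr rfl
                intro x _
                by_cases hd : p ∣ (p - r₀ + x)
                · rw [if_pos hd, if_pos hd]; ring
                · rw [if_neg hd, if_neg hd]; ring
            _ = 0 := h0
        have hpne : (p : ℂ) ≠ 0 := Nat.cast_ne_zero.2 hppos.ne'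
        have hfil : ∑ r ∈ (Finset.range m).filter (fun r => p ∣ (p - r₀ + r)),
            (c r : ℂ) * ξ ^ r = 0 := by
          rcases mul_eq_zero.1 h2 with h | h
          · exact absurd h hpne
          · exact h
        -- reindex the filter
        have h3 : ∑ r ∈ (Finset.range m).filter (fun r => p ∣ (p - r₀ + r)), (c r : ℂ) * ξ ^ r
            = ∑ j ∈ Finset.range q, (c (r₀ + p * j) : ℂ) * ξ ^ (r₀ + p * j) := by
          apply Finset.sum_bij' (i := fun r _ => (r - r₀) / p) (j := fun j _ => r₀ + p * j)
          · intro r hr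
            simp only [Finset.mem_filter, Finset.mem_range] at hr
            obtain ⟨hrm', k, hk⟩ := hr
            rw [Finset.mem_range]
            rcases k with _ | k
            · omega
            · have hmulk : p * (k + 1) = p * k + p := by ring
              have hk' : r = p * k + r₀ := by omega
              rw [hk', Nat.add_sub_cancel, Nat.mul_div_cancel_left _ hppos]
              by_contra hkq
              push_neg at hkq
              have : p * q ≤ p * k := Nat.mul_le_mul_left p hkq
              omega
          · intro j hj
            simp only [Finset.mem_range] at hj
            simp only [Finset.mem_filter, Finset.mem_range]
            constructor
            · have h1' : p * (j + 1) ≤ p * q := Nat.mul_le_mul_left p hj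
              have h2' : p * (j + 1) = p * j + p := by ring
              omega
            · have h2' : p * (1 + j) = p + p * j := by ring
              have : p - r₀ + (r₀ + p * j) = p * (1 + j) := by omega
              rw [this]; exact Dvd.intro _ rfl
          · intro r hr
            simp only [Finset.mem_filter, Finset.mem_range] at hr
            obtain ⟨hrm', k, hk⟩ := hr
            rcases k with _ | k
            · omega
            · have hmulk : p * (k + 1) = p * k + p := by ring
              have hk' : r = p * k + r₀ := by omega
              rw [hk', Nat.add_sub_cancel, Nat.mul_div_cancel_left _ hppos]
              omega
          · intro j hj
            rw [Nat.add_sub_cancel_left, Nat.mul_div_cancel_left _ hppos]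
          · intro r hr
            simp only [Finset.mem_filter, Finset.mem_range] at hr
            obtain ⟨hrm', k, hk⟩ := hr
            rcases k with _ | k
            · omega
            · have hmulk : p * (k + 1) = p * k + p := by ring
              have hk' : r = p * k + r₀ := by omega
              rw [hk', Nat.add_sub_cancel, Nat.mul_div_cancel_left _ hppos]
              rw [show r₀ + p * k = p * k + r₀ by ring]
        rw [h3] at hfil
        have h5 : ξ ^ r₀ * ∑ j ∈ Finset.range q, (c (r₀ + p * j) : ℂ) * θ ^ j = 0 := by
          rw [Finset.mul_sum, ← hfil]
          apply Finset.sum_congr rfl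
          intro j _
          rw [show r₀ + p * j = r₀ + p * j by rfl, pow_add, hθdef, ← pow_mul]
          ring
        rcases mul_eq_zero.1 h5 with h | h
        · exact absurd h (pow_ne_zero _ (hξ.ne_zero hm.ne'))
        · exact h
      -- ℓ¹ bound for subvectors and apply IH
      have hzero : ∀ r₀, r₀ < p → ∀ j, j < q → c (r₀ + p * j) = 0 := by
        intro r₀ hr₀ j hj
        have hinj : ∀ a ∈ Finset.range q, ∀ b ∈ Finset.range q,
            r₀ + p * a = r₀ + p * b → a = b := by
          intro a _ b _ hab
          have : p * a = p * b := by omega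
          exact Nat.eq_of_mul_eq_mul_left hppos this
        have hsub : ∑ j' ∈ Finset.range q, |c (r₀ + p * j')| ≤ L := by
          calc ∑ j' ∈ Finset.range q, |c (r₀ + p * j')|
              = ∑ r' ∈ (Finset.range q).image (fun j' => r₀ + p * j'), |c r'| := by
                rw [Finset.sum_image hinj]
            _ ≤ ∑ r' ∈ Finset.range m, |c r'| := by
                apply Finset.sum_le_sum_of_subset_of_nonneg
                · intro r' hr'
                  simp only [Finset.mem_image, Finset.mem_range] at hr' ⊢
                  obtain ⟨j', hj', rfl⟩ := hr'
                  have h1' : p * (j' + 1) ≤ p * q := Nat.mul_le_mul_left p hj'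
                  have h2' : p * (j' + 1) = p * j' + p := by ring
                  omega
                · intros; exact abs_nonneg _
            _ ≤ L := hl1
        exact IH q hqlt hq θ hθ (fun j' => c (r₀ + p * j')) (key r₀ hr₀) hsub hprimes' j hj
      have : c (r % p + p * (r / p)) = 0 := by
        apply hzero _ (Nat.mod_lt _ hppos)
        apply Nat.div_lt_of_lt_mul
        calc r < m := hrm
          _ = p * q := hmeq
      rwa [Nat.mod_add_div] at this
    · -- Case B : ¬ p ∣ q
      have hcop : p.Coprime q := (Nat.Prime.coprime_iff_not_dvd hp).2 hpq
      haveI : NeZero p := ⟨hppos.ne'⟩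
      haveI : NeZero q := ⟨hq.ne'⟩
      set qinv := ((q : ZMod p))⁻¹.val with hqinvdef
      set pinv := ((p : ZMod q))⁻¹.val with hpinvdef
      have hmodinv : ∀ (a b : ℕ), 0 < b → a.Coprime b →
          a * ((a : ZMod b))⁻¹.val ≡ 1 [MOD b] := by
        intro a b hb hab
        haveI : NeZero b := ⟨hb.ne'⟩
        have h1 : ((a : ZMod b)) * ((a : ZMod b))⁻¹ = 1 := ZMod.coe_mul_inv_eq_one a hab
        have h2 : ((a * ((a : ZMod b))⁻¹.val : ℕ) : ZMod b) = ((1 : ℕ) : ZMod b) := by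
          push_cast
          rw [ZMod.natCast_val, ZMod.cast_id]
          simpa using h1
        exact (ZMod.natCast_eq_natCast_iff _ _ _).1 h2
      have hα : q * qinv ≡ 1 [MOD p] := hmodinv q p hppos hcop.symm
      have hβ : p * pinv ≡ 1 [MOD q] := hmodinv p q hq hcop
      set α := q * qinv with hαdef
      set β := p * pinv with hβdef
      set W := ξ ^ α with hWdef
      set Θ := ξ ^ β with hΘdef2
      have hWw : W = w ^ qinv := by rw [hWdef, hwdef, ← pow_mul]
      have hΘθ : Θ = θ ^ pinv := by rw [hΘdef2, hθdef, ← pow_mul]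
      have hW : IsPrimitiveRoot W p := by
        rw [hWw]; exact hw.pow_of_coprime qinv (coprime_of_modeq_one hα)
      have hΘq : IsPrimitiveRoot Θ q := by
        rw [hΘθ]; exact hθ.pow_of_coprime pinv (coprime_of_modeq_one hβ)
      -- CRT data
      set st : ℕ → ℕ := fun t => (Nat.chineseRemainder hcop t 1).1 with hstdef
      have hstp : ∀ t, st t ≡ t [MOD p] := fun t => (Nat.chineseRemainder hcop t 1).2.1
      have hstq : ∀ t, st t ≡ 1 [MOD q] := fun t => (Nat.chineseRemainder hcop t 1).2.2
      have hstcop : ∀ t, 0 < t → t < p → (st t).Coprime m := by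
        intro t ht0 htp
        rw [Nat.coprime_iff_gcd_eq_one]
        by_contra hg
        have hup : (Nat.gcd (st t) m).minFac.Prime := Nat.minFac_prime hg
        have hu1 : (Nat.gcd (st t) m).minFac ∣ st t :=
          (Nat.minFac_dvd _).trans (Nat.gcd_dvd_left _ _)
        have hu2 : (Nat.gcd (st t) m).minFac ∣ m :=
          (Nat.minFac_dvd _).trans (Nat.gcd_dvd_right _ _)
        have hu3 : (Nat.gcd (st t) m).minFac ∣ p * q := by rw [← hmeq]; exact hu2
        rcases (Nat.Prime.dvd_mul hup).1 hu3 with h | h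
        · have hup' : (Nat.gcd (st t) m).minFac = p := (Nat.prime_dvd_prime_iff_eq hup hp).1 h
          have h1 : st t % p = 0 := Nat.mod_eq_zero_of_dvd (hup' ▸ hu1)
          have h2 : st t % p = t % p := hstp t
          have h3 : t % p = t := Nat.mod_eq_of_lt htp
          omega
        · have h1 : st t ≡ 1 [MOD (Nat.gcd (st t) m).minFac] := (hstq t).of_dvd h
          have h2 : st t % (Nat.gcd (st t) m).minFac = 0 := Nat.mod_eq_zero_of_dvd hu1
          have h3 : (1 : ℕ) % (Nat.gcd (st t) m).minFac = 1 := Nat.mod_eq_of_lt hup.one_lt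
          have h4 : st t % (Nat.gcd (st t) m).minFac
              = 1 % (Nat.gcd (st t) m).minFac := h1
          omega
      set ρ : ℕ → ℕ → ℕ := fun u v => (Nat.chineseRemainder hcop u v).1 % m with hρdef
      have hqm : q ∣ m := ⟨p, by rw [hmeq]; ring⟩
      have hρlt : ∀ u v, ρ u v < m := fun u v => Nat.mod_lt _ hm
      have hρp : ∀ u v, u < p → ρ u v % p = u := by
        intro u v hu
        show (Nat.chineseRemainder hcop u v).1 % m % p = u
        rw [Nat.mod_mod_of_dvd _ hpm]
        have h2 : (Nat.chineseRemainder hcop u v).1 % p = u % p :=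
          (Nat.chineseRemainder hcop u v).2.1
        rw [h2, Nat.mod_eq_of_lt hu]
      have hρq : ∀ u v, v < q → ρ u v % q = v := by
        intro u v hv
        show (Nat.chineseRemainder hcop u v).1 % m % q = v
        rw [Nat.mod_mod_of_dvd _ hqm]
        have h2 : (Nat.chineseRemainder hcop u v).1 % q = v % q :=
          (Nat.chineseRemainder hcop u v).2.2
        rw [h2, Nat.mod_eq_of_lt hv]
      have huniq : ∀ r', r' < m → ρ (r' % p) (r' % q) = r' := by
        intro r' hrm'
        have h1 : ρ (r' % p) (r' % q) ≡ r' [MOD p] := by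
          show ρ (r' % p) (r' % q) % p = r' % p
          exact hρp (r' % p) (r' % q) (Nat.mod_lt _ hppos)
        have h2 : ρ (r' % p) (r' % q) ≡ r' [MOD q] := by
          show ρ (r' % p) (r' % q) % q = r' % q
          exact hρq (r' % p) (r' % q) (Nat.mod_lt _ hq)
        have h3 : ρ (r' % p) (r' % q) ≡ r' [MOD m] := by
          rw [hmeq]
          exact (Nat.modEq_and_modEq_iff_modEq_mul hcop).1 ⟨h1, h2⟩
        have h4 : ρ (r' % p) (r' % q) % m = r' % m := h3
        rwa [Nat.mod_eq_of_lt (hρlt _ _), Nat.mod_eq_of_lt hrm'] at h4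
      -- exponent rewriting
      have hWT : ∀ t u v, u < p → v < q →
          (ξ ^ st t) ^ (ρ u v) = W ^ (t * u) * Θ ^ v := by
        intro t u v hu hv
        have e1 : (ξ ^ st t) ^ (ρ u v) = ξ ^ (st t * ρ u v) := by rw [← pow_mul]
        have e2 : W ^ (t * u) * Θ ^ v = ξ ^ (α * (t * u) + β * v) := by
          rw [hWdef, hΘdef2, ← pow_mul, ← pow_mul, ← pow_add]
        rw [e1, e2]
        apply pow_congr' hξm
        rw [hmeq]
        apply (Nat.modEq_and_modEq_iff_modEq_mul hcop).1
        constructor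
        · have mρ : ρ u v ≡ u [MOD p] := by
            show ρ u v % p = u % p
            rw [hρp u v hu, Nat.mod_eq_of_lt hu]
          have m1 : st t * ρ u v ≡ t * u [MOD p] := (hstp t).mul mρ
          have m2 : α * (t * u) + β * v ≡ 1 * (t * u) + 0 * v [MOD p] := by
            apply Nat.ModEq.add
            · exact hα.mul_right _
            · exact ((Nat.modEq_zero_iff_dvd).2 ⟨pinv, rfl⟩).mul_right _
          calc st t * ρ u v ≡ t * u [MOD p] := m1
            _ = 1 * (t * u) + 0 * v := by ring
            _ ≡ α * (t * u) + β * v [MOD p] := m2.symm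
        · have mρ : ρ u v ≡ v [MOD q] := by
            show ρ u v % q = v % q
            rw [hρq u v hv, Nat.mod_eq_of_lt hv]
          have m1 : st t * ρ u v ≡ 1 * v [MOD q] := (hstq t).mul mρ
          have m2 : α * (t * u) + β * v ≡ 0 * (t * u) + 1 * v [MOD q] := by
            apply Nat.ModEq.add
            · exact ((Nat.modEq_zero_iff_dvd).2 ⟨qinv, rfl⟩).mul_right _
            · exact hβ.mul_right _
          calc st t * ρ u v ≡ 1 * v [MOD q] := m1
            _ = 0 * (t * u) + 1 * v := by ring
            _ ≡ α * (t * u) + β * v [MOD q] := m2.symm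
      -- relations in (u,v) coordinates
      have relB : ∀ t, 0 < t → t < p →
          ∑ u ∈ Finset.range p, ∑ v ∈ Finset.range q,
            (c (ρ u v) : ℂ) * (W ^ (t * u) * Θ ^ v) = 0 := by
        intro t ht0 htp
        have h := rel_pow hm hξ hrel (hstcop t ht0 htp)
        rw [hmeq] at h
        rw [sum_crt hppos hq ρ (fun u v _ _ => by rw [← hmeq]; exact hρlt u v)
          (fun u v hu _ => hρp u v hu) (fun u v _ hv => hρq u v hv)
          (fun r' hr' => huniq r' (by rw [hmeq]; exact hr'))
          (fun r' => (c r' : ℂ) * (ξ ^ st t) ^ r')] at h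
        rw [← h]
        apply Finset.sum_congr rfl
        intro u hu
        apply Finset.sum_congr rfl
        intro v hv
        rw [hWT t u v (Finset.mem_range.1 hu) (Finset.mem_range.1 hv)]
      set A : ℕ → ℂ := fun u => ∑ v ∈ Finset.range q, (c (ρ u v) : ℂ) * Θ ^ v with hAdef
      set K : ℂ := ∑ u ∈ Finset.range p, A u with hKdef
      have hgeom' : ∀ a : ℕ, ∑ t ∈ (Finset.range p).erase 0, (W ^ a) ^ t
          = (if p ∣ a then (p : ℂ) else 0) - 1 := by
        intro a
        have h1 := geom_aux hW a
        have h2 : (0 : ℕ) ∈ Finset.range p := Finset.mem_range.2 hppos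
        rw [← Finset.add_sum_erase _ _ h2, pow_zero] at h1
        exact eq_sub_of_add_eq' h1
      have hdvd_iff : ∀ u u₀ : ℕ, u < p → u₀ < p → (p ∣ (u + (p - u₀)) ↔ u = u₀) := by
        intro u u₀ hu hu₀
        constructor
        · rintro ⟨k, hk⟩
          rcases k with _ | _ | k
          · rw [Nat.mul_zero] at hk; omega
          · rw [Nat.mul_one] at hk; omega
          · have h2 : p * (k + 2) = p * k + p + p := by ring
            rw [h2] at hk
            omega
        · rintro rfl
          rw [Nat.add_sub_cancel' (le_of_lt hu₀)]
      have hKey : ∀ u₀, u₀ < p → (p : ℂ) * A u₀ = K := by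
        intro u₀ hu₀
        have h0 : ∑ u ∈ Finset.range p, ∑ v ∈ Finset.range q,
            ∑ t ∈ (Finset.range p).erase 0,
              W ^ (t * (p - u₀)) * ((c (ρ u v) : ℂ) * (W ^ (t * u) * Θ ^ v)) = 0 := by
          have hswap1 : ∀ u : ℕ, ∑ v ∈ Finset.range q, ∑ t ∈ (Finset.range p).erase 0,
              W ^ (t * (p - u₀)) * ((c (ρ u v) : ℂ) * (W ^ (t * u) * Θ ^ v))
              = ∑ t ∈ (Finset.range p).erase 0, ∑ v ∈ Finset.range q,
              W ^ (t * (p - u₀)) * ((c (ρ u v) : ℂ) * (W ^ (t * u) * Θ ^ v)) :=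
            fun u => Finset.sum_comm
          rw [Finset.sum_congr rfl (fun u _ => hswap1 u), Finset.sum_comm]
          apply Finset.sum_eq_zero
          intro t ht
          have ht' := Finset.mem_erase.1 ht
          have htp := Finset.mem_range.1 ht'.2
          have ht0 : 0 < t := Nat.pos_of_ne_zero ht'.1
          simp only [← Finset.mul_sum]
          rw [relB t ht0 htp, mul_zero]
        have h1 : ∀ u v : ℕ, u < p →
            ∑ t ∈ (Finset.range p).erase 0,
              W ^ (t * (p - u₀)) * ((c (ρ u v) : ℂ) * (W ^ (t * u) * Θ ^ v))
            = (c (ρ u v) : ℂ) * Θ ^ v * ((if u = u₀ then (p : ℂ) else 0) - 1) := by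
          intro u v hu
          have e : ∀ t : ℕ, W ^ (t * (p - u₀)) * ((c (ρ u v) : ℂ) * (W ^ (t * u) * Θ ^ v))
              = (c (ρ u v) : ℂ) * Θ ^ v * (W ^ (u + (p - u₀))) ^ t := by
            intro t
            have e1 : (W ^ (u + (p - u₀))) ^ t = W ^ (t * (p - u₀)) * W ^ (t * u) := by
              rw [← pow_mul, ← pow_add]
              congr 1
              ring
            rw [e1]; ring
          rw [Finset.sum_congr rfl (fun t _ => e t), ← Finset.mul_sum,
            hgeom' (u + (p - u₀))]
          rw [if_congr (hdvd_iff u u₀ hu hu₀) rfl rfl]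
        rw [Finset.sum_congr rfl (fun u hu => Finset.sum_congr rfl
          (fun v _ => h1 u v (Finset.mem_range.1 hu)))] at h0
        have h3 : ∀ u : ℕ, ∑ v ∈ Finset.range q,
            (c (ρ u v) : ℂ) * Θ ^ v * ((if u = u₀ then (p : ℂ) else 0) - 1)
            = (if u = u₀ then (p : ℂ) else 0) * A u - A u := by
          intro u
          have e : ∀ v : ℕ, (c (ρ u v) : ℂ) * Θ ^ v * ((if u = u₀ then (p : ℂ) else 0) - 1)
              = (if u = u₀ then (p : ℂ) else 0) * ((c (ρ u v) : ℂ) * Θ ^ v)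
                - (c (ρ u v) : ℂ) * Θ ^ v := fun v => by ring
          rw [Finset.sum_congr rfl (fun v _ => e v), Finset.sum_sub_distrib,
            ← Finset.mul_sum]
        rw [Finset.sum_congr rfl (fun u _ => h3 u), Finset.sum_sub_distrib] at h0
        have h4 : ∑ u ∈ Finset.range p, (if u = u₀ then (p : ℂ) else 0) * A u
            = (p : ℂ) * A u₀ := by
          have e : ∀ u : ℕ, (if u = u₀ then (p : ℂ) else 0) * A u
              = (if u = u₀ then (p : ℂ) * A u else 0) := by
            intro u; split <;> simp
          rw [Finset.sum_congr rfl (fun u _ => e u),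
            Finset.sum_ite_eq' (Finset.range p) u₀ (fun u => (p : ℂ) * A u),
            if_pos (Finset.mem_range.2 hu₀)]
        rw [h4, ← hKdef] at h0
        exact sub_eq_zero.1 h0
      have hpC : (p : ℂ) ≠ 0 := Nat.cast_ne_zero.2 hppos.ne'
      have hAeq : ∀ u₀ u₁, u₀ < p → u₁ < p → A u₀ = A u₁ := by
        intro u₀ u₁ h0 h1
        exact mul_left_cancel₀ hpC ((hKey u₀ h0).trans (hKey u₁ h1).symm)
      have hl1B : ∑ u ∈ Finset.range p, ∑ v ∈ Finset.range q, |c (ρ u v)| ≤ L := by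
        have h := sum_crt hppos hq ρ (fun u v _ _ => by rw [← hmeq]; exact hρlt u v)
          (fun u v hu _ => hρp u v hu) (fun u v _ hv => hρq u v hv)
          (fun r' hr' => huniq r' (by rw [hmeq]; exact hr'))
          (fun r' => |c r'|)
        rw [← h, ← hmeq]
        exact hl1
      have hcc : ∀ v, v < q → ∀ u₀, u₀ < p → ∀ u₁, u₁ < p →
          c (ρ u₀ v) = c (ρ u₁ v) := by
        intro v hv u₀ hu₀ u₁ hu₁
        rcases eq_or_ne u₀ u₁ with rfl | hne
        · rfl
        · have hrelq : ∑ v' ∈ Finset.range q,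
              ((c (ρ u₀ v') - c (ρ u₁ v') : ℤ) : ℂ) * Θ ^ v' = 0 := by
            have e : ∀ v' : ℕ, ((c (ρ u₀ v') - c (ρ u₁ v') : ℤ) : ℂ) * Θ ^ v'
                = (c (ρ u₀ v') : ℂ) * Θ ^ v' - (c (ρ u₁ v') : ℂ) * Θ ^ v' := by
              intro v'; push_cast; ring
            rw [Finset.sum_congr rfl (fun v' _ => e v'), Finset.sum_sub_distrib]
            have := hAeq u₀ u₁ hu₀ hu₁
            rw [hAdef] at this
            simp only [] at this
            rw [this, sub_self]
          have hsumq : ∑ v' ∈ Finset.range q, |c (ρ u₀ v') - c (ρ u₁ v')| ≤ L := by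
            calc ∑ v' ∈ Finset.range q, |c (ρ u₀ v') - c (ρ u₁ v')|
                ≤ ∑ v' ∈ Finset.range q, (|c (ρ u₀ v')| + |c (ρ u₁ v')|) :=
                  Finset.sum_le_sum fun v' _ => abs_sub _ _
              _ = ∑ u ∈ ({u₀, u₁} : Finset ℕ), ∑ v' ∈ Finset.range q, |c (ρ u v')| := by
                  rw [Finset.sum_pair hne, ← Finset.sum_add_distrib]
              _ ≤ ∑ u ∈ Finset.range p, ∑ v' ∈ Finset.range q, |c (ρ u v')| := by
                  apply Finset.sum_le_sum_of_subset_of_nonneg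
                  · intro x hx
                    simp only [Finset.mem_insert, Finset.mem_singleton] at hx
                    rcases hx with rfl | rfl
                    · exact Finset.mem_range.2 hu₀
                    · exact Finset.mem_range.2 hu₁
                  · intro x _ _
                    exact Finset.sum_nonneg fun v' _ => abs_nonneg _
              _ ≤ L := hl1B
          have := IH q hqlt hq Θ hΘq (fun v' => c (ρ u₀ v') - c (ρ u₁ v'))
            hrelq hsumq hprimes' v hv
          exact sub_eq_zero.1 this
      have hcol0 : ∀ v, v < q → c (ρ 0 v) = 0 := by
        intro v hv
        have hcards : ∑ u ∈ Finset.range p, |c (ρ u v)| = (p : ℤ) * |c (ρ 0 v)| := by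
          rw [Finset.sum_congr rfl (fun u hu => by
            rw [hcc v hv u (Finset.mem_range.1 hu) 0 hppos])]
          rw [Finset.sum_const, Finset.card_range, nsmul_eq_mul]
        have hle : ∑ u ∈ Finset.range p, |c (ρ u v)| ≤ L := by
          calc ∑ u ∈ Finset.range p, |c (ρ u v)|
              ≤ ∑ u ∈ Finset.range p, ∑ v' ∈ Finset.range q, |c (ρ u v')| :=
                Finset.sum_le_sum fun u _ =>
                  Finset.single_le_sum (fun v' _ => abs_nonneg (c (ρ u v')))
                    (Finset.mem_range.2 hv)
            _ ≤ L := hl1B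
        rw [hcards] at hle
        have hlt : (p : ℤ) * |c (ρ 0 v)| < (p : ℤ) * 1 := by
          rw [mul_one]; exact lt_of_le_of_lt hle hLp
        have h5 : |c (ρ 0 v)| < 1 := lt_of_mul_lt_mul_left hlt (by positivity)
        have h6 : (0 : ℤ) ≤ |c (ρ 0 v)| := abs_nonneg _
        have h7 : |c (ρ 0 v)| = 0 := by omega
        exact abs_eq_zero.1 h7
      have hfin : c (ρ (r % p) (r % q)) = 0 := by
        rw [hcc (r % q) (Nat.mod_lt _ hq) (r % p) (Nat.mod_lt _ hppos) 0 hppos]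
        exact hcol0 _ (Nat.mod_lt _ hq)
      rwa [huniq r hrm] at hfin

theorem gbf_even_modulus_necessary_conditions (n : ℕ) (hn : 0 < n)
    (m' : ℕ) (hm' : 0 < m') (hodd : Odd m') (h3 : ¬ (3 ∣ m'))
    (f : (Fin n → ZMod 3) → ZMod (2 * m')) (hf : IsGBF (2 * m') f) :
    1 < m' ∧ Nat.minFac m' + 2 ≤ 3 ^ n := by
  classical
  haveI : NeZero (2 * m') := ⟨by omega⟩
  have hM : 0 < 2 * m' := by omega
  -- the basic roots of unity
  have hz : IsPrimitiveRoot (zetaC (2 * m')) (2 * m') := by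
    unfold zetaC; exact Complex.isPrimitiveRoot_exp (2 * m') hM.ne'
  set z : ℂ := zetaC (2 * m') with hzdef
  have hzM : z ^ (2 * m') = 1 := hz.pow_eq_one
  have hz0 : z ≠ 0 := hz.ne_zero hM.ne'
  have hω : IsPrimitiveRoot (zetaC 3) 3 := by
    unfold zetaC; exact Complex.isPrimitiveRoot_exp 3 (by norm_num)
  set ω : ℂ := zetaC 3 with hωdef
  have hω3 : ω ^ 3 = 1 := hω.pow_eq_one
  have hcard : Fintype.card (Fin n → ZMod 3) = 3 ^ n := by
    rw [Fintype.card_fun, ZMod.card, Fintype.card_fin]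
  -- the characters
  set ψ : AddChar (ZMod 3) ℂ := AddChar.zmodChar 3 hω3 with hψdef
  have hψap : ∀ a : ZMod 3, ψ a = ω ^ a.val := fun a => AddChar.zmodChar_apply hω3 a
  have hlin : ∀ y : Fin n → ZMod 3, ∀ a b : Fin n → ZMod 3,
      (∑ i, (a + b) i * y i) = (∑ i, a i * y i) + (∑ i, b i * y i) := by
    intro y a b
    simp only [Pi.add_apply, add_mul]
    rw [Finset.sum_add_distrib]
  set χ : (Fin n → ZMod 3) → AddChar (Fin n → ZMod 3) ℂ :=
    fun y => ψ.compAddMonoidHom (AddMonoidHom.mk' (fun x => ∑ i, x i * y i) (hlin y))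
    with hχdef
  have hχap : ∀ y x : Fin n → ZMod 3, χ y x = ψ (∑ i, x i * y i) := fun y x => rfl
  -- |χ| = 1 and conjugation
  have habsω : ‖ω‖ = 1 := abs_zetaC
  have habsχ : ∀ y x, ‖χ y x‖ = 1 := by
    intro y x
    rw [hχap, hψap, norm_pow, habsω, one_pow]
  have hconj : ∀ y x, (starRingEnd ℂ) (χ y x) = χ y (-x) := by
    intro y x
    have h1 : χ y x * χ y (-x) = 1 := by
      rw [← AddChar.map_add_eq_mul, add_neg_cancel, AddChar.map_zero_eq_one]
    have h2 : (χ y x)⁻¹ = (starRingEnd ℂ) (χ y x) := Complex.inv_eq_conj (habsχ y x)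
    rw [← h2]
    exact (eq_inv_of_mul_eq_one_right h1).symm
  -- sum of ψ over ZMod 3
  have hψsum : ∑ b : ZMod 3, ψ b = 0 := by
    have h1 : ∑ k ∈ Finset.range 3, ω ^ k = 0 := hω.geom_sum_eq_zero (by norm_num)
    rw [← h1]
    apply Finset.sum_bij' (i := fun (b : ZMod 3) _ => b.val) (j := fun k _ => (k : ZMod 3))
    · intro b _
      exact Finset.mem_range.2 (ZMod.val_lt b)
    · intro k _
      exact Finset.mem_univ _
    · intro b _
      exact ZMod.natCast_zmod_val b
    · intro k hk
      exact ZMod.val_cast_of_lt (Finset.mem_range.1 hk)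
    · intro b _
      rw [hψap]
  haveI : Fact (Nat.Prime 3) := ⟨by norm_num⟩
  have hψmul : ∀ a : ZMod 3, a ≠ 0 → ∑ b : ZMod 3, ψ (a * b) = 0 := by
    intro a ha
    have hbij : Function.Bijective ((a * ·) : ZMod 3 → ZMod 3) := mulLeft_bijective₀ a ha
    exact (Function.Bijective.sum_comp hbij ψ).trans hψsum
  -- completeness of the character family
  have hψs : ∀ (s : Finset (Fin n)) (gg : Fin n → ZMod 3),
      ψ (∑ i ∈ s, gg i) = ∏ i ∈ s, ψ (gg i) := by
    intro s gg
    induction s using Finset.cons_induction with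
    | empty => simp
    | cons i s his ih =>
      rw [Finset.sum_cons, Finset.prod_cons, AddChar.map_add_eq_mul, ih]
  have hcomp : ∀ x : Fin n → ZMod 3,
      ∑ y : Fin n → ZMod 3, χ y x = if x = 0 then ((3 : ℂ)) ^ n else 0 := by
    intro x
    have h1 : ∑ y : Fin n → ZMod 3, χ y x
        = ∑ y : Fin n → ZMod 3, ∏ i, ψ (x i * y i) := by
      apply Finset.sum_congr rfl
      intro y _
      rw [hχap, hψs]
    have h2 : ∏ i, ∑ b ∈ (Finset.univ : Finset (ZMod 3)), ψ (x i * b)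
        = ∑ y ∈ Fintype.piFinset (fun _ : Fin n => (Finset.univ : Finset (ZMod 3))),
          ∏ i, ψ (x i * y i) := Finset.prod_univ_sum _ _
    rw [Fintype.piFinset_univ] at h2
    rw [h1, ← h2]
    by_cases hx : x = 0
    · subst hx
      rw [if_pos rfl]
      have h4 : ∀ i : Fin n, ∑ b : ZMod 3, ψ ((0 : Fin n → ZMod 3) i * b) = (3 : ℂ) := by
        intro i
        simp only [Pi.zero_apply, zero_mul]
        rw [Finset.sum_congr rfl (fun b _ => AddChar.map_zero_eq_one ψ)]
        rw [Finset.sum_const, Finset.card_univ, ZMod.card]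
        simp
      rw [Finset.prod_congr rfl (fun i _ => h4 i), Finset.prod_const, Finset.card_univ,
        Fintype.card_fin]
    · rw [if_neg hx]
      have hxi : ∃ i, x i ≠ 0 := by
        by_contra hc
        push_neg at hc
        exact hx (funext hc)
      obtain ⟨i, hi⟩ := hxi
      apply Finset.prod_eq_zero (Finset.mem_univ i)
      exact hψmul (x i) hi
  -- the bent sums
  set F : (Fin n → ZMod 3) → ℂ := fun x => z ^ (f x).val with hFdef
  have habsF : ∀ x, ‖F x‖ = 1 := by
    intro x
    rw [hFdef]
    simp only [norm_pow]
    rw [hzdef, abs_zetaC, one_pow]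
  have hF0 : ∀ x, F x ≠ 0 := fun x => by
    rw [hFdef]; exact pow_ne_zero _ hz0
  set S : (Fin n → ZMod 3) → ℂ := fun y => ∑ x, F x * χ y x with hSdef
  have hS : ∀ y, S y * (starRingEnd ℂ) (S y) = (3 : ℂ) ^ n := by
    intro y
    have h1 := hf (χ y)
    rw [hcard] at h1
    have h2 : ‖S y‖ ^ 2 = ((3 : ℝ)) ^ n := by
      rw [hSdef]
      simp only [hFdef, hzdef]
      have h1' := h1
      push_cast at h1'
      exact h1'
    rw [Complex.mul_conj, ← Complex.sq_norm, h2]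
    push_cast
    ring
  -- a nonzero shift
  set g : Fin n → ZMod 3 := fun _ => (1 : ZMod 3) with hgdef
  have hgne : g ≠ 0 := by
    intro h
    have := congrFun h ⟨0, hn⟩
    simp [hgdef] at this
  -- autocorrelation at g vanishes
  have hauto : ∑ x, F (x + g) * (starRingEnd ℂ) (F x) = 0 := by
    have hQ1 : ∑ y, (S y * (starRingEnd ℂ) (S y)) * χ y (-g) = 0 := by
      rw [Finset.sum_congr rfl (fun y _ => by rw [hS y])]
      rw [← Finset.mul_sum, hcomp (-g), if_neg (by simpa using hgne), mul_zero]
    have hQ2 : ∀ y, (S y * (starRingEnd ℂ) (S y)) * χ y (-g)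
        = ∑ x, ∑ x', (F x * (starRingEnd ℂ) (F x')) * χ y (x + -x' + -g) := by
      intro y
      have e1 : (starRingEnd ℂ) (S y) = ∑ x', (starRingEnd ℂ) (F x') * χ y (-x') := by
        rw [hSdef]
        simp only [map_sum, map_mul]
        exact Finset.sum_congr rfl fun x' _ => by rw [hconj y x']
      rw [show S y = ∑ x, F x * χ y x from rfl, e1, Finset.sum_mul_sum, Finset.sum_mul]
      apply Finset.sum_congr rfl
      intro x _
      rw [Finset.sum_mul]
      apply Finset.sum_congr rfl
      intro x' _
      rw [AddChar.map_add_eq_mul, AddChar.map_add_eq_mul]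
      ring
    rw [Finset.sum_congr rfl (fun y _ => hQ2 y), Finset.sum_comm] at hQ1
    rw [Finset.sum_congr rfl (fun x _ => Finset.sum_comm)] at hQ1
    have hQ3 : ∀ x x' : Fin n → ZMod 3,
        ∑ y, (F x * (starRingEnd ℂ) (F x')) * χ y (x + -x' + -g)
        = (F x * (starRingEnd ℂ) (F x')) * (if x + -x' + -g = 0 then (3 : ℂ) ^ n else 0) := by
      intro x x'
      rw [← Finset.mul_sum, hcomp (x + -x' + -g)]
    rw [Finset.sum_congr rfl (fun x _ => Finset.sum_congr rfl (fun x' _ => hQ3 x x'))] at hQ1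
    rw [Finset.sum_comm] at hQ1
    have hQ4 : ∀ x' : Fin n → ZMod 3,
        ∑ x, (F x * (starRingEnd ℂ) (F x')) * (if x + -x' + -g = 0 then (3 : ℂ) ^ n else 0)
        = (F (x' + g) * (starRingEnd ℂ) (F x')) * (3 : ℂ) ^ n := by
      intro x'
      have hcond : ∀ x : Fin n → ZMod 3, (x + -x' + -g = 0) ↔ (x = x' + g) := by
        intro x
        constructor
        · intro h
          have h' : x - (x' + g) = 0 := by rw [← h]; abel
          exact sub_eq_zero.1 h'
        · rintro rfl
          abel
      have e : ∀ x : Fin n → ZMod 3,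
          (F x * (starRingEnd ℂ) (F x')) * (if x + -x' + -g = 0 then (3 : ℂ) ^ n else 0)
          = (if x = x' + g then (F x * (starRingEnd ℂ) (F x')) * (3 : ℂ) ^ n else 0) := by
        intro x
        rw [if_congr (hcond x) rfl rfl, mul_ite, mul_zero]
      rw [Finset.sum_congr rfl (fun x _ => e x),
        Finset.sum_ite_eq' Finset.univ (x' + g)
          (fun x => (F x * (starRingEnd ℂ) (F x')) * (3 : ℂ) ^ n),
        if_pos (Finset.mem_univ _)]
    rw [Finset.sum_congr rfl (fun x' _ => hQ4 x')] at hQ1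
    rw [← Finset.sum_mul] at hQ1
    have h3n : ((3 : ℂ) ^ n) ≠ 0 := pow_ne_zero _ (by norm_num)
    exact (mul_eq_zero.1 hQ1).resolve_right h3n
  -- convert to a vanishing sum of roots of unity
  have hval : ∀ u v : ZMod (2 * m'), z ^ (u + v).val = z ^ u.val * z ^ v.val := by
    intro u v
    rw [← pow_add, ZMod.val_add, ← pow_mod_eq' hzM]
  set d : (Fin n → ZMod 3) → ZMod (2 * m') := fun x => f (x + g) - f x with hddef
  have hpoint : ∀ x, z ^ ((d x).val) = F (x + g) * (starRingEnd ℂ) (F x) := by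
    intro x
    have h1 : (starRingEnd ℂ) (F x) = (F x)⁻¹ := (Complex.inv_eq_conj (habsF x)).symm
    have h2 : z ^ ((d x).val) * F x = F (x + g) := by
      simp only [hFdef, hddef]
      rw [← hval]
      congr 1
      rw [sub_add_cancel]
    rw [h1, ← h2]
    field_simp [hF0 x]
  have hzero_sum : ∑ x, z ^ ((d x).val) = 0 := by
    rw [Finset.sum_congr rfl (fun x _ => hpoint x)]
    exact hauto
  -- the m'-th root of unity
  set ξ : ℂ := z ^ 2 with hξdef
  have hξ : IsPrimitiveRoot ξ m' := hz.pow hM rfl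
  have hξm' : ξ ^ m' = 1 := hξ.pow_eq_one
  obtain ⟨j, hj⟩ := hodd
  set t₀ : ℕ := j + 1 with ht₀def
  have h2t : 2 * t₀ = m' + 1 := by omega
  have hzm' : z ^ m' = -1 := by
    rw [hzdef]
    unfold zetaC
    rw [← Complex.exp_nat_mul]
    rw [show ((m' : ℂ)) * (2 * Real.pi * Complex.I / ((2 * m' : ℕ) : ℂ))
        = Real.pi * Complex.I by
      have hm'C : ((m' : ℂ)) ≠ 0 := Nat.cast_ne_zero.2 hm'.ne'
      push_cast
      field_simp]
    exact Complex.exp_pi_mul_I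
  have hzt : z = -(ξ ^ t₀) := by
    have h1 : ξ ^ t₀ = z ^ (2 * t₀) := by rw [hξdef, ← pow_mul]
    rw [h1, h2t, pow_succ, hzm']
    ring
  have hzk : ∀ k : ℕ, z ^ k = (-1 : ℂ) ^ k * ξ ^ ((t₀ * k) % m') := by
    intro k
    calc z ^ k = (-(ξ ^ t₀)) ^ k := by rw [← hzt]
      _ = (-1 : ℂ) ^ k * (ξ ^ t₀) ^ k := by rw [neg_pow]
      _ = (-1 : ℂ) ^ k * ξ ^ (t₀ * k) := by rw [← pow_mul]
      _ = (-1 : ℂ) ^ k * ξ ^ ((t₀ * k) % m') := by rw [← pow_mod_eq' hξm']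
  set c : ℕ → ℤ := fun r => ∑ x, (if (t₀ * (d x).val) % m' = r
      then ((-1 : ℤ)) ^ ((d x).val) else 0) with hcdef
  have hmem : ∀ x, (t₀ * (d x).val) % m' ∈ Finset.range m' :=
    fun x => Finset.mem_range.2 (Nat.mod_lt _ hm')
  have hrelc : ∑ r ∈ Finset.range m', (c r : ℂ) * ξ ^ r = 0 := by
    have h1 : ∀ r, (c r : ℂ) = ∑ x, (if (t₀ * (d x).val) % m' = r
        then ((-1 : ℂ)) ^ ((d x).val) else 0) := by
      intro r
      rw [hcdef]
      push_cast
      apply Finset.sum_congr rfl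
      intro x _
      split <;> simp
    calc ∑ r ∈ Finset.range m', (c r : ℂ) * ξ ^ r
        = ∑ r ∈ Finset.range m', ∑ x, (if (t₀ * (d x).val) % m' = r
            then ((-1 : ℂ)) ^ ((d x).val) * ξ ^ r else 0) := by
          apply Finset.sum_congr rfl
          intro r _
          rw [h1, Finset.sum_mul]
          apply Finset.sum_congr rfl
          intro x _
          rw [ite_mul, zero_mul]
      _ = ∑ x, ∑ r ∈ Finset.range m', (if (t₀ * (d x).val) % m' = r
            then ((-1 : ℂ)) ^ ((d x).val) * ξ ^ r else 0) := Finset.sum_comm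
      _ = ∑ x, ((-1 : ℂ)) ^ ((d x).val) * ξ ^ ((t₀ * (d x).val) % m') := by
          apply Finset.sum_congr rfl
          intro x _
          rw [Finset.sum_ite_eq (Finset.range m') _
            (fun r => ((-1 : ℂ)) ^ ((d x).val) * ξ ^ r), if_pos (hmem x)]
      _ = ∑ x, z ^ ((d x).val) := by
          apply Finset.sum_congr rfl
          intro x _
          rw [hzk ((d x).val)]
      _ = 0 := hzero_sum
  have hl1c : ∑ r ∈ Finset.range m', |c r| ≤ ((3 : ℤ)) ^ n := by
    calc ∑ r ∈ Finset.range m', |c r|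
        ≤ ∑ r ∈ Finset.range m', ∑ x, (if (t₀ * (d x).val) % m' = r
            then (1 : ℤ) else 0) := by
          apply Finset.sum_le_sum
          intro r _
          rw [hcdef]
          refine le_trans (Finset.abs_sum_le_sum_abs _ _) ?_
          apply Finset.sum_le_sum
          intro x _
          split
          · rw [abs_pow, abs_neg, abs_one, one_pow]
          · simp
      _ = ∑ x : Fin n → ZMod 3, ∑ r ∈ Finset.range m', (if (t₀ * (d x).val) % m' = r
            then (1 : ℤ) else 0) := Finset.sum_comm
      _ = ∑ x : Fin n → ZMod 3, 1 := by
          apply Finset.sum_congr rfl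
          intro x _
          rw [Finset.sum_ite_eq (Finset.range m') _ (fun _ => (1 : ℤ)), if_pos (hmem x)]
      _ = ((3 : ℤ)) ^ n := by
          rw [Finset.sum_const, Finset.card_univ, hcard]
          push_cast
          ring
  have hTne : (∑ r ∈ Finset.range m', c r) ≠ 0 := by
    have h1 : ∑ r ∈ Finset.range m', c r = ∑ x, ((-1 : ℤ)) ^ ((d x).val) := by
      calc ∑ r ∈ Finset.range m', c r
          = ∑ x, ∑ r ∈ Finset.range m', (if (t₀ * (d x).val) % m' = r
              then ((-1 : ℤ)) ^ ((d x).val) else 0) := by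
            rw [hcdef]; exact Finset.sum_comm
        _ = ∑ x, ((-1 : ℤ)) ^ ((d x).val) := by
            apply Finset.sum_congr rfl
            intro x _
            rw [Finset.sum_ite_eq (Finset.range m') _
              (fun _ => ((-1 : ℤ)) ^ ((d x).val)), if_pos (hmem x)]
    intro h0
    rw [h1] at h0
    have h2 : (0 : ℤ) % 2 = (∑ x, ((-1 : ℤ)) ^ ((d x).val) % 2) % 2 := by
      rw [← Finset.sum_int_mod, h0]
    have h3 : ∀ x : Fin n → ZMod 3, ((-1 : ℤ)) ^ ((d x).val) % 2 = 1 := by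
      intro x
      rcases Nat.even_or_odd ((d x).val) with he | ho
      · rw [he.neg_one_pow]; decide
      · rw [ho.neg_one_pow]; decide
    rw [Finset.sum_congr rfl (fun x _ => h3 x), Finset.sum_const, Finset.card_univ,
      hcard, nsmul_eq_mul, mul_one] at h2
    have h4 : (3 ^ n : ℕ) % 2 = 1 := Nat.odd_iff.mp (Odd.pow (by decide))
    omega
  -- apply the vanishing lemma
  have hkey : ¬ (∀ pp : ℕ, pp.Prime → pp ∣ m' → ((3 : ℤ)) ^ n < pp) := by
    intro hP
    have hall0 := vanishing ((3 : ℤ) ^ n) m' hm' ξ hξ c hrelc hl1c hP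
    apply hTne
    apply Finset.sum_eq_zero
    intro r hr
    exact hall0 r (Finset.mem_range.1 hr)
  have hm'ne1 : m' ≠ 1 := by
    intro h1
    apply hkey
    intro pp hpp hdvd
    rw [h1] at hdvd
    exact absurd (Nat.dvd_one.1 hdvd) hpp.ne_one
  have hm'1 : 1 < m' := by omega
  have hex : ∃ pp : ℕ, pp.Prime ∧ pp ∣ m' ∧ pp ≤ 3 ^ n := by
    by_contra hne
    push_neg at hne
    apply hkey
    intro pp hpp hdvd
    have h6 := hne pp hpp hdvd
    exact_mod_cast h6
  obtain ⟨pp, hpp, hppd, hpple⟩ := hex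
  have hmf : m'.minFac ≤ 3 ^ n := le_trans (Nat.minFac_le_of_dvd hpp.two_le hppd) hpple
  have hmfp : m'.minFac.Prime := Nat.minFac_prime hm'ne1
  have hmfd : m'.minFac ∣ m' := Nat.minFac_dvd m'
  have hmf2 : m'.minFac ≠ 2 := by
    intro h
    have h2d : (2 : ℕ) ∣ m' := h ▸ hmfd
    rcases h2d with ⟨k, hk⟩
    omega
  have hmfodd : Odd m'.minFac := hmfp.odd_of_ne_two hmf2
  have hmfne : m'.minFac ≠ 3 ^ n := by
    intro h
    apply h3
    have h31 : (3 : ℕ) ∣ 3 ^ n := dvd_pow_self 3 hn.ne'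
    rw [← h] at h31
    exact h31.trans hmfd
  have h3odd : Odd (3 ^ n : ℕ) := Odd.pow (by decide)
  refine ⟨hm'1, ?_⟩
  rcases hmfodd with ⟨a, ha⟩
  rcases h3odd with ⟨b, hb⟩
  omega
end

section
/- Let m′ be a positive odd integer not divisible by 3. Then there does not exist a generalized bent function f : ℤ/3ℤ → ℤ/2m′ℤ. -/
/-- A root of unity in `ℂ` is integral over `ℤ`. -/
private lemma isIntegral_of_pow_eq_one_s17 {x : ℂ} {n : ℕ} (hn : n ≠ 0) (h : x ^ n = 1) :
    IsIntegral ℤ x :=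
  ⟨Polynomial.X ^ n - Polynomial.C 1, Polynomial.monic_X_pow_sub_C 1 hn, by simp [h]⟩

/-- `2` is not a unit in the ring of algebraic integers. -/
private lemma not_isUnit_two : ¬ IsUnit (2 : integralClosure ℤ ℂ) := by
  intro h
  rcases isUnit_iff_exists_inv.mp h with ⟨v, hv⟩
  have hv2 : (2 : ℂ) * (v : ℂ) = 1 := by
    have c2 : ((2 : integralClosure ℤ ℂ) : ℂ) = 2 := by
      have h12 : (2 : integralClosure ℤ ℂ) = 1 + 1 := by norm_num
      rw [h12]; push_cast; norm_num
    have h' : ((2 * v : integralClosure ℤ ℂ) : ℂ) = 1 := by rw [hv]; rfl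
    rw [← h']; push_cast [c2]; ring
  have hval : ((v : ℂ)) = algebraMap ℚ ℂ (1/2 : ℚ) := by
    have hv12 : (v : ℂ) = 1/2 := by field_simp; linear_combination hv2
    rw [hv12]; norm_num
  have hint : IsIntegral ℤ ((1/2 : ℚ)) := by
    have hvi := v.2
    rw [hval] at hvi
    exact (isIntegral_algebraMap_iff (algebraMap ℚ ℂ).injective).mp hvi
  rcases IsIntegrallyClosed.isIntegral_iff.mp hint with ⟨k, hk⟩
  have hk' : (k : ℚ) = 1/2 := by rw [algebraMap_int_eq] at hk; simpa using hk
  have h2k : (2 * k : ℤ) = 1 := by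
    have hcast : ((2 * k : ℤ) : ℚ) = ((1 : ℤ) : ℚ) := by push_cast [hk']; norm_num
    exact_mod_cast hcast
  omega

/-- If `1 + x ∈ M` for `M` a proper ideal containing `2`, and `x` is an `m'`-th root of
unity with `m'` odd, then `x = 1`. -/
private lemma eq_one_of_one_add_mem {m' : ℕ} (hm' : 0 < m') (hodd : Odd m')
    (M : Ideal (integralClosure ℤ ℂ)) (hMne : M ≠ ⊤)
    (h2 : (2 : integralClosure ℤ ℂ) ∈ M)
    (x : integralClosure ℤ ℂ) (hx : (x : ℂ) ^ m' = 1) (hmem : 1 + x ∈ M) :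
    (x : ℂ) = 1 := by
  by_contra hne
  have h1x : 1 - x ∈ M := by
    have h : (1 : integralClosure ℤ ℂ) - x = (1 + x) - 2 * x := by ring
    rw [h]; exact M.sub_mem hmem (M.mul_mem_right _ h2)
  have hdvd : (1 - x) ∣ ((m' : ℕ) : integralClosure ℤ ℂ) := by
    have h := Polynomial.sub_dvd_eval_sub (1 : integralClosure ℤ ℂ) x
      (∑ i ∈ Finset.range m', Polynomial.X ^ i)
    rw [Polynomial.eval_geom_sum, Polynomial.eval_geom_sum] at h
    have e1 : (∑ i ∈ Finset.range m', (1 : integralClosure ℤ ℂ) ^ i) = ((m' : ℕ) : _) := by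
      simp
    have e2 : (∑ i ∈ Finset.range m', x ^ i) = 0 := by
      apply Subtype.ext
      push_cast
      rw [geom_sum_eq hne, hx]
      simp
    rw [e1, e2, sub_zero] at h
    exact h
  have hmM : ((m' : ℕ) : integralClosure ℤ ℂ) ∈ M := by
    rcases hdvd with ⟨d, hd⟩
    rw [hd]; exact M.mul_mem_right _ h1x
  rcases hodd with ⟨k, hk⟩
  have h1M : (1 : integralClosure ℤ ℂ) ∈ M := by
    have : (1 : integralClosure ℤ ℂ) = ((m' : ℕ) : integralClosure ℤ ℂ) - 2 * k := by
      push_cast [hk]; ring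
    rw [this]
    exact M.sub_mem hmM (M.mul_mem_right _ h2)
  exact hMne (Ideal.eq_top_of_isUnit_mem M h1M isUnit_one)

/-- If three `m'`-th roots of unity have product `1` and
`e₁ + e₂ ≡ 0 (mod 2)` (in algebraic integers), then one of them is `1`. -/
private lemma one_mem_triple {m' : ℕ} (hm' : 0 < m') (hodd : Odd m')
    (a b c t : ℂ) (ha : a ^ m' = 1) (hb : b ^ m' = 1) (hc : c ^ m' = 1)
    (habc : a * b * c = 1) (hti : IsIntegral ℤ t)
    (h2t : (a + b + c) + (a*b + b*c + c*a) = 2 * t) :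
    a = 1 ∨ b = 1 ∨ c = 1 := by
  have hm'0 : m' ≠ 0 := hm'.ne'
  have hai := isIntegral_of_pow_eq_one_s17 hm'0 ha
  have hbi := isIntegral_of_pow_eq_one_s17 hm'0 hb
  have hci := isIntegral_of_pow_eq_one_s17 hm'0 hc
  set A := integralClosure ℤ ℂ
  let a' : A := ⟨a, hai⟩
  let b' : A := ⟨b, hbi⟩
  let c' : A := ⟨c, hci⟩
  let t' : A := ⟨t, hti⟩
  have hP : (1 + a') * (1 + b') * (1 + c') = 2 * (1 + t') := by
    apply Subtype.ext
    push_cast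
    show (1 + a) * (1 + b) * (1 + c) = 2 * (1 + t)
    linear_combination habc + h2t
  obtain ⟨M, hMmax, hM2⟩ := Ideal.exists_le_maximal (Ideal.span {(2 : A)})
    (by rw [Ne, Ideal.span_singleton_eq_top]; exact not_isUnit_two)
  have h2M : (2 : A) ∈ M := hM2 (Ideal.mem_span_singleton_self 2)
  have hPM : (1 + a') * (1 + b') * (1 + c') ∈ M := by
    rw [hP]; exact M.mul_mem_right _ h2M
  have hprime := hMmax.isPrime
  rcases hprime.mem_or_mem hPM with h' | hcM
  · rcases hprime.mem_or_mem h' with haM | hbM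
    · exact Or.inl (eq_one_of_one_add_mem hm' hodd M hMmax.ne_top h2M a' ha haM)
    · exact Or.inr (Or.inl (eq_one_of_one_add_mem hm' hodd M hMmax.ne_top h2M b' hb hbM))
  · exact Or.inr (Or.inr (eq_one_of_one_add_mem hm' hodd M hMmax.ne_top h2M c' hc hcM))

/-- The endgame: once one of the roots equals `1`, we derive a contradiction. -/
private lemma final {m' : ℕ} (hm' : 0 < m') (hodd : Odd m') (h3 : ¬ (3 ∣ m'))
    (b c εa εb εc : ℂ) (hb : b ^ m' = 1) (hc : c ^ m' = 1)
    (hεa : εa = 1 ∨ εa = -1) (hεb : εb = 1 ∨ εb = -1) (hεc : εc = 1 ∨ εc = -1)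
    (hbc : b * c = 1) (hε : εa * εb * εc = 1)
    (heq : εa * 2 + εb * (b + c) + εc * (c + b) = 0) : False := by
  have hcop2 : Nat.Coprime 2 m' := (Nat.prime_two.coprime_iff_not_dvd).mpr (by
    rcases hodd with ⟨k, hk⟩; omega)
  have hcop3 : Nat.Coprime 3 m' := (Nat.prime_three.coprime_iff_not_dvd).mpr h3
  rcases hεa with rfl | rfl <;> rcases hεb with rfl | rfl <;> rcases hεc with rfl | rfl
  · -- (1,1,1): b + c = -1, b*c = 1 ⇒ b² + b + 1 = 0 ⇒ b³ = 1
    have hq : b ^ 2 + b + 1 = 0 := by linear_combination (b/2) * heq - hbc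
    have hb3 : b ^ 3 = 1 := by linear_combination (b - 1) * hq
    have hord : orderOf b ∣ Nat.gcd 3 m' :=
      Nat.dvd_gcd (orderOf_dvd_of_pow_eq_one hb3) (orderOf_dvd_of_pow_eq_one hb)
    rw [hcop3.gcd_eq_one, Nat.dvd_one] at hord
    have hb1 : b = 1 := orderOf_eq_one_iff.mp hord
    rw [hb1] at hq; norm_num at hq
  · norm_num at hε
  · norm_num at hε
  · -- (1,-1,-1): b + c = 1, b*c = 1 ⇒ b² - b + 1 = 0 ⇒ b⁶ = 1
    have hq : b ^ 2 - b + 1 = 0 := by linear_combination (-b/2) * heq - hbc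
    have hb6 : b ^ 6 = 1 := by linear_combination ((b + 1) * (b ^ 3 - 1)) * hq
    have hcop6 : Nat.Coprime 6 m' := by
      have := Nat.Coprime.mul hcop2 hcop3
      norm_num at this ⊢
      exact this
    have hord : orderOf b ∣ Nat.gcd 6 m' :=
      Nat.dvd_gcd (orderOf_dvd_of_pow_eq_one hb6) (orderOf_dvd_of_pow_eq_one hb)
    rw [hcop6.gcd_eq_one, Nat.dvd_one] at hord
    have hb1 : b = 1 := orderOf_eq_one_iff.mp hord
    rw [hb1] at hq; norm_num at hq
  · norm_num at hε
  · -- (-1,1,-1): -2 = 0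
    have h2 : (2 : ℂ) = 0 := by linear_combination -heq
    norm_num at h2
  · -- (-1,-1,1): -2 = 0
    have h2 : (2 : ℂ) = 0 := by linear_combination -heq
    norm_num at h2
  · norm_num at hε

/-- Key lemma in terms of signed `m'`-th roots of unity. -/
private lemma key {m' : ℕ} (hm' : 0 < m') (hodd : Odd m') (h3 : ¬ (3 ∣ m'))
    (a b c εa εb εc : ℂ)
    (ha : a ^ m' = 1) (hb : b ^ m' = 1) (hc : c ^ m' = 1)
    (hεa : εa = 1 ∨ εa = -1) (hεb : εb = 1 ∨ εb = -1) (hεc : εc = 1 ∨ εc = -1)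
    (habc : a * b * c = 1) (hε : εa * εb * εc = 1)
    (heq : εa * (a + a⁻¹) + εb * (b + b⁻¹) + εc * (c + c⁻¹) = 0) : False := by
  have hm'0 : m' ≠ 0 := hm'.ne'
  -- rewrite inverses
  have ha' : a⁻¹ = b * c := inv_eq_of_mul_eq_one_right (by linear_combination habc)
  have hb' : b⁻¹ = a * c := inv_eq_of_mul_eq_one_right (by linear_combination habc)
  have hc' : c⁻¹ = a * b := inv_eq_of_mul_eq_one_right (by linear_combination habc)
  rw [ha', hb', hc'] at heq
  -- one of a, b, c equals 1
  have hia := isIntegral_of_pow_eq_one_s17 hm'0 ha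
  have hib := isIntegral_of_pow_eq_one_s17 hm'0 hb
  have hic := isIntegral_of_pow_eq_one_s17 hm'0 hc
  have hone : a = 1 ∨ b = 1 ∨ c = 1 := by
    rcases hεa with rfl | rfl <;> rcases hεb with rfl | rfl <;> rcases hεc with rfl | rfl
    · apply one_mem_triple hm' hodd a b c 0 ha hb hc habc isIntegral_zero
      linear_combination heq
    · exact absurd hε (by norm_num)
    · exact absurd hε (by norm_num)
    · apply one_mem_triple hm' hodd a b c ((b + a*c) + (c + a*b)) ha hb hc habc
        (((hib.add (hia.mul hic))).add (hic.add (hia.mul hib)))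
      linear_combination heq
    · exact absurd hε (by norm_num)
    · apply one_mem_triple hm' hodd a b c ((a + b*c) + (c + a*b)) ha hb hc habc
        (((hia.add (hib.mul hic))).add (hic.add (hia.mul hib)))
      linear_combination heq
    · apply one_mem_triple hm' hodd a b c ((a + b*c) + (b + a*c)) ha hb hc habc
        (((hia.add (hib.mul hic))).add (hib.add (hia.mul hic)))
      linear_combination heq
    · exact absurd hε (by norm_num)
  rcases hone with rfl | rfl | rfl
  · refine final hm' hodd h3 b c εa εb εc hb hc hεa hεb hεc (by linear_combination habc)
      hε (by linear_combination heq - εa * habc)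
  · refine final hm' hodd h3 a c εb εa εc ha hc hεb hεa hεc (by linear_combination habc)
      (by linear_combination hε) (by linear_combination heq - εb * habc)
  · refine final hm' hodd h3 a b εc εa εb ha hb hεc hεa hεb (by linear_combination habc)
      (by linear_combination hε) (by linear_combination heq - εc * habc)

/-- Decompose a `2m'`-th root of unity (with `m'` odd) as `± (m'`-th root of unity`)`. -/
private lemma decomp_s17 {m' : ℕ} (hodd : Odd m') (α : ℂ) (hα : α ^ (2 * m') = 1) :
    ∃ ε a : ℂ, (ε = 1 ∨ ε = -1) ∧ a ^ m' = 1 ∧ α = ε * a ∧ α⁻¹ = ε * a⁻¹ := by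
  have hsq : (α ^ m') ^ 2 = 1 := by rw [← pow_mul, mul_comm]; exact hα
  have hε : α ^ m' = 1 ∨ α ^ m' = -1 := by
    rcases mul_eq_zero.mp (show (α ^ m' - 1) * (α ^ m' + 1) = 0 by linear_combination hsq)
      with h | h
    · exact Or.inl (by linear_combination h)
    · exact Or.inr (by linear_combination h)
  rcases hε with h | h
  · exact ⟨1, α, Or.inl rfl, h, (one_mul α).symm, (one_mul _).symm⟩
  · refine ⟨-1, -α, Or.inr rfl, ?_, by ring, ?_⟩
    · rw [show (-α) = (-1) * α by ring, mul_pow, h, hodd.neg_one_pow]; ring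
    · rw [inv_neg]; ring

/-- Key lemma in terms of `2m'`-th roots of unity. -/
private lemma key2_s17 {m' : ℕ} (hm' : 0 < m') (hodd : Odd m') (h3 : ¬ (3 ∣ m'))
    (α β γ : ℂ)
    (hα : α ^ (2 * m') = 1) (hβ : β ^ (2 * m') = 1) (hγ : γ ^ (2 * m') = 1)
    (hαβγ : α * β * γ = 1)
    (hsum : α + α⁻¹ + β + β⁻¹ + γ + γ⁻¹ = 0) : False := by
  obtain ⟨εa, a, hεa, ha, hαa, hαa'⟩ := decomp_s17 hodd α hα
  obtain ⟨εb, b, hεb, hb, hβb, hβb'⟩ := decomp_s17 hodd β hβ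
  obtain ⟨εc, c, hεc, hc, hγc, hγc'⟩ := decomp_s17 hodd γ hγ
  have hEabc : (εa * εb * εc) * (a * b * c) = 1 := by
    rw [hαa, hβb, hγc] at hαβγ; linear_combination hαβγ
  have hE : εa * εb * εc = 1 ∨ εa * εb * εc = -1 := by
    rcases hεa with rfl | rfl <;> rcases hεb with rfl | rfl <;> rcases hεc with rfl | rfl <;>
      norm_num
  have habcpow : (a * b * c) ^ m' = 1 := by
    rw [mul_pow, mul_pow, ha, hb, hc]; ring
  rcases hE with hE | hE
  · have habc : a * b * c = 1 := by rw [hE] at hEabc; linear_combination hEabc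
    have heq : εa * (a + a⁻¹) + εb * (b + b⁻¹) + εc * (c + c⁻¹) = 0 := by
      rw [hαa', hβb', hγc', hαa, hβb, hγc] at hsum
      linear_combination hsum
    exact key hm' hodd h3 a b c εa εb εc ha hb hc hεa hεb hεc habc hE heq
  · have habc : a * b * c = -1 := by
      rw [hE] at hEabc; linear_combination -hEabc
    rw [habc] at habcpow
    rw [hodd.neg_one_pow] at habcpow
    norm_num at habcpow

theorem no_gbf_z3_even_modulus (m' : ℕ) (hm' : 0 < m') (hodd : Odd m')
    (h3 : ¬ (3 ∣ m')) :
    ¬ ∃ f : ZMod 3 → ZMod (2 * m'), IsGBF (2 * m') f := by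
  rintro ⟨f, hf⟩
  have hN : 2 * m' ≠ 0 := by omega
  have hprim : IsPrimitiveRoot (zetaC (2 * m')) (2 * m') :=
    Complex.isPrimitiveRoot_exp (2 * m') hN
  have hzN : zetaC (2 * m') ^ (2 * m') = 1 := hprim.pow_eq_one
  have hz0 : zetaC (2 * m') ≠ 0 := Complex.exp_ne_zero _
  -- the GBF condition at the trivial character
  have h1 := hf 1
  simp only [AddChar.one_apply, mul_one] at h1
  rw [show (∑ x : ZMod 3, zetaC (2 * m') ^ (f x).val)
      = zetaC (2 * m') ^ (f 0).val + zetaC (2 * m') ^ (f 1).val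
        + zetaC (2 * m') ^ (f 2).val from
    Fin.sum_univ_three (fun x => zetaC (2 * m') ^ (f x).val)] at h1
  have hcard : (Fintype.card (ZMod 3) : ℝ) = 3 := by simp
  rw [hcard] at h1
  set u0 : ℂ := zetaC (2 * m') ^ (f 0).val with hu0def
  set u1 : ℂ := zetaC (2 * m') ^ (f 1).val with hu1def
  set u2 : ℂ := zetaC (2 * m') ^ (f 2).val with hu2def
  have hu0 : u0 ≠ 0 := pow_ne_zero _ hz0
  have hu1 : u1 ≠ 0 := pow_ne_zero _ hz0
  have hu2 : u2 ≠ 0 := pow_ne_zero _ hz0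
  have hznorm : ‖zetaC (2 * m')‖ = 1 := Complex.norm_eq_one_of_pow_eq_one hzN hN
  have hunorm : ∀ k : ℕ, ‖zetaC (2 * m') ^ k‖ = 1 := fun k => by
    rw [norm_pow, hznorm, one_pow]
  -- turn |S|² = 3 into S * conj S = 3
  have hS : (u0 + u1 + u2) * (starRingEnd ℂ) (u0 + u1 + u2) = (3 : ℂ) := by
    rw [Complex.mul_conj]
    rw [← Complex.sq_norm]
    exact_mod_cast h1
  have hconj : (starRingEnd ℂ) (u0 + u1 + u2) = u0⁻¹ + u1⁻¹ + u2⁻¹ := by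
    rw [map_add, map_add]
    rw [hu0def, hu1def, hu2def, ← Complex.inv_eq_conj (hunorm _),
      ← Complex.inv_eq_conj (hunorm _), ← Complex.inv_eq_conj (hunorm _)]
  rw [hconj] at hS
  have hinv0 : u0 * u0⁻¹ = 1 := mul_inv_cancel₀ hu0
  have hinv1 : u1 * u1⁻¹ = 1 := mul_inv_cancel₀ hu1
  have hinv2 : u2 * u2⁻¹ = 1 := mul_inv_cancel₀ hu2
  have hsum : (u0 * u1⁻¹) + (u0 * u1⁻¹)⁻¹ + (u1 * u2⁻¹) + (u1 * u2⁻¹)⁻¹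
      + (u2 * u0⁻¹) + (u2 * u0⁻¹)⁻¹ = 0 := by
    rw [mul_inv, inv_inv, mul_inv, inv_inv, mul_inv, inv_inv]
    linear_combination hS - hinv0 - hinv1 - hinv2
  have hpowN : ∀ k : ℕ, (zetaC (2 * m') ^ k) ^ (2 * m') = 1 := fun k => by
    rw [← pow_mul, mul_comm k (2 * m'), pow_mul, hzN, one_pow]
  have hinvpowN : ∀ k : ℕ, ((zetaC (2 * m') ^ k)⁻¹) ^ (2 * m') = 1 := fun k => by
    rw [inv_pow, hpowN, inv_one]
  have hαN : (u0 * u1⁻¹) ^ (2 * m') = 1 := by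
    rw [mul_pow, hu0def, hu1def, hpowN, hinvpowN, one_mul]
  have hβN : (u1 * u2⁻¹) ^ (2 * m') = 1 := by
    rw [mul_pow, hu1def, hu2def, hpowN, hinvpowN, one_mul]
  have hγN : (u2 * u0⁻¹) ^ (2 * m') = 1 := by
    rw [mul_pow, hu2def, hu0def, hpowN, hinvpowN, one_mul]
  have hαβγ : (u0 * u1⁻¹) * (u1 * u2⁻¹) * (u2 * u0⁻¹) = 1 := by
    field_simp
  exact key2_s17 hm' hodd h3 _ _ _ hαN hβN hγN hαβγ hsum
end
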